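/- arXiv:1810.02687 — 10 statements merged into one kernel-verified Lean document; each statement's English description precedes it below -/
import Mathlib

section
/- Let r > 1 and let G be a weighted directed graph on a finite vertex set V with |V| = N ≥ 2, given by a weight function w : V × V → ℝ≥0 with W(u) := Σ_v w(u,v) > 0 for every u, such that the digraph with edge set {(u,v) : w(u,v) > 0} is strongly connected. Let ρ and T be the fixation-probability and absorption-time solutions of the Moman-process linear systems on configurations, and set p̄ = (1/N)·Σ_{v∈V} ρ({v}) and T̄ = (1/N)·Σ_{v∈V} T({v}). Then T̄ ≥ (p̄/r)·N·H_{N−1}, where H_{N−1} = Σ_{k=1}^{N−1} 1/k. -/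
open Finset

/-- One-step probability of gaining a mutant at vertex `v ∉ X` in the Moran
birth–death process with mutant fitness `r` on the weighted digraph `w`,
from the configuration `X` of mutant vertices. -/
noncomputable def moranUp {V : Type*} [Fintype V] [DecidableEq V]
    (r : ℝ) (w : V → V → ℝ) (X : Finset V) (v : V) : ℝ :=
  ∑ u ∈ X, (r / ((Fintype.card V : ℝ) + (r - 1) * X.card)) * (w u v / ∑ x : V, w u x)

/-- One-step probability of losing the mutant at vertex `v ∈ X`. -/
noncomputable def moranDown {V : Type*} [Fintype V] [DecidableEq V]
    (r : ℝ) (w : V → V → ℝ) (X : Finset V) (v : V) : ℝ :=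
  ∑ u ∈ Xᶜ, (1 / ((Fintype.card V : ℝ) + (r - 1) * X.card)) * (w u v / ∑ x : V, w u x)

/-- `ρ` is the fixation-probability solution of the Moran-process linear system. -/
def IsMoranFixationSol {V : Type*} [Fintype V] [DecidableEq V]
    (r : ℝ) (w : V → V → ℝ) (ρ : Finset V → ℝ) : Prop :=
  ρ ∅ = 0 ∧ ρ Finset.univ = 1 ∧
  ∀ X : Finset V, X ≠ ∅ → X ≠ Finset.univ →
    ρ X = (∑ v ∈ Xᶜ, moranUp r w X v * ρ (insert v X))
        + (∑ v ∈ X, moranDown r w X v * ρ (X.erase v))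
        + (1 - (∑ v ∈ Xᶜ, moranUp r w X v) - (∑ v ∈ X, moranDown r w X v)) * ρ X

/-- `T` is the absorption-time solution of the Moran-process linear system. -/
def IsMoranAbsorptionSol {V : Type*} [Fintype V] [DecidableEq V]
    (r : ℝ) (w : V → V → ℝ) (T : Finset V → ℝ) : Prop :=
  T ∅ = 0 ∧ T Finset.univ = 0 ∧
  ∀ X : Finset V, X ≠ ∅ → X ≠ Finset.univ →
    T X = 1 + (∑ v ∈ Xᶜ, moranUp r w X v * T (insert v X))
        + (∑ v ∈ X, moranDown r w X v * T (X.erase v))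
        + (1 - (∑ v ∈ Xᶜ, moranUp r w X v) - (∑ v ∈ X, moranDown r w X v)) * T X

/-!
Let `f k = (N / r) · ∑_{j=k}^{N-1} 1/j` and compare `ρ` and `T` through
`h X = ρ X · f |X| - T X`, which vanishes at `∅` and `V`. Since `ρ` is harmonic and `T` has
drift `-1`, the drift of `h` at `X` with `|X| = k` is `1 - N/(r k) · ∑_{v ∉ X} p(X → X + v) ρ(X + v)`
plus a nonnegative contribution of the down-steps (`f` is antitone and `ρ ≥ 0`). The up-steps have
total probability at most `r k / N` and `ρ ≤ 1`, so `h` is subharmonic. Strong connectivity gives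
every nonempty proper `X` an up-step of positive probability, hence a maximum principle: a
subharmonic function is bounded by its boundary values. Thus `h ≤ 0`, and averaging
`T {v} ≥ ρ {v} · f 1` over `v` is the claim.
-/

theorem Relation.ReflTransGen.exists_rel_mem_not_mem {α : Type*} {R : α → α → Prop} {s : Set α}
    {a b : α} (h : Relation.ReflTransGen R a b) (ha : a ∈ s) (hb : b ∉ s) :
    ∃ x ∈ s, ∃ y ∉ s, R x y := by
  induction h with
  | refl => exact absurd ha hb
  | @tail c d _ hcd ih =>
    by_cases hc : c ∈ s
    · exact ⟨c, hc, d, hb, hcd⟩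
    · exact ih hc

noncomputable def harmonicTail (n k : ℕ) : ℝ :=
  ∑ j ∈ Icc k n, (1 : ℝ) / j

theorem harmonicTail_eq_of_lt {n k : ℕ} (h : n < k) : harmonicTail n k = 0 := by
  rw [harmonicTail, Icc_eq_empty (by omega), sum_empty]

theorem harmonicTail_eq_add {n k : ℕ} (h : k ≤ n) :
    harmonicTail n k = 1 / k + harmonicTail n (k + 1) := by
  rw [harmonicTail, Icc_eq_cons_Ioc h, sum_cons, ← Icc_add_one_left_eq_Ioc, harmonicTail]

theorem harmonicTail_antitone (n : ℕ) : Antitone (harmonicTail n) := fun _ _ hkl =>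
  sum_le_sum_of_subset_of_nonneg (Icc_subset_Icc_left hkl) fun _ _ _ => by positivity

section Moran

variable {V : Type*} [Fintype V] [DecidableEq V] {r : ℝ} {w : V → V → ℝ}

/-- Expected one-step increment of `g` under the Moran process started at `X`. -/
noncomputable def moranGenerator (r : ℝ) (w : V → V → ℝ) (g : Finset V → ℝ) (X : Finset V) : ℝ :=
  ∑ v ∈ Xᶜ, moranUp r w X v * (g (insert v X) - g X)
    + ∑ v ∈ X, moranDown r w X v * (g (X.erase v) - g X)

theorem moranGenerator_sub (g h : Finset V → ℝ) (X : Finset V) :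
    moranGenerator r w (fun Y => g Y - h Y) X = moranGenerator r w g X - moranGenerator r w h X := by
  simp only [moranGenerator, mul_sub, sum_sub_distrib]
  ring

theorem moranGenerator_const (c : ℝ) (X : Finset V) : moranGenerator r w (fun _ => c) X = 0 := by
  simp [moranGenerator]

theorem moranGenerator_mul_card (g : Finset V → ℝ) (f : ℕ → ℝ) (X : Finset V) :
    moranGenerator r w (fun Y => g Y * f Y.card) X = f X.card * moranGenerator r w g X
      + ∑ v ∈ Xᶜ, moranUp r w X v * g (insert v X) * (f (X.card + 1) - f X.card)
      + ∑ v ∈ X, moranDown r w X v * g (X.erase v) * (f (X.card - 1) - f X.card) := by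
  have hup : ∀ v ∈ Xᶜ, moranUp r w X v * (g (insert v X) * f (insert v X).card - g X * f X.card)
      = f X.card * (moranUp r w X v * (g (insert v X) - g X))
        + moranUp r w X v * g (insert v X) * (f (X.card + 1) - f X.card) := fun v hv => by
    rw [card_insert_of_notMem (mem_compl.1 hv)]; ring
  have hdown : ∀ v ∈ X, moranDown r w X v * (g (X.erase v) * f (X.erase v).card - g X * f X.card)
      = f X.card * (moranDown r w X v * (g (X.erase v) - g X))
        + moranDown r w X v * g (X.erase v) * (f (X.card - 1) - f X.card) := fun v hv => by
    rw [card_erase_of_mem hv]; ring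
  simp only [moranGenerator]
  rw [sum_congr rfl hup, sum_congr rfl hdown, sum_add_distrib, sum_add_distrib, mul_add, mul_sum,
    mul_sum]
  ring

theorem IsMoranFixationSol.moranGenerator_eq_zero {ρ : Finset V → ℝ}
    (hρ : IsMoranFixationSol r w ρ) {X : Finset V} (h0 : X ≠ ∅) (hU : X ≠ univ) :
    moranGenerator r w ρ X = 0 := by
  simp only [moranGenerator, mul_sub, sum_sub_distrib, ← sum_mul]
  linear_combination -hρ.2.2 X h0 hU

theorem IsMoranAbsorptionSol.moranGenerator_eq_neg_one {T : Finset V → ℝ}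
    (hT : IsMoranAbsorptionSol r w T) {X : Finset V} (h0 : X ≠ ∅) (hU : X ≠ univ) :
    moranGenerator r w T X = -1 := by
  simp only [moranGenerator, mul_sub, sum_sub_distrib, ← sum_mul]
  linear_combination -hT.2.2 X h0 hU

omit [DecidableEq V] in
theorem card_le_card_add_sub_one_mul (hr : 1 ≤ r) (X : Finset V) :
    (Fintype.card V : ℝ) ≤ Fintype.card V + (r - 1) * X.card :=
  le_add_of_nonneg_right (mul_nonneg (by linarith) X.card.cast_nonneg)

variable (hr : 1 ≤ r) (hw : ∀ u v, 0 ≤ w u v)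
include hr hw

theorem moranUp_nonneg (X : Finset V) (v : V) : 0 ≤ moranUp r w X v :=
  sum_nonneg fun u _ => mul_nonneg
    (div_nonneg (by linarith) (Nat.cast_nonneg _ |>.trans (card_le_card_add_sub_one_mul hr X)))
    (div_nonneg (hw u v) (sum_nonneg fun x _ => hw u x))

theorem moranDown_nonneg (X : Finset V) (v : V) : 0 ≤ moranDown r w X v :=
  sum_nonneg fun u _ => mul_nonneg
    (div_nonneg zero_le_one (Nat.cast_nonneg _ |>.trans (card_le_card_add_sub_one_mul hr X)))
    (div_nonneg (hw u v) (sum_nonneg fun x _ => hw u x))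

theorem card_mul_sum_moranUp_le (X : Finset V) :
    (Fintype.card V : ℝ) * ∑ v ∈ Xᶜ, moranUp r w X v ≤ r * X.card := by
  rcases X.eq_empty_or_nonempty with rfl | ⟨u, -⟩
  · simp [moranUp]
  have hF : (0 : ℝ) < Fintype.card V + (r - 1) * X.card :=
    (Nat.cast_pos.2 (Fintype.card_pos_iff.2 ⟨u⟩)).trans_le (card_le_card_add_sub_one_mul hr X)
  have hrow : ∀ u ∈ X, ∑ v ∈ Xᶜ, w u v / ∑ x, w u x ≤ 1 := fun u _ => by
    rw [← sum_div]
    exact div_le_one_of_le₀ (sum_le_univ_sum_of_nonneg (hw u)) (sum_nonneg fun x _ => hw u x)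
  calc (Fintype.card V : ℝ) * ∑ v ∈ Xᶜ, moranUp r w X v
      ≤ (Fintype.card V + (r - 1) * X.card) * ∑ v ∈ Xᶜ, moranUp r w X v :=
        mul_le_mul_of_nonneg_right (card_le_card_add_sub_one_mul hr X)
          (sum_nonneg fun v _ => moranUp_nonneg hr hw X v)
    _ = r * ∑ u ∈ X, ∑ v ∈ Xᶜ, w u v / ∑ x, w u x := by
        simp only [moranUp, ← mul_sum]
        rw [sum_comm]
        field_simp
    _ ≤ r * X.card := by
        have := sum_le_card_nsmul X _ 1 hrow
        rw [nsmul_one] at this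
        gcongr

theorem exists_moranUp_pos (hconn : ∀ u v, Relation.ReflTransGen (fun a b => 0 < w a b) u v)
    {X : Finset V} (hX : X.Nonempty) (hU : X ≠ univ) : ∃ v ∉ X, 0 < moranUp r w X v := by
  obtain ⟨u, hu⟩ := hX
  obtain ⟨v, hv⟩ : ∃ v, v ∉ X := by
    by_contra! h
    exact hU (eq_univ_iff_forall.2 h)
  obtain ⟨a, ha, b, hb, hab⟩ := (hconn u v).exists_rel_mem_not_mem (s := ↑X) hu hv
  have hN : (0 : ℝ) < Fintype.card V := Nat.cast_pos.2 (Fintype.card_pos_iff.2 ⟨u⟩)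
  have hWa : 0 < ∑ x, w a x := hab.trans_le (single_le_sum (fun x _ => hw a x) (mem_univ b))
  refine ⟨b, hb, sum_pos' (fun u _ => ?_) ⟨a, ha, ?_⟩⟩
  · exact mul_nonneg (div_nonneg (by linarith) (hN.le.trans (card_le_card_add_sub_one_mul hr X)))
      (div_nonneg (hw u b) (sum_nonneg fun x _ => hw u x))
  · exact mul_pos (div_pos (by linarith) (hN.trans_le (card_le_card_add_sub_one_mul hr X)))
      (div_pos hab hWa)

theorem exists_apply_insert_eq_of_forall_le
    (hconn : ∀ u v, Relation.ReflTransGen (fun a b => 0 < w a b) u v)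
    {g : Finset V → ℝ} {X : Finset V} (hmax : ∀ Y, g Y ≤ g X) (h0 : X ≠ ∅) (hU : X ≠ univ)
    (hg : 0 ≤ moranGenerator r w g X) : ∃ v ∉ X, g (insert v X) = g X := by
  have hup : ∀ v ∈ Xᶜ, moranUp r w X v * (g (insert v X) - g X) ≤ 0 := fun v _ =>
    mul_nonpos_of_nonneg_of_nonpos (moranUp_nonneg hr hw X v) (sub_nonpos.2 (hmax _))
  have hdown : ∀ v ∈ X, moranDown r w X v * (g (X.erase v) - g X) ≤ 0 := fun v _ =>
    mul_nonpos_of_nonneg_of_nonpos (moranDown_nonneg hr hw X v) (sub_nonpos.2 (hmax _))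
  have hzero : ∑ v ∈ Xᶜ, moranUp r w X v * (g (insert v X) - g X) = 0 := by
    have := sum_nonpos hup
    have := sum_nonpos hdown
    rw [moranGenerator] at hg
    linarith
  obtain ⟨v, hv, hpos⟩ := exists_moranUp_pos hr hw hconn (nonempty_iff_ne_empty.2 h0) hU
  refine ⟨v, hv, ?_⟩
  rcases mul_eq_zero.1 ((sum_eq_zero_iff_of_nonpos hup).1 hzero v (mem_compl.2 hv)) with h | h
  · exact absurd h hpos.ne'
  · linarith

theorem nonpos_of_moranGenerator_nonneg
    (hconn : ∀ u v, Relation.ReflTransGen (fun a b => 0 < w a b) u v) {g : Finset V → ℝ}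
    (hg : ∀ X, X ≠ ∅ → X ≠ univ → 0 ≤ moranGenerator r w g X) (h0 : g ∅ ≤ 0) (hU : g univ ≤ 0)
    (X : Finset V) : g X ≤ 0 := by
  obtain ⟨X₀, -, hX₀⟩ := exists_max_image univ g univ_nonempty
  obtain ⟨X₁, hX₁, hcard⟩ :=
    exists_max_image (univ.filter fun Y => g Y = g X₀) card ⟨X₀, by simp⟩
  have hmax : ∀ Y, g Y ≤ g X₁ := fun Y => (mem_filter.1 hX₁).2 ▸ hX₀ Y (mem_univ Y)
  refine (hmax X).trans ?_
  by_cases hX₁0 : X₁ = ∅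
  · rwa [hX₁0]
  by_cases hX₁U : X₁ = univ
  · rwa [hX₁U]
  obtain ⟨v, hv, heq⟩ :=
    exists_apply_insert_eq_of_forall_le hr hw hconn hmax hX₁0 hX₁U (hg X₁ hX₁0 hX₁U)
  have := hcard (insert v X₁) (by simpa [heq] using (mem_filter.1 hX₁).2)
  rw [card_insert_of_notMem hv] at this
  omega

theorem IsMoranFixationSol.nonneg
    (hconn : ∀ u v, Relation.ReflTransGen (fun a b => 0 < w a b) u v) {ρ : Finset V → ℝ}
    (hρ : IsMoranFixationSol r w ρ) (X : Finset V) : 0 ≤ ρ X := by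
  have := nonpos_of_moranGenerator_nonneg hr hw hconn (g := fun Y => 0 - ρ Y)
    (fun Y h0 hU => by
      rw [moranGenerator_sub, moranGenerator_const, hρ.moranGenerator_eq_zero h0 hU, sub_zero])
    (by simp [hρ.1]) (by simp [hρ.2.1]) X
  linarith

theorem IsMoranFixationSol.le_one
    (hconn : ∀ u v, Relation.ReflTransGen (fun a b => 0 < w a b) u v) {ρ : Finset V → ℝ}
    (hρ : IsMoranFixationSol r w ρ) (X : Finset V) : ρ X ≤ 1 := by
  have := nonpos_of_moranGenerator_nonneg hr hw hconn (g := fun Y => ρ Y - 1)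
    (fun Y h0 hU => by
      rw [moranGenerator_sub, moranGenerator_const, hρ.moranGenerator_eq_zero h0 hU, sub_zero])
    (by simp [hρ.1]) (by simp [hρ.2.1]) X
  linarith

theorem moranGenerator_comparison_nonneg
    (hconn : ∀ u v, Relation.ReflTransGen (fun a b => 0 < w a b) u v) {ρ T : Finset V → ℝ}
    (hρ : IsMoranFixationSol r w ρ) (hT : IsMoranAbsorptionSol r w T) {X : Finset V}
    (h0 : X ≠ ∅) (hU : X ≠ univ) :
    0 ≤ moranGenerator r w (fun Y =>
      ρ Y * (Fintype.card V / r * harmonicTail (Fintype.card V - 1) Y.card) - T Y) X := by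
  set N := Fintype.card V
  set k := X.card
  have hk1 : 1 ≤ k := card_pos.2 (nonempty_iff_ne_empty.2 h0)
  have hkN : k ≤ N - 1 := by
    have := card_lt_card (ssubset_univ_iff.2 hU)
    rw [card_univ] at this
    omega
  have hr0 : 0 < r := by linarith
  have hstep : N / r * harmonicTail (N - 1) (k + 1) - N / r * harmonicTail (N - 1) k
      = -(N / (r * k)) := by
    rw [harmonicTail_eq_add hkN]
    field_simp
    ring
  have hup : -1 ≤ ∑ v ∈ Xᶜ, moranUp r w X v * ρ (insert v X) *
      (N / r * harmonicTail (N - 1) (k + 1) - N / r * harmonicTail (N - 1) k) := by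
    rw [hstep, ← sum_mul]
    have hS : ∑ v ∈ Xᶜ, moranUp r w X v * ρ (insert v X) ≤ ∑ v ∈ Xᶜ, moranUp r w X v :=
      sum_le_sum fun v _ =>
        mul_le_of_le_one_right (moranUp_nonneg hr hw X v) (hρ.le_one hr hw hconn _)
    have hNS := (mul_le_mul_of_nonneg_left hS N.cast_nonneg).trans
      (card_mul_sum_moranUp_le hr hw X)
    have : (∑ v ∈ Xᶜ, moranUp r w X v * ρ (insert v X)) * (N / (r * k)) ≤ 1 := by
      rw [mul_div_assoc', div_le_one (by positivity)]
      linarith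
    linarith
  have hdown : 0 ≤ ∑ v ∈ X, moranDown r w X v * ρ (X.erase v) *
      (N / r * harmonicTail (N - 1) (k - 1) - N / r * harmonicTail (N - 1) k) :=
    sum_nonneg fun v _ => mul_nonneg
      (mul_nonneg (moranDown_nonneg hr hw X v) (hρ.nonneg hr hw hconn _))
      (sub_nonneg.2 (mul_le_mul_of_nonneg_left (harmonicTail_antitone _ (Nat.sub_le k 1))
        (by positivity)))
  rw [moranGenerator_sub, moranGenerator_mul_card ρ fun j => N / r * harmonicTail (N - 1) j,
    hρ.moranGenerator_eq_zero h0 hU, hT.moranGenerator_eq_neg_one h0 hU]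
  linarith

end Moran

theorem absorption_time_lower_bound_general
    {V : Type*} [Fintype V] [DecidableEq V]
    (N : ℕ) (hN : 2 ≤ N) (hcard : Fintype.card V = N)
    (r : ℝ) (hr : 1 < r)
    (w : V → V → ℝ) (hw : ∀ u v : V, 0 ≤ w u v)
    (hconn : ∀ u v : V, Relation.ReflTransGen (fun a b : V => 0 < w a b) u v)
    (ρ T : Finset V → ℝ)
    (hρ : IsMoranFixationSol r w ρ)
    (hT : IsMoranAbsorptionSol r w T)
    (pbar Tbar : ℝ)
    (hpbar : pbar = (1 / (N : ℝ)) * ∑ v : V, ρ {v})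
    (hTbar : Tbar = (1 / (N : ℝ)) * ∑ v : V, T {v}) :
    Tbar ≥ (pbar / r) * N * ∑ k ∈ Finset.Icc 1 (N - 1), (1 : ℝ) / k := by
  subst hcard hpbar hTbar
  have hcomparison : ∀ X : Finset V,
      ρ X * (Fintype.card V / r * harmonicTail (Fintype.card V - 1) X.card) - T X ≤ 0 :=
    nonpos_of_moranGenerator_nonneg hr.le hw hconn
      (fun _ h0 hU => moranGenerator_comparison_nonneg hr.le hw hconn hρ hT h0 hU)
      (by simp [hρ.1, hT.1])
      (by simp [hρ.2.1, hT.2.1, harmonicTail_eq_of_lt (Nat.sub_one_lt_of_lt hN)])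
  have hsingleton (v : V) :
      ρ {v} * (Fintype.card V / r * harmonicTail (Fintype.card V - 1) 1) ≤ T {v} := by
    simpa using hcomparison {v}
  rw [ge_iff_le]
  calc (1 / (Fintype.card V : ℝ) * ∑ v, ρ {v}) / r * Fintype.card V
        * ∑ k ∈ Icc 1 (Fintype.card V - 1), (1 : ℝ) / k
      = 1 / (Fintype.card V : ℝ) *
          ∑ v, ρ {v} * (Fintype.card V / r * harmonicTail (Fintype.card V - 1) 1) := by
        rw [← sum_mul, harmonicTail]
        ring
    _ ≤ 1 / (Fintype.card V : ℝ) * ∑ v, T {v} := by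
        gcongr with v
        exact hsingleton v

/-- The absorption time of a uniformly placed single mutant is at least
`(p̄/r)·N·H_{N-1}` for any strongly connected weighted digraph on `N ≥ 2` vertices. -/
theorem absorption_time_lower_bound
    {V : Type*} [Fintype V] [DecidableEq V]
    (N : ℕ) (hN : 2 ≤ N) (hcard : Fintype.card V = N)
    (r : ℝ) (hr : 1 < r)
    (w : V → V → ℝ) (hw : ∀ u v : V, 0 ≤ w u v)
    (hW : ∀ u : V, 0 < ∑ x : V, w u x)
    (hconn : ∀ u v : V, Relation.ReflTransGen (fun a b : V => 0 < w a b) u v)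
    (ρ T : Finset V → ℝ)
    (hρ : IsMoranFixationSol r w ρ)
    (hT : IsMoranAbsorptionSol r w T)
    (pbar Tbar : ℝ)
    (hpbar : pbar = (1 / (N : ℝ)) * ∑ v : V, ρ {v})
    (hTbar : Tbar = (1 / (N : ℝ)) * ∑ v : V, T {v}) :
    Tbar ≥ (pbar / r) * N * ∑ k ∈ Finset.Icc 1 (N - 1), (1 : ℝ) / k :=
  absorption_time_lower_bound_general N hN hcard r hr w hw hconn ρ T hρ hT pbar Tbar hpbar hTbar
end

section
/- Fix α ∈ (0,1] and r > 1. For each N ≥ 2 let ρ_N be the fixation-probability solution of the Moran birth–death chain on the α-Balanced bipartite graph B_{N,α}, and define fp(B_{N,α}, r) = (v·ρ_N(1,0) + c·ρ_N(0,1))/(v+c), where v = N and c = ⌈N^{1−α}⌉. Then fp(B_{N,α}, r) converges to 1 − 1/r² as N → ∞. -/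
/-!
For `x = c / v`, the function `(i, j) ↦ sⁱ tʲ` with `s = (r x + 1)/(r x + r²)` and
`t = (x + r)/(r² x + r)` has zero drift under the chain, so `(1 - sⁱ tʲ)/(1 - sᵛ tᶜ)` is a
fixation-probability solution. It is the only one by the maximum principle: from every transient
state the chain can move up towards `(v, c)`. On `B_{N,α}` we have `x → 0`, hence `s → 1/r²`,
`t → 1` and `sᵛ tᶜ → 0`; the outside vertices carry almost all the weight of the uniform start, so
the average tends to `1 - 1/r²`.
-/

open Filter Topology

/-- `ρ` is the fixation-probability solution of the Moran birth–death chain on the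
complete bipartite graph with `v` vertices in the larger ('outside') part and `c`
vertices in the smaller part (the 'center'); mutants have fitness `r`.
The state `(i, j)` has `i` mutants outside and `j` mutants in the center. -/
def IsBipFixationSol (r : ℝ) (v c : ℕ) (ρ : ℕ → ℕ → ℝ) : Prop :=
  ρ 0 0 = 0 ∧ ρ v c = 1 ∧
  ∀ i j : ℕ, i ≤ v → j ≤ c → ¬(i = 0 ∧ j = 0) → ¬(i = v ∧ j = c) →
    let F : ℝ := (v : ℝ) + c + (r - 1) * (i + j)
    ρ i j =
        (r * j / F) * (((v : ℝ) - i) / v) * ρ (i + 1) j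
      + (((c : ℝ) - j) / F) * ((i : ℝ) / v) * ρ (i - 1) j
      + (r * i / F) * (((c : ℝ) - j) / c) * ρ i (j + 1)
      + (((v : ℝ) - i) / F) * ((j : ℝ) / c) * ρ i (j - 1)
      + (1 - (r * j / F) * (((v : ℝ) - i) / v) - (((c : ℝ) - j) / F) * ((i : ℝ) / v)
           - (r * i / F) * (((c : ℝ) - j) / c) - (((v : ℝ) - i) / F) * ((j : ℝ) / c)) * ρ i j

/-- `T` is the absorption-time solution of the Moran birth–death chain on the
complete bipartite graph with parts of sizes `v` (outside) and `c` (center). -/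
def IsBipAbsorptionSol (r : ℝ) (v c : ℕ) (T : ℕ → ℕ → ℝ) : Prop :=
  T 0 0 = 0 ∧ T v c = 0 ∧
  ∀ i j : ℕ, i ≤ v → j ≤ c → ¬(i = 0 ∧ j = 0) → ¬(i = v ∧ j = c) →
    let F : ℝ := (v : ℝ) + c + (r - 1) * (i + j)
    T i j = 1 +
        (r * j / F) * (((v : ℝ) - i) / v) * T (i + 1) j
      + (((c : ℝ) - j) / F) * ((i : ℝ) / v) * T (i - 1) j
      + (r * i / F) * (((c : ℝ) - j) / c) * T i (j + 1)
      + (((v : ℝ) - i) / F) * ((j : ℝ) / c) * T i (j - 1)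
      + (1 - (r * j / F) * (((v : ℝ) - i) / v) - (((c : ℝ) - j) / F) * ((i : ℝ) / v)
           - (r * i / F) * (((c : ℝ) - j) / c) - (((v : ℝ) - i) / F) * ((j : ℝ) / c)) * T i j

noncomputable def bipOutsideRatio (r x : ℝ) : ℝ := (r * x + 1) / (r * x + r ^ 2)

noncomputable def bipCenterRatio (r x : ℝ) : ℝ := (x + r) / (r ^ 2 * x + r)

section Ratios

variable {r x : ℝ}

lemma bipOutsideRatio_pos (hr : 0 < r) (hx : 0 ≤ x) : 0 < bipOutsideRatio r x := by
  unfold bipOutsideRatio; positivity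

lemma bipOutsideRatio_lt_one (hr : 1 < r) (hx : 0 ≤ x) : bipOutsideRatio r x < 1 := by
  rw [bipOutsideRatio, div_lt_one (by positivity)]; nlinarith

lemma bipCenterRatio_pos (hr : 0 < r) (hx : 0 ≤ x) : 0 < bipCenterRatio r x := by
  unfold bipCenterRatio; positivity

lemma bipCenterRatio_le_one (hr : 1 ≤ r) (hx : 0 ≤ x) : bipCenterRatio r x ≤ 1 := by
  rw [bipCenterRatio, div_le_one (by positivity)]
  nlinarith [mul_nonneg (mul_nonneg (sub_nonneg.2 hr) hx) (by linarith : (0:ℝ) ≤ r + 1)]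

lemma bipRatio_pow_mul_pow_lt_one (hr : 1 < r) (hx : 0 ≤ x) {m : ℕ} (hm : m ≠ 0) (n : ℕ) :
    bipOutsideRatio r x ^ m * bipCenterRatio r x ^ n < 1 :=
  mul_lt_one_of_nonneg_of_lt_one_left (pow_nonneg (bipOutsideRatio_pos (by linarith) hx).le _)
    (pow_lt_one₀ (bipOutsideRatio_pos (by linarith) hx).le (bipOutsideRatio_lt_one hr hx) hm)
    (pow_le_one₀ (bipCenterRatio_pos (by linarith) hx).le (bipCenterRatio_le_one hr.le hx))

/- The drift of `sⁱ tʲ` is the sum of the contributions of the edges joining a mutant center to a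
resident outside vertex and of those joining a mutant outside vertex to a resident center; these
two identities make each of them vanish. -/
lemma bipRatio_balance_mutantCenter (hr : 0 < r) {v c : ℝ} (hv : 0 < v) (hc : 0 < c) :
    r * (bipOutsideRatio r (c / v) - 1) / v + ((bipCenterRatio r (c / v))⁻¹ - 1) / c = 0 := by
  unfold bipOutsideRatio bipCenterRatio
  field_simp
  ring

lemma bipRatio_balance_mutantOutside (hr : 0 < r) {v c : ℝ} (hv : 0 < v) (hc : 0 < c) :
    ((bipOutsideRatio r (c / v))⁻¹ - 1) / v + r * (bipCenterRatio r (c / v) - 1) / c = 0 := by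
  unfold bipOutsideRatio bipCenterRatio
  field_simp
  ring

lemma tendsto_bipOutsideRatio_zero (hr : 0 < r) :
    Tendsto (bipOutsideRatio r) (𝓝 0) (𝓝 (1 / r ^ 2)) := by
  have : ContinuousAt (bipOutsideRatio r) 0 :=
    ContinuousAt.div (by fun_prop) (by fun_prop) (by positivity)
  simpa [bipOutsideRatio] using this.tendsto

lemma tendsto_bipCenterRatio_zero (hr : 0 < r) :
    Tendsto (bipCenterRatio r) (𝓝 0) (𝓝 1) := by
  have : ContinuousAt (bipCenterRatio r) 0 :=
    ContinuousAt.div (by fun_prop) (by fun_prop) (by positivity)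
  simpa [bipCenterRatio, hr.ne'] using this.tendsto

end Ratios

section Drift

variable {r : ℝ} {v c : ℕ}

noncomputable def bipDrift (r : ℝ) (v c : ℕ) (f : ℕ → ℕ → ℝ) (i j : ℕ) : ℝ :=
  (r * j * (((v : ℝ) - i) / v) * (f (i + 1) j - f i j)
    + ((c : ℝ) - j) * ((i : ℝ) / v) * (f (i - 1) j - f i j)
    + r * i * (((c : ℝ) - j) / c) * (f i (j + 1) - f i j)
    + ((v : ℝ) - i) * ((j : ℝ) / c) * (f i (j - 1) - f i j))
    / ((v : ℝ) + c + (r - 1) * (i + j))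

lemma isBipFixationSol_iff {ρ : ℕ → ℕ → ℝ} :
    IsBipFixationSol r v c ρ ↔ ρ 0 0 = 0 ∧ ρ v c = 1 ∧
      ∀ i j : ℕ, i ≤ v → j ≤ c → ¬(i = 0 ∧ j = 0) → ¬(i = v ∧ j = c) →
        bipDrift r v c ρ i j = 0 := by
  refine and_congr Iff.rfl <| and_congr Iff.rfl <| forall₂_congr fun i j =>
    imp_congr_right fun _ => imp_congr_right fun _ => imp_congr_right fun _ =>
      imp_congr_right fun _ => ?_
  simp only [bipDrift]
  constructor <;> intro h <;> linear_combination -h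

lemma bipDrift_sub (f g : ℕ → ℕ → ℝ) (i j : ℕ) :
    bipDrift r v c (fun i j => f i j - g i j) i j =
      bipDrift r v c f i j - bipDrift r v c g i j := by
  simp only [bipDrift]; ring

end Drift

section MaximumPrinciple

variable {r : ℝ} {v c : ℕ}

lemma up_eq_of_bipDrift_eq_zero_of_isMax (hr : 0 < r) (hv : 1 ≤ v) (hc : 1 ≤ c)
    {h : ℕ → ℕ → ℝ} {i j : ℕ} (hi : i ≤ v) (hj : j ≤ c) (h0 : ¬(i = 0 ∧ j = 0))
    (h1 : ¬(i = v ∧ j = c)) (hdrift : bipDrift r v c h i j = 0)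
    (hmax : ∀ k l, k ≤ v → l ≤ c → h k l ≤ h i j) :
    (i < v ∧ h (i + 1) j = h i j) ∨ (j < c ∧ h i (j + 1) = h i j) := by
  have hiv : (i : ℝ) ≤ v := by exact_mod_cast hi
  have hjc : (j : ℝ) ≤ c := by exact_mod_cast hj
  have hF : (v : ℝ) + c + (r - 1) * (i + j) ≠ 0 := by
    have : (0 : ℝ) < i + j := by exact_mod_cast (show 0 < i + j by omega)
    nlinarith
  rw [bipDrift, div_eq_zero_iff, or_iff_left hF] at hdrift
  have hvi : (0 : ℝ) ≤ v - i := by linarith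
  have hcj : (0 : ℝ) ≤ c - j := by linarith
  have hiUp : r * j * (((v : ℝ) - i) / v) * (h (i + 1) j - h i j) ≤ 0 := by
    rcases hi.lt_or_eq with hi | rfl
    · exact mul_nonpos_of_nonneg_of_nonpos (by positivity) (sub_nonpos.2 (hmax _ _ hi hj))
    · simp
  have hiDown : ((c : ℝ) - j) * ((i : ℝ) / v) * (h (i - 1) j - h i j) ≤ 0 :=
    mul_nonpos_of_nonneg_of_nonpos (by positivity) (sub_nonpos.2 (hmax _ _ (by omega) hj))
  have hjUp : r * i * (((c : ℝ) - j) / c) * (h i (j + 1) - h i j) ≤ 0 := by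
    rcases hj.lt_or_eq with hj | rfl
    · exact mul_nonpos_of_nonneg_of_nonpos (by positivity) (sub_nonpos.2 (hmax _ _ hi hj))
    · simp
  have hjDown : ((v : ℝ) - i) * ((j : ℝ) / c) * (h i (j - 1) - h i j) ≤ 0 :=
    mul_nonpos_of_nonneg_of_nonpos (by positivity) (sub_nonpos.2 (hmax _ _ hi (by omega)))
  by_cases hup : 0 < j ∧ i < v
  · have hp : 0 < r * j * (((v : ℝ) - i) / v) := by
      have : (i : ℝ) < v := by exact_mod_cast hup.2
      have : (0 : ℝ) < j := by exact_mod_cast hup.1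
      exact mul_pos (by positivity) (div_pos (by linarith) (by linarith))
    refine Or.inl ⟨hup.2, sub_eq_zero.1 ((mul_eq_zero.1 ?_).resolve_left hp.ne')⟩
    linarith
  · have hup' : 0 < i ∧ j < c := by omega
    have hp : 0 < r * i * (((c : ℝ) - j) / c) := by
      have : (j : ℝ) < c := by exact_mod_cast hup'.2
      have : (0 : ℝ) < i := by exact_mod_cast hup'.1
      exact mul_pos (by positivity) (div_pos (by linarith) (by linarith))
    refine Or.inr ⟨hup'.2, sub_eq_zero.1 ((mul_eq_zero.1 ?_).resolve_left hp.ne')⟩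
    linarith

lemma le_zero_of_bipDrift_eq_zero (hr : 0 < r) (hv : 1 ≤ v) (hc : 1 ≤ c) {h : ℕ → ℕ → ℝ}
    (h00 : h 0 0 = 0) (hvc : h v c = 0)
    (hdrift : ∀ i j : ℕ, i ≤ v → j ≤ c → ¬(i = 0 ∧ j = 0) → ¬(i = v ∧ j = c) →
      bipDrift r v c h i j = 0)
    {i j : ℕ} (hi : i ≤ v) (hj : j ≤ c) : h i j ≤ 0 := by
  set grid := Finset.Iic v ×ˢ Finset.Iic c
  obtain ⟨p, hp, hpmax⟩ :=
    grid.exists_max_image (fun q => h q.1 q.2) ⟨(0, 0), by simp [grid]⟩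
  -- a maximizer as far as possible from `(0, 0)` cannot be transient
  obtain ⟨⟨a, b⟩, hab, habmax⟩ := (grid.filter fun q => h q.1 q.2 = h p.1 p.2).exists_max_image
    (fun q => q.1 + q.2) ⟨p, Finset.mem_filter.2 ⟨hp, rfl⟩⟩
  simp only [grid, Finset.mem_filter, Finset.mem_product, Finset.mem_Iic, and_imp,
    Prod.forall] at hab habmax hpmax
  obtain ⟨⟨ha, hb⟩, habp⟩ := hab
  have hM : h p.1 p.2 ≤ 0 := by
    by_cases h0 : a = 0 ∧ b = 0
    · rw [← habp, h0.1, h0.2, h00]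
    by_cases h1 : a = v ∧ b = c
    · rw [← habp, h1.1, h1.2, hvc]
    rcases up_eq_of_bipDrift_eq_zero_of_isMax hr hv hc ha hb h0 h1 (hdrift a b ha hb h0 h1)
      (fun k l hk hl => habp ▸ hpmax k l hk hl) with ⟨hlt, heq⟩ | ⟨hlt, heq⟩
    · have := habmax (a + 1) b hlt hb (heq.trans habp); omega
    · have := habmax a (b + 1) ha hlt (heq.trans habp); omega
  exact (hpmax i j hi hj).trans hM

theorem IsBipFixationSol.unique (hr : 0 < r) (hv : 1 ≤ v) (hc : 1 ≤ c) {ρ σ : ℕ → ℕ → ℝ}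
    (hρ : IsBipFixationSol r v c ρ) (hσ : IsBipFixationSol r v c σ) {i j : ℕ} (hi : i ≤ v)
    (hj : j ≤ c) : ρ i j = σ i j := by
  have hle : ∀ {ρ σ : ℕ → ℕ → ℝ}, IsBipFixationSol r v c ρ → IsBipFixationSol r v c σ →
      ρ i j - σ i j ≤ 0 := by
    intro ρ σ hρ hσ
    rw [isBipFixationSol_iff] at hρ hσ
    refine le_zero_of_bipDrift_eq_zero (h := fun i j => ρ i j - σ i j) hr hv hc
      (by simp [hρ.1, hσ.1]) (by simp [hρ.2.1, hσ.2.1]) (fun k l hk hl h0 h1 => ?_) hi hj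
    rw [bipDrift_sub, hρ.2.2 k l hk hl h0 h1, hσ.2.2 k l hk hl h0 h1, sub_zero]
  linarith [hle hρ hσ, hle hσ hρ]

end MaximumPrinciple

section ExplicitSolution

variable {r : ℝ} {v c : ℕ}

noncomputable def bipFixation (r : ℝ) (v c : ℕ) (i j : ℕ) : ℝ :=
  (1 - bipOutsideRatio r (c / v) ^ i * bipCenterRatio r (c / v) ^ j) /
    (1 - bipOutsideRatio r (c / v) ^ v * bipCenterRatio r (c / v) ^ c)

lemma bipDrift_bipRatio_pow (hr : 0 < r) (hv : 1 ≤ v) (hc : 1 ≤ c) (i j : ℕ) :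
    bipDrift r v c
      (fun i j => bipOutsideRatio r (c / v) ^ i * bipCenterRatio r (c / v) ^ j) i j = 0 := by
  have hv' : (0 : ℝ) < v := by exact_mod_cast hv
  have hc' : (0 : ℝ) < c := by exact_mod_cast hc
  have hA := bipRatio_balance_mutantCenter hr hv' hc'
  have hB := bipRatio_balance_mutantOutside hr hv' hc'
  have hs := (bipOutsideRatio_pos hr (by positivity : (0 : ℝ) ≤ c / v)).ne'
  have ht := (bipCenterRatio_pos hr (by positivity : (0 : ℝ) ≤ c / v)).ne'
  generalize bipOutsideRatio r (c / v) = s at *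
  generalize bipCenterRatio r (c / v) = t at *
  -- the `i - 1` and `j - 1` terms only matter when their coefficient `i`, resp. `j`, is nonzero
  have hi :
      (i : ℝ) * (s ^ (i - 1) * t ^ j - s ^ i * t ^ j) = i * (s ^ i * t ^ j) * (s⁻¹ - 1) := by
    rcases i with _ | i
    · simp
    · rw [Nat.add_sub_cancel, pow_succ]; field_simp
  have hj :
      (j : ℝ) * (s ^ i * t ^ (j - 1) - s ^ i * t ^ j) = j * (s ^ i * t ^ j) * (t⁻¹ - 1) := by
    rcases j with _ | j
    · simp
    · rw [Nat.add_sub_cancel, pow_succ]; field_simp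
  rw [bipDrift, div_eq_zero_iff]
  left
  linear_combination ((c : ℝ) - j) / v * hi + ((v : ℝ) - i) / c * hj
    + j * ((v : ℝ) - i) * (s ^ i * t ^ j) * hA + i * ((c : ℝ) - j) * (s ^ i * t ^ j) * hB

theorem isBipFixationSol_bipFixation (hr : 1 < r) (hv : 1 ≤ v) (hc : 1 ≤ c) :
    IsBipFixationSol r v c (bipFixation r v c) := by
  have hE : 1 - bipOutsideRatio r (c / v) ^ v * bipCenterRatio r (c / v) ^ c ≠ 0 :=
    (sub_pos.2 (bipRatio_pow_mul_pow_lt_one hr (by positivity) (by omega) c)).ne'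
  refine isBipFixationSol_iff.2 ⟨by simp [bipFixation], div_self hE, fun i j _ _ _ _ => ?_⟩
  have hlin : bipDrift r v c (bipFixation r v c) i j = -bipDrift r v c
      (fun i j => bipOutsideRatio r (c / v) ^ i * bipCenterRatio r (c / v) ^ j) i j /
        (1 - bipOutsideRatio r (c / v) ^ v * bipCenterRatio r (c / v) ^ c) := by
    simp only [bipDrift, bipFixation]; ring
  rw [hlin, bipDrift_bipRatio_pow (by linarith) hv hc, neg_zero, zero_div]

end ExplicitSolution

lemma tendsto_pow_of_tendsto_of_lt_one {ι : Type*} {L : Filter ι} {a : ι → ℝ} {k : ι → ℕ}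
    {l : ℝ} (ha0 : ∀ n, 0 ≤ a n) (ha : Tendsto a L (𝓝 l)) (hl : l < 1)
    (hk : Tendsto k L atTop) : Tendsto (fun n => a n ^ k n) L (𝓝 0) := by
  obtain ⟨q, hlq, hq1⟩ := exists_between (max_lt hl one_pos)
  refine squeeze_zero' (Eventually.of_forall fun n => pow_nonneg (ha0 n) _) ?_
    ((tendsto_pow_atTop_nhds_zero_of_lt_one ((le_max_right _ _).trans hlq.le) hq1).comp hk)
  filter_upwards [ha.eventually_lt_const ((le_max_left _ _).trans_lt hlq)] with n hn
  exact pow_le_pow_left₀ (ha0 n) hn.le _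

lemma tendsto_natCeil_rpow_div_self {β : ℝ} (hβ : β < 1) :
    Tendsto (fun N : ℕ => (⌈(N : ℝ) ^ β⌉₊ : ℝ) / N) atTop (𝓝 0) := by
  have hpow : Tendsto (fun N : ℕ => (N : ℝ) ^ (β - 1)) atTop (𝓝 0) := by
    simpa [Function.comp_def] using (tendsto_rpow_neg_atTop (by linarith : 0 < 1 - β)).comp
      tendsto_natCast_atTop_atTop
  refine squeeze_zero' (Eventually.of_forall fun N => by positivity) ?_
    (by simpa using hpow.add tendsto_one_div_atTop_nhds_zero_nat)
  filter_upwards [eventually_gt_atTop 0] with N hN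
  have hN' : (0 : ℝ) < N := by exact_mod_cast hN
  have := Nat.ceil_lt_add_one (Real.rpow_nonneg hN'.le β)
  rw [Real.rpow_sub_one hN'.ne', ← one_div, ← add_div, div_le_div_iff_of_pos_right hN']
  linarith

theorem tendsto_bipFixation_uniform {r : ℝ} (hr : 1 < r) {v c : ℕ → ℕ}
    (hv : Tendsto v atTop atTop) (hcv : Tendsto (fun n => (c n : ℝ) / v n) atTop (𝓝 0)) :
    Tendsto (fun n => ((v n : ℝ) * bipFixation r (v n) (c n) 1 0
        + (c n : ℝ) * bipFixation r (v n) (c n) 0 1) / ((v n : ℝ) + c n))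
      atTop (𝓝 (1 - 1 / r ^ 2)) := by
  have hr0 : 0 < r := by linarith
  set x := fun n => (c n : ℝ) / v n
  have hx : ∀ n, 0 ≤ x n := fun n => by positivity
  set s := fun n => bipOutsideRatio r (x n)
  set t := fun n => bipCenterRatio r (x n)
  have hs : Tendsto s atTop (𝓝 (1 / r ^ 2)) := (tendsto_bipOutsideRatio_zero hr0).comp hcv
  have ht : Tendsto t atTop (𝓝 1) := (tendsto_bipCenterRatio_zero hr0).comp hcv
  have hs0 : ∀ n, 0 ≤ s n := fun n => (bipOutsideRatio_pos hr0 (hx n)).le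
  have ht0 : ∀ n, 0 ≤ t n := fun n => (bipCenterRatio_pos hr0 (hx n)).le
  have ht1 : ∀ n, t n ≤ 1 := fun n => bipCenterRatio_le_one hr.le (hx n)
  have hE : Tendsto (fun n => s n ^ v n * t n ^ c n) atTop (𝓝 0) :=
    squeeze_zero (fun n => mul_nonneg (pow_nonneg (hs0 n) _) (pow_nonneg (ht0 n) _))
      (fun n => mul_le_of_le_one_right (pow_nonneg (hs0 n) _) (pow_le_one₀ (ht0 n) (ht1 n)))
      (tendsto_pow_of_tendsto_of_lt_one hs0 hs
        (by rw [div_lt_one (by positivity)]; nlinarith) hv)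
  have hlim : Tendsto
      (fun n => ((1 - s n) + x n * (1 - t n)) / ((1 + x n) * (1 - s n ^ v n * t n ^ c n)))
      atTop (𝓝 (((1 - 1 / r ^ 2) + 0 * (1 - 1)) / ((1 + 0) * (1 - 0)))) :=
    ((tendsto_const_nhds.sub hs).add (hcv.mul (tendsto_const_nhds.sub ht))).div
      ((tendsto_const_nhds.add hcv).mul (tendsto_const_nhds.sub hE)) (by norm_num)
  rw [show ((1 - 1 / r ^ 2) + 0 * (1 - 1)) / ((1 + 0) * (1 - 0)) = 1 - 1 / r ^ 2 by ring] at hlim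
  refine hlim.congr' ?_
  filter_upwards [hv.eventually_ge_atTop 1] with n hn
  simp only [bipFixation, x, s, t, pow_one, pow_zero, one_mul, mul_one]
  field_simp

theorem balanced_bipartite_fixation_probability_general
    (α r : ℝ) (hα0 : 0 < α) (hr : 1 < r)
    (ρ : ℕ → ℕ → ℕ → ℝ)
    (hρ : ∀ N : ℕ, 2 ≤ N → IsBipFixationSol r N ⌈(N : ℝ) ^ (1 - α)⌉₊ (ρ N)) :
    Tendsto (fun N : ℕ =>
        ((N : ℝ) * ρ N 1 0 + (⌈(N : ℝ) ^ (1 - α)⌉₊ : ℝ) * ρ N 0 1)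
          / ((N : ℝ) + (⌈(N : ℝ) ^ (1 - α)⌉₊ : ℝ)))
      atTop (𝓝 (1 - 1 / r ^ 2)) := by
  refine (tendsto_bipFixation_uniform hr (v := fun N => N) tendsto_id
    (tendsto_natCeil_rpow_div_self (by linarith : 1 - α < 1))).congr' ?_
  filter_upwards [eventually_ge_atTop 2] with N hN
  have hc : 1 ≤ ⌈(N : ℝ) ^ (1 - α)⌉₊ :=
    Nat.ceil_pos.2 (Real.rpow_pos_of_pos (by positivity) _)
  have hsol := isBipFixationSol_bipFixation (v := N) hr (by omega) hc
  rw [(hρ N hN).unique (by linarith) (by omega) hc hsol (by omega) (by omega),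
    (hρ N hN).unique (by linarith) (by omega) hc hsol (by omega) hc]

/-- Under uniform initialization, the fixation probability of a single advantageous
mutant on the α-Balanced bipartite graph `B_{N,α}` tends to `1 - 1/r²`. -/
theorem balanced_bipartite_fixation_probability
    (α r : ℝ) (hα0 : 0 < α) (hα1 : α ≤ 1) (hr : 1 < r)
    (ρ : ℕ → ℕ → ℕ → ℝ)
    (hρ : ∀ N : ℕ, 2 ≤ N → IsBipFixationSol r N ⌈(N : ℝ) ^ (1 - α)⌉₊ (ρ N)) :
    Tendsto (fun N : ℕ =>
        ((N : ℝ) * ρ N 1 0 + (⌈(N : ℝ) ^ (1 - α)⌉₊ : ℝ) * ρ N 0 1)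
          / ((N : ℝ) + (⌈(N : ℝ) ^ (1 - α)⌉₊ : ℝ)))
      atTop (𝓝 (1 - 1 / r ^ 2)) :=
  balanced_bipartite_fixation_probability_general α r hα0 hr ρ hρ
end

section
/- Fix α ∈ (0,1] and r > 1. For each N ≥ 2 let T_N be the absorption-time solution of the Moran birth–death chain on the α-Balanced bipartite graph B_{N,α}, and define AT(B_{N,α}, r) = (v·T_N(1,0) + c·T_N(0,1))/(v+c), where v = N and c = ⌈N^{1−α}⌉. Then there exist a constant c₁ > 0 and N₀ such that AT(B_{N,α}, r) ≥ c₁·N^{1+α}·log N for all N ≥ N₀. -/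
open Filter Topology

/-!
Compare `T` with `Φ(i, j) = H(v) (1 - r⁻ⁱ uʲ) - H(i)`, where `u = v / (v + (r - 1) c)` and
`H(i) = v² / (r c) · ∑_{m < i} 1 / (v - m)`. For the generator `L = P - 1` of the chain,
`1 - r⁻ⁱ uʲ` is subharmonic (the choice of `u` makes the forward moves outside balance the
backward moves in the center, and `c ≤ v` makes the remaining pair favourable), while
`L H ≤ 1`. Hence `L (Φ - T) ≥ 0` in the interior and `Φ - T ≤ 0` at the two absorbing states,
and the discrete maximum principle, valid because every interior state can move with positive
probability to one with larger `i + j`, gives `Φ ≤ T`. At `(1, 0)` this reads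
`T(1, 0) ≥ (1 - 1/r) v² / (r c) · log v - v / (r c)`, which is of order `N^{1+α} log N` when
`v = N` and `c ≤ 2 N^{1-α}`; the averaged time is at least `T(1, 0) / 2` since `c ≤ v`.
-/

open Finset

lemma Finset.exists_mem_isMaxOn_of_forall_exists_higher {α β : Type*} [LinearOrder β] {S : Finset α}
    (hS : S.Nonempty) (f : α → β) (h : α → ℕ) {B : Set α}
    (hesc : ∀ p ∈ S, p ∉ B → IsMaxOn f S p → ∃ q ∈ S, h p < h q ∧ f p ≤ f q) :
    ∃ p ∈ S, p ∈ B ∧ IsMaxOn f S p := by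
  obtain ⟨p₀, hp₀, hmax₀⟩ := S.exists_max_image f hS
  obtain ⟨p, hp, hhigh⟩ := (S.filter (f p₀ ≤ f ·)).exists_max_image h ⟨p₀, by simp [hp₀]⟩
  rw [mem_filter] at hp
  have hpmax : IsMaxOn f S p := isMaxOn_iff.2 fun q hq => (hmax₀ q hq).trans hp.2
  refine ⟨p, hp.1, by_contra fun hpB => ?_, hpmax⟩
  obtain ⟨q, hq, hpq, hfpq⟩ := hesc p hp.1 hpB hpmax
  exact (hhigh q (mem_filter.2 ⟨hq, hp.2.trans hfpq⟩)).not_gt hpq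

lemma half_le_weighted_average {a b x y : ℝ} (ha : 0 < a) (hb : 0 ≤ b) (hba : b ≤ a)
    (hx : 0 ≤ x) (hy : 0 ≤ y) : x / 2 ≤ (a * x + b * y) / (a + b) := by
  rw [le_div_iff₀ (by positivity)]
  nlinarith [mul_nonneg hb hy, mul_nonneg (sub_nonneg.2 hba) hx]

noncomputable section

namespace BipartiteMoran

section

variable (r : ℝ) (v c : ℕ)

def fitness (i j : ℕ) : ℝ := (v : ℝ) + c + (r - 1) * (i + j)

def pOutUp (i j : ℕ) : ℝ := r * j / fitness r v c i j * (((v : ℝ) - i) / v)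

def pOutDown (i j : ℕ) : ℝ := ((c : ℝ) - j) / fitness r v c i j * ((i : ℝ) / v)

def pCenUp (i j : ℕ) : ℝ := r * i / fitness r v c i j * (((c : ℝ) - j) / c)

def pCenDown (i j : ℕ) : ℝ := ((v : ℝ) - i) / fitness r v c i j * ((j : ℝ) / c)

/-- The generator `P - 1` of the chain, `P` being its one-step transition operator. -/
def generator : (ℕ → ℕ → ℝ) →ₗ[ℝ] (ℕ → ℕ → ℝ) where
  toFun D i j :=
    pOutUp r v c i j * (D (i + 1) j - D i j) + pOutDown r v c i j * (D (i - 1) j - D i j)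
      + pCenUp r v c i j * (D i (j + 1) - D i j) + pCenDown r v c i j * (D i (j - 1) - D i j)
  map_add' D E := by ext i j; simp only [Pi.add_apply]; ring
  map_smul' a D := by ext i j; simp only [Pi.smul_apply, smul_eq_mul, RingHom.id_apply]; ring

def centerRatio : ℝ := v / (v + (r - 1) * c)

def fixationProxy (i j : ℕ) : ℝ := 1 - r⁻¹ ^ i * centerRatio r v c ^ j

def timePotential (i : ℕ) : ℝ := (v : ℝ) ^ 2 / (r * c) * ∑ m ∈ range i, ((v : ℝ) - m)⁻¹

def comparison (i j : ℕ) : ℝ :=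
  timePotential r v c v * fixationProxy r v c i j - timePotential r v c i

end

variable {r : ℝ} {v c i j : ℕ}

lemma generator_apply (D : ℕ → ℕ → ℝ) (i j : ℕ) :
    generator r v c D i j =
      pOutUp r v c i j * (D (i + 1) j - D i j) + pOutDown r v c i j * (D (i - 1) j - D i j)
        + pCenUp r v c i j * (D i (j + 1) - D i j) + pCenDown r v c i j * (D i (j - 1) - D i j) :=
  rfl

lemma generator_eq_neg_one {T : ℕ → ℕ → ℝ} (hT : IsBipAbsorptionSol r v c T)
    (hi : i ≤ v) (hj : j ≤ c) (h₀ : ¬(i = 0 ∧ j = 0)) (h₁ : ¬(i = v ∧ j = c)) :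
    generator r v c T i j = -1 := by
  have h := hT.2.2 i j hi hj h₀ h₁
  simp only at h
  rw [generator_apply]
  simp only [pOutUp, pOutDown, pCenUp, pCenDown, fitness]
  linear_combination -h

lemma fitness_nonneg (hr : 0 ≤ r) (hi : i ≤ v) (hj : j ≤ c) : 0 ≤ fitness r v c i j := by
  have hi' : (i : ℝ) ≤ v := by exact_mod_cast hi
  have hj' : (j : ℝ) ≤ c := by exact_mod_cast hj
  rw [fitness]
  nlinarith [mul_nonneg hr (by positivity : (0 : ℝ) ≤ i + j)]

lemma fitness_pos (hr : 0 < r) (hi : i ≤ v) (hj : j ≤ c) (h₀ : ¬(i = 0 ∧ j = 0)) :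
    0 < fitness r v c i j := by
  have hi' : (i : ℝ) ≤ v := by exact_mod_cast hi
  have hj' : (j : ℝ) ≤ c := by exact_mod_cast hj
  have hij : (0 : ℝ) < i + j := by norm_cast; omega
  rw [fitness]
  nlinarith [mul_pos hr hij]

lemma le_fitness (hr : 1 ≤ r) : (v : ℝ) ≤ fitness r v c i j := by
  rw [fitness]
  nlinarith [mul_nonneg (sub_nonneg.2 hr) (by positivity : (0 : ℝ) ≤ i + j),
    (Nat.cast_nonneg c : (0 : ℝ) ≤ c)]

lemma pOutUp_nonneg (hr : 0 ≤ r) (hi : i ≤ v) (hj : j ≤ c) : 0 ≤ pOutUp r v c i j :=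
  mul_nonneg (div_nonneg (by positivity) (fitness_nonneg hr hi hj))
    (div_nonneg (sub_nonneg.2 (by exact_mod_cast hi)) (Nat.cast_nonneg v))

lemma pOutDown_nonneg (hr : 0 ≤ r) (hi : i ≤ v) (hj : j ≤ c) : 0 ≤ pOutDown r v c i j :=
  mul_nonneg (div_nonneg (sub_nonneg.2 (by exact_mod_cast hj)) (fitness_nonneg hr hi hj))
    (by positivity)

lemma pCenUp_nonneg (hr : 0 ≤ r) (hi : i ≤ v) (hj : j ≤ c) : 0 ≤ pCenUp r v c i j :=
  mul_nonneg (div_nonneg (by positivity) (fitness_nonneg hr hi hj))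
    (div_nonneg (sub_nonneg.2 (by exact_mod_cast hj)) (Nat.cast_nonneg c))

lemma pCenDown_nonneg (hr : 0 ≤ r) (hi : i ≤ v) (hj : j ≤ c) : 0 ≤ pCenDown r v c i j :=
  mul_nonneg (div_nonneg (sub_nonneg.2 (by exact_mod_cast hi)) (fitness_nonneg hr hi hj))
    (by positivity)

lemma pOutUp_pos (hr : 0 < r) (hi : i < v) (hj₀ : 0 < j) (hj : j ≤ c) : 0 < pOutUp r v c i j := by
  have hF := fitness_pos hr hi.le hj (by omega)
  have hi' : (i : ℝ) < v := by exact_mod_cast hi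
  have hv : (0 : ℝ) < v := by linarith [(Nat.cast_nonneg i : (0 : ℝ) ≤ i)]
  exact mul_pos (div_pos (by positivity) hF) (div_pos (by linarith) hv)

lemma pCenUp_pos (hr : 0 < r) (hi₀ : 0 < i) (hi : i ≤ v) (hj : j < c) : 0 < pCenUp r v c i j := by
  have hF := fitness_pos hr hi hj.le (by omega)
  have hj' : (j : ℝ) < c := by exact_mod_cast hj
  have hc : (0 : ℝ) < c := by linarith [(Nat.cast_nonneg j : (0 : ℝ) ≤ j)]
  exact mul_pos (div_pos (by positivity) hF) (div_pos (by linarith) hc)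

lemma exists_succ_ge_of_generator_nonneg (hr : 0 < r) (hv : 0 < v) (hc : 0 < c)
    {D : ℕ → ℕ → ℝ} (hi : i ≤ v) (hj : j ≤ c) (h₀ : ¬(i = 0 ∧ j = 0)) (h₁ : ¬(i = v ∧ j = c))
    (hmax : ∀ i' j', i' ≤ v → j' ≤ c → D i' j' ≤ D i j) (hgen : 0 ≤ generator r v c D i j) :
    (i < v ∧ D i j ≤ D (i + 1) j) ∨ (j < c ∧ D i j ≤ D i (j + 1)) := by
  rw [generator_apply] at hgen
  have hOutUp : pOutUp r v c i j * (D (i + 1) j - D i j) ≤ 0 := by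
    rcases hi.lt_or_eq with hi' | rfl
    · exact mul_nonpos_of_nonneg_of_nonpos (pOutUp_nonneg hr.le hi hj)
        (sub_nonpos.2 (hmax _ _ hi' hj))
    · simp [pOutUp]
  have hOutDown : pOutDown r v c i j * (D (i - 1) j - D i j) ≤ 0 :=
    mul_nonpos_of_nonneg_of_nonpos (pOutDown_nonneg hr.le hi hj)
      (sub_nonpos.2 (hmax _ _ (i.sub_le 1 |>.trans hi) hj))
  have hCenUp : pCenUp r v c i j * (D i (j + 1) - D i j) ≤ 0 := by
    rcases hj.lt_or_eq with hj' | rfl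
    · exact mul_nonpos_of_nonneg_of_nonpos (pCenUp_nonneg hr.le hi hj)
        (sub_nonpos.2 (hmax _ _ hi hj'))
    · simp [pCenUp]
  have hCenDown : pCenDown r v c i j * (D i (j - 1) - D i j) ≤ 0 :=
    mul_nonpos_of_nonneg_of_nonpos (pCenDown_nonneg hr.le hi hj)
      (sub_nonpos.2 (hmax _ _ hi (j.sub_le 1 |>.trans hj)))
  rcases (by omega : (i < v ∧ 0 < j) ∨ (0 < i ∧ j < c)) with ⟨hiv, hj₀⟩ | ⟨hi₀, hjc⟩
  · exact .inl ⟨hiv, sub_nonneg.1 <|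
      nonneg_of_mul_nonneg_right (by linarith) (pOutUp_pos hr hiv hj₀ hj)⟩
  · exact .inr ⟨hjc, sub_nonneg.1 <|
      nonneg_of_mul_nonneg_right (by linarith) (pCenUp_pos hr hi₀ hi hjc)⟩

theorem nonpos_of_generator_nonneg (hr : 0 < r) (hv : 0 < v) (hc : 0 < c) {D : ℕ → ℕ → ℝ}
    (h00 : D 0 0 ≤ 0) (hvc : D v c ≤ 0)
    (hgen : ∀ i j, i ≤ v → j ≤ c → ¬(i = 0 ∧ j = 0) → ¬(i = v ∧ j = c) →
      0 ≤ generator r v c D i j)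
    (hi : i ≤ v) (hj : j ≤ c) : D i j ≤ 0 := by
  have memS {p : ℕ × ℕ} : p ∈ range (v + 1) ×ˢ range (c + 1) ↔ p.1 ≤ v ∧ p.2 ≤ c := by
    simp
  obtain ⟨p, -, hpB, hpmax⟩ := exists_mem_isMaxOn_of_forall_exists_higher
    ⟨(0, 0), memS.2 ⟨v.zero_le, c.zero_le⟩⟩ (fun p => D p.1 p.2) (fun p => p.1 + p.2)
    (B := {(0, 0), (v, c)}) <| by
      rintro ⟨i, j⟩ hp hpB hpmax
      simp only [Set.mem_insert_iff, Set.mem_singleton_iff, Prod.mk.injEq, not_or] at hpB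
      rw [memS] at hp
      have hmax i' j' (hi' : i' ≤ v) (hj' : j' ≤ c) : D i' j' ≤ D i j :=
        isMaxOn_iff.1 hpmax (i', j') (memS.2 ⟨hi', hj'⟩)
      rcases exists_succ_ge_of_generator_nonneg hr hv hc hp.1 hp.2 hpB.1 hpB.2 hmax
        (hgen i j hp.1 hp.2 hpB.1 hpB.2) with ⟨hiv, hD⟩ | ⟨hjc, hD⟩
      · exact ⟨(i + 1, j), memS.2 ⟨hiv, hp.2⟩, by simp, hD⟩
      · exact ⟨(i, j + 1), memS.2 ⟨hp.1, hjc⟩, by simp, hD⟩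
  have hle := isMaxOn_iff.1 hpmax (i, j) (memS.2 ⟨hi, hj⟩)
  rcases hpB with rfl | rfl <;> simp only at hle <;> linarith

lemma centerRatio_pos (hr : 1 ≤ r) (hv : 0 < v) : 0 < centerRatio r v c := by
  have : (0 : ℝ) ≤ (r - 1) * c := mul_nonneg (sub_nonneg.2 hr) (Nat.cast_nonneg c)
  exact div_pos (by exact_mod_cast hv) (by positivity)

lemma centerRatio_le_one (hr : 1 ≤ r) (hv : 0 < v) : centerRatio r v c ≤ 1 := by
  have : (0 : ℝ) ≤ (r - 1) * c := mul_nonneg (sub_nonneg.2 hr) (Nat.cast_nonneg c)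
  exact div_le_one_of_le₀ (by linarith) (by positivity)

lemma generator_fixationProxy_nonneg (hr : 1 ≤ r) (hv : 0 < v) (hc : 0 < c) (hcv : c ≤ v)
    (hi : i ≤ v) (hj : j ≤ c) : 0 ≤ generator r v c (fixationProxy r v c) i j := by
  set u := centerRatio r v c
  set g := r⁻¹ ^ i * u ^ j
  have hr₀ : r ≠ 0 := by positivity
  have hu := centerRatio_pos (c := c) hr hv
  have hv' : (0 : ℝ) < v := by exact_mod_cast hv
  have hc' : (0 : ℝ) < c := by exact_mod_cast hc
  have hOut : pOutUp r v c i j * (fixationProxy r v c (i + 1) j - fixationProxy r v c i j)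
      + pOutDown r v c i j * (fixationProxy r v c (i - 1) j - fixationProxy r v c i j)
      = g * ((1 - r⁻¹) * pOutUp r v c i j - (r - 1) * pOutDown r v c i j) := by
    rcases i with _ | i
    · simp [fixationProxy, pOutDown, g]; ring
    · simp only [fixationProxy, pow_succ, Nat.add_sub_cancel, g]; field_simp; ring
  have hCen : pCenUp r v c i j * (fixationProxy r v c i (j + 1) - fixationProxy r v c i j)
      + pCenDown r v c i j * (fixationProxy r v c i (j - 1) - fixationProxy r v c i j)
      = g * ((1 - u) * pCenUp r v c i j - (u⁻¹ - 1) * pCenDown r v c i j) := by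
    rcases j with _ | j
    · simp [fixationProxy, pCenDown, g]; ring
    · simp only [fixationProxy, pow_succ, Nat.add_sub_cancel, g, u]; field_simp; ring
  -- `u` is chosen to make this hold.
  have hbal : (1 - r⁻¹) * pOutUp r v c i j = (u⁻¹ - 1) * pCenDown r v c i j := by
    simp only [pOutUp, pCenDown, u, centerRatio]
    field_simp
    ring
  have hcmp : (r - 1) * pOutDown r v c i j ≤ (1 - u) * pCenUp r v c i j := by
    have hcv' : (c : ℝ) ≤ v := by exact_mod_cast hcv
    have hw : (0 : ℝ) < v + (r - 1) * c := by nlinarith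
    have hX : 0 ≤ (r - 1) * (((c : ℝ) - j) * i / fitness r v c i j) :=
      mul_nonneg (sub_nonneg.2 hr) (div_nonneg (mul_nonneg (sub_nonneg.2 (by exact_mod_cast hj))
        (Nat.cast_nonneg i)) (fitness_nonneg (by linarith) hi hj))
    calc (r - 1) * pOutDown r v c i j
        = (r - 1) * (((c : ℝ) - j) * i / fitness r v c i j) * (1 / v) := by
          simp only [pOutDown]; ring
      _ ≤ (r - 1) * (((c : ℝ) - j) * i / fitness r v c i j) * (r / (v + (r - 1) * c)) := by
          refine mul_le_mul_of_nonneg_left ?_ hX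
          rw [div_le_div_iff₀ hv' hw]
          nlinarith
      _ = (1 - u) * pCenUp r v c i j := by
          simp only [pCenUp, u, centerRatio]
          field_simp
          ring
  calc 0 ≤ g * ((1 - u) * pCenUp r v c i j - (r - 1) * pOutDown r v c i j) :=
        mul_nonneg (by positivity) (sub_nonneg.2 hcmp)
    _ = generator r v c (fixationProxy r v c) i j := by
        rw [generator_apply]; linear_combination -hOut - hCen - g * hbal

@[simp]
lemma timePotential_zero : timePotential r v c 0 = 0 := by
  simp [timePotential]

lemma timePotential_succ_sub (i : ℕ) :
    timePotential r v c (i + 1) - timePotential r v c i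
      = (v : ℝ) ^ 2 / (r * c) * ((v : ℝ) - i)⁻¹ := by
  simp only [timePotential, sum_range_succ]
  ring

lemma timePotential_self : timePotential r v c v = (v : ℝ) ^ 2 / (r * c) * harmonic v := by
  rw [timePotential, ← sum_range_reflect]
  simp only [harmonic, Rat.cast_sum, Rat.cast_inv, Rat.cast_natCast]
  congr 1
  refine sum_congr rfl fun m hm => ?_
  rw [mem_range] at hm
  rw [Nat.cast_sub (by omega), Nat.cast_sub (by omega)]
  push_cast
  ring_nf

lemma mul_log_le_timePotential_self (hr : 0 ≤ r) (hv : 0 < v) :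
    (v : ℝ) ^ 2 / (r * c) * Real.log v ≤ timePotential r v c v := by
  rw [timePotential_self]
  refine mul_le_mul_of_nonneg_left ?_ (by positivity)
  calc Real.log v ≤ Real.log (v + 1 : ℕ) := Real.log_le_log (by positivity) (by simp)
    _ ≤ harmonic v := log_add_one_le_harmonic v

lemma timePotential_self_nonneg (hr : 0 ≤ r) (hv : 0 < v) : 0 ≤ timePotential r v c v :=
  le_trans (by have := Real.log_natCast_nonneg v; positivity) (mul_log_le_timePotential_self hr hv)

lemma generator_timePotential_le_one (hr : 1 ≤ r) (hc : 0 < c) (hi : i ≤ v) (hj : j ≤ c) :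
    generator r v c (fun i _ => timePotential r v c i) i j ≤ 1 := by
  have hK : 0 ≤ (v : ℝ) ^ 2 / (r * c) := div_nonneg (by positivity) (by positivity)
  have hOutDown :
      pOutDown r v c i j * (timePotential r v c (i - 1) - timePotential r v c i) ≤ 0 := by
    refine mul_nonpos_of_nonneg_of_nonpos (pOutDown_nonneg (by linarith) hi hj) ?_
    rcases i with _ | i
    · simp
    · have : (i : ℝ) < v := by exact_mod_cast hi
      rw [Nat.add_sub_cancel, sub_nonpos, ← sub_nonneg, timePotential_succ_sub]
      exact mul_nonneg hK (inv_nonneg.2 (by linarith))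
  have hOutUp :
      pOutUp r v c i j * (timePotential r v c (i + 1) - timePotential r v c i) ≤ 1 := by
    rw [timePotential_succ_sub]
    rcases hi.lt_or_eq with hi' | rfl
    · have hvi : (i : ℝ) < v := by exact_mod_cast hi'
      have hF : 0 < fitness r v c i j :=
        lt_of_lt_of_le (by linarith [(Nat.cast_nonneg i : (0 : ℝ) ≤ i)]) (le_fitness hr)
      have hr₀ : r ≠ 0 := by positivity
      have hc' : (c : ℝ) ≠ 0 := by positivity
      calc _ = (j / c) * (v / fitness r v c i j) := by
            simp only [pOutUp]
            field_simp [(by linarith : (v : ℝ) - i ≠ 0)]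
        _ ≤ 1 := mul_le_one₀ (div_le_one_of_le₀ (by exact_mod_cast hj) (by positivity))
            (by positivity) (div_le_one_of_le₀ (le_fitness hr) hF.le)
    · simp [pOutUp]
  rw [generator_apply]
  simp only [sub_self, mul_zero, add_zero]
  linarith

theorem comparison_le_absorptionTime (hr : 1 ≤ r) (hv : 0 < v) (hc : 0 < c) (hcv : c ≤ v)
    {T : ℕ → ℕ → ℝ} (hT : IsBipAbsorptionSol r v c T) (hi : i ≤ v) (hj : j ≤ c) :
    comparison r v c i j ≤ T i j := by
  have hH := timePotential_self_nonneg (r := r) (c := c) (by linarith) hv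
  have hu := centerRatio_pos (c := c) hr hv
  have hdecomp : comparison r v c - T = timePotential r v c v • fixationProxy r v c
      - (fun i _ => timePotential r v c i) - T := rfl
  have h := nonpos_of_generator_nonneg (r := r) (D := comparison r v c - T) (by linarith) hv hc
    ?_ ?_ ?_ hi hj
  · simpa [sub_nonpos] using h
  · simp [comparison, fixationProxy, hT.1]
  · have : 0 ≤ timePotential r v c v * (r⁻¹ ^ v * centerRatio r v c ^ c) :=
      mul_nonneg hH (by positivity)
    simp only [Pi.sub_apply, comparison, fixationProxy, hT.2.1]
    linarith
  · intro i j hi hj h₀ h₁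
    rw [hdecomp, map_sub, map_sub, map_smul]
    simp only [Pi.sub_apply, Pi.smul_apply, smul_eq_mul]
    nlinarith [mul_nonneg hH (generator_fixationProxy_nonneg hr hv hc hcv hi hj),
      generator_timePotential_le_one hr hc hi hj, generator_eq_neg_one hT hi hj h₀ h₁]

lemma absorptionTime_one_zero_ge (hr : 1 ≤ r) (hv : 0 < v) (hc : 0 < c) (hcv : c ≤ v)
    {T : ℕ → ℕ → ℝ} (hT : IsBipAbsorptionSol r v c T) :
    (1 - r⁻¹) * ((v : ℝ) ^ 2 / (r * c)) * Real.log v - v / (r * c) ≤ T 1 0 := by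
  have h := comparison_le_absorptionTime hr hv hc hcv hT (show 1 ≤ v from hv) c.zero_le
  have hH₁ : timePotential r v c 1 = v / (r * c) := by
    have : (v : ℝ) ≠ 0 := by positivity
    simp only [timePotential, sum_range_one, Nat.cast_zero, sub_zero]
    field_simp
  have hHv := mul_log_le_timePotential_self (r := r) (c := c) (by linarith) hv
  have hδ : 0 ≤ 1 - r⁻¹ := sub_nonneg.2 (inv_le_one_of_one_le₀ hr)
  simp only [comparison, fixationProxy, pow_one, pow_zero, mul_one, hH₁] at h
  nlinarith [mul_le_mul_of_nonneg_left hHv hδ]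

lemma absorptionTime_zero_one_nonneg (hr : 1 ≤ r) (hv : 0 < v) (hc : 0 < c) (hcv : c ≤ v)
    {T : ℕ → ℕ → ℝ} (hT : IsBipAbsorptionSol r v c T) : 0 ≤ T 0 1 := by
  have h := comparison_le_absorptionTime hr hv hc hcv hT v.zero_le (show 1 ≤ c from hc)
  have := mul_nonneg (timePotential_self_nonneg (r := r) (c := c) (by linarith) hv)
    (sub_nonneg.2 (centerRatio_le_one (c := c) hr hv))
  simp only [comparison, fixationProxy, pow_zero, pow_one, one_mul] at h
  rw [timePotential_zero, sub_zero] at h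
  linarith

end BipartiteMoran

end

lemma ceil_rpow_one_sub_le_two_mul {α : ℝ} (hα : α ≤ 1) {N : ℕ} (hN : 1 ≤ N) :
    (⌈(N : ℝ) ^ (1 - α)⌉₊ : ℝ) ≤ 2 * (N : ℝ) ^ (1 - α) :=
  Nat.ceil_le_two_mul <| by
    linarith [Real.one_le_rpow (by exact_mod_cast hN : (1 : ℝ) ≤ N) (by linarith : 0 ≤ 1 - α)]

lemma ceil_rpow_one_sub_le_self {α : ℝ} (hα : 0 ≤ α) {N : ℕ} (hN : 1 ≤ N) :
    ⌈(N : ℝ) ^ (1 - α)⌉₊ ≤ N :=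
  Nat.ceil_le.2 <| Real.rpow_le_self_of_one_le (by exact_mod_cast hN) (by linarith)

lemma rpow_one_add_mul_log_le {α δ r c : ℝ} {N : ℕ} (hr : 0 < r) (hδ : 0 < δ) (hc : 0 < c)
    (hN : 3 ≤ N) (hNδ : 2 / δ ≤ N) (hcN : c ≤ 2 * (N : ℝ) ^ (1 - α)) :
    δ / r / 4 * (N : ℝ) ^ (1 + α) * Real.log N
      ≤ δ * ((N : ℝ) ^ 2 / (r * c)) * Real.log N - N / (r * c) := by
  have hN₀ : (0 : ℝ) < N := by positivity
  have hlog : 1 ≤ Real.log N := by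
    rw [Real.le_log_iff_exp_le hN₀]
    have hN₃ : (3 : ℝ) ≤ N := by exact_mod_cast hN
    linarith [Real.exp_one_lt_three]
  have hsplit : (N : ℝ) ^ (1 + α) * (N : ℝ) ^ (1 - α) = (N : ℝ) ^ 2 := by
    rw [← Real.rpow_add hN₀, show 1 + α + (1 - α) = (2 : ℕ) by push_cast; ring, Real.rpow_natCast]
  have hpow : (N : ℝ) ^ (1 + α) / 2 ≤ (N : ℝ) ^ 2 / c := by
    rw [div_le_div_iff₀ two_pos hc, ← hsplit]
    nlinarith [Real.rpow_pos_of_pos hN₀ (1 + α)]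
  have hinv : 1 / (N : ℝ) ≤ δ / 2 * Real.log N := by
    rw [div_le_iff₀ hN₀]
    rw [div_le_iff₀ hδ] at hNδ
    nlinarith
  calc δ / r / 4 * (N : ℝ) ^ (1 + α) * Real.log N
      ≤ δ / r / 2 * ((N : ℝ) ^ 2 / c) * Real.log N := by
        have := mul_le_mul_of_nonneg_left hpow (by positivity : 0 ≤ δ / r / 2)
        nlinarith
    _ = δ * ((N : ℝ) ^ 2 / (r * c)) * Real.log N
          - (N : ℝ) ^ 2 / c / r * (δ / 2 * Real.log N) := by
        field_simp
        ring
    _ ≤ δ * ((N : ℝ) ^ 2 / (r * c)) * Real.log N - (N : ℝ) ^ 2 / c / r * (1 / N) := by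
        gcongr
    _ = δ * ((N : ℝ) ^ 2 / (r * c)) * Real.log N - N / (r * c) := by
        field_simp

/-- Lower bound: the absorption time of a single uniformly placed mutant on the
α-Balanced bipartite graph `B_{N,α}` is at least `c₁·N^{1+α}·log N` for large `N`. -/
theorem balanced_bipartite_absorption_time_lower_bound
    (α r : ℝ) (hα0 : 0 < α) (hα1 : α ≤ 1) (hr : 1 < r)
    (T : ℕ → ℕ → ℕ → ℝ)
    (hT : ∀ N : ℕ, 2 ≤ N → IsBipAbsorptionSol r N ⌈(N : ℝ) ^ (1 - α)⌉₊ (T N)) :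
    ∃ c₁ > (0 : ℝ), ∃ N₀ : ℕ, ∀ N : ℕ, N₀ ≤ N →
      ((N : ℝ) * T N 1 0 + (⌈(N : ℝ) ^ (1 - α)⌉₊ : ℝ) * T N 0 1)
          / ((N : ℝ) + (⌈(N : ℝ) ^ (1 - α)⌉₊ : ℝ))
        ≥ c₁ * (N : ℝ) ^ (1 + α) * Real.log N := by
  have hr₀ : 0 < r := by linarith
  have hδ : 0 < 1 - r⁻¹ := sub_pos.2 (inv_lt_one_of_one_lt₀ hr)
  refine ⟨(1 - r⁻¹) / r / 8, by positivity, eventually_atTop.1 ?_⟩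
  filter_upwards [eventually_ge_atTop 3, eventually_ge_atTop ⌈2 / (1 - r⁻¹)⌉₊] with N hN hNδ
  have hN₀ : (0 : ℝ) < N := by positivity
  set c := ⌈(N : ℝ) ^ (1 - α)⌉₊
  have hc : 0 < c := Nat.one_le_ceil_iff.2 (Real.rpow_pos_of_pos hN₀ _)
  have hcN : c ≤ N := ceil_rpow_one_sub_le_self hα0.le (by omega)
  have hsol := hT N (by omega)
  have hT₁₀ := (rpow_one_add_mul_log_le hr₀ hδ (by positivity) hN (Nat.ceil_le.1 hNδ)
    (ceil_rpow_one_sub_le_two_mul hα1 (by omega))).trans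
    (BipartiteMoran.absorptionTime_one_zero_ge hr.le (by omega) hc hcN hsol)
  have hT₀₁ := BipartiteMoran.absorptionTime_zero_one_nonneg hr.le (by omega) hc hcN hsol
  have hbound : 0 ≤ (1 - r⁻¹) / r / 8 * (N : ℝ) ^ (1 + α) * Real.log N := by
    have := Real.log_natCast_nonneg N
    positivity
  calc (1 - r⁻¹) / r / 8 * (N : ℝ) ^ (1 + α) * Real.log N ≤ T N 1 0 / 2 := by linarith
    _ ≤ _ := half_le_weighted_average hN₀ (by positivity) (by exact_mod_cast hcN) (by linarith) hT₀₁
end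

section
/- Fix r > 1 and consider the star graph, i.e., the α-Balanced bipartite chain with α = 1, so v = N and c = 1. For each N ≥ 2 let T_N be the absorption-time solution of the corresponding Moran birth–death chain and define AT = (N·T_N(1,0) + T_N(0,1))/(N+1). Then there exist constants c₁, c₂ > 0 and N₀ such that c₁·N²·log N ≤ AT ≤ c₂·N²·log N for all N ≥ N₀; that is, the absorption time of a single uniformly placed advantageous mutant on the star graph is of order Θ(N² log N). -/
open Filter Topology

/-!
Write `a i = T i 0` and `b i = T i 1`. Eliminating `b` from the equations at `(i, 0)`,
`(i + 1, 0)` and `(i, 1)` leaves the recurrence `a (i + 1) - a i = q (a i - a (i - 1)) - γ i`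
with `q = starRatio r N < 1` and a source `γ i = starSource r N i` of size
`N² / i + N² / (N - i)`. Summed once it reads `a (m + 1) = q a m + a 1 - h m`, where
`h m = γ 1 + ⋯ + γ m`, and the absorbing state `(N, 1)` closes it into
`a 1 = 1 + h (N - 1) - ε a (N - 1)` with `ε = N / (r (1 + r N)) = (1 - q) / (r² - 1)`.
Comparing `a (N - 1)` with the fixed point of the summed recurrence traps `a 1` between
`(1 - 1 / r²) (1 + h (N - 1))` and `1 + h (N - 1)`, and `h (N - 1)` is `N²` times a harmonic
number. Finally `b 0 = (1 + r N) / ((r + N) N) · a 1 ≤ a 1`, so the average over the starting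
vertex lies between `a 1 / 2` and `a 1`.
-/

open Finset

theorem forall_le_of_succ_le_mul_add {a : ℕ → ℝ} {q c B : ℝ} {n : ℕ} (hq : 0 ≤ q)
    (h0 : a 0 ≤ B) (hB : q * B + c ≤ B) (hstep : ∀ m < n, a (m + 1) ≤ q * a m + c) :
    ∀ m ≤ n, a m ≤ B := by
  intro m hm
  induction m with
  | zero => exact h0
  | succ m ih =>
    calc a (m + 1) ≤ q * a m + c := hstep m hm
      _ ≤ q * B + c := by gcongr; exact ih (by omega)
      _ ≤ B := hB

theorem one_le_log_natCast {N : ℕ} (hN : 3 ≤ N) : 1 ≤ Real.log N := by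
  rw [Real.le_log_iff_exp_le (by positivity)]
  have : (3 : ℝ) ≤ N := by exact_mod_cast hN
  linarith [Real.exp_one_lt_d9]

theorem harmonic_cast_eq_sum (n : ℕ) :
    (harmonic n : ℝ) = ∑ k ∈ range n, 1 / ((k : ℝ) + 1) := by
  simp [harmonic]

theorem sum_range_one_div_sub_eq_harmonic (n : ℕ) :
    ∑ k ∈ range n, 1 / ((n : ℝ) - k) = harmonic n := by
  rw [harmonic_cast_eq_sum, ← sum_range_reflect]
  refine sum_congr rfl fun k hk => ?_
  rw [Nat.cast_sub (by simp at hk; omega), Nat.cast_sub (by simp at hk; omega)]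
  ring_nf

/-- The total fitness `F` of a state `(i, j)` of the star chain, as a function of `k = i + j`. -/
noncomputable def starFitness (r : ℝ) (N k : ℕ) : ℝ := N + 1 + (r - 1) * k

noncomputable def starRatio (r : ℝ) (N : ℕ) : ℝ := (r + N) / (r * (1 + r * N))

noncomputable def starSource (r : ℝ) (N k : ℕ) : ℝ :=
  ((r + N) * N * starFitness r N k / k + r * N ^ 2 * starFitness r N (k + 1) / (N - k)
    - r * N * starFitness r N (k + 1) / (k + 1)) / (r * (1 + r * N))

noncomputable def starSourceSum (r : ℝ) (N m : ℕ) : ℝ :=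
  ∑ k ∈ range m, starSource r N (k + 1)

section StarChain

variable {r : ℝ} {N : ℕ} {T : ℕ → ℕ → ℝ}

theorem starFitness_pos (hr : 0 < r) {k : ℕ} (hk : k ≤ N) : 0 < starFitness r N k := by
  have : (k : ℝ) ≤ N := by exact_mod_cast hk
  unfold starFitness
  nlinarith

theorem IsBipAbsorptionSol.star_leaf (hT : IsBipAbsorptionSol r N 1 T) (hr : 0 < r) {i : ℕ}
    (hi : 1 ≤ i) (hiN : i ≤ N) :
    i * (1 + r * N) * T i 0 = N * starFitness r N i + i * T (i - 1) 0 + r * N * i * T i 1 := by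
  have h := hT.2.2 i 0 hiN zero_le_one (by omega) (by simp)
  simp only [Nat.cast_zero, Nat.cast_one, mul_zero, zero_mul, zero_div, mul_one, add_zero,
    zero_add, sub_zero, div_one] at h
  have hF := starFitness_pos hr hiN
  have hN : (N : ℝ) ≠ 0 := by norm_cast; omega
  unfold starFitness at hF ⊢
  field_simp at h
  linear_combination h

theorem IsBipAbsorptionSol.star_center (hT : IsBipAbsorptionSol r N 1 T) (hr : 0 < r) {i : ℕ}
    (hiN : i < N) :
    (r + N) * (N - i) * T i 1
      = N * starFitness r N (i + 1) + r * (N - i) * T (i + 1) 1 + N * (N - i) * T i 0 := by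
  have h := hT.2.2 i 1 hiN.le le_rfl (by simp) (by simp; omega)
  simp only [Nat.cast_one, mul_zero, zero_mul, zero_div, mul_one, add_zero, sub_zero, sub_self,
    div_one] at h
  have hF := starFitness_pos hr (Nat.succ_le_of_lt hiN)
  have hN : (N : ℝ) ≠ 0 := by norm_cast; omega
  unfold starFitness at hF ⊢
  push_cast at hF ⊢
  field_simp at h
  linear_combination h

theorem IsBipAbsorptionSol.star_diff (hT : IsBipAbsorptionSol r N 1 T) (hr : 0 < r) {i : ℕ}
    (hi : 1 ≤ i) (hiN : i < N) :
    T (i + 1) 0 - T i 0 = starRatio r N * (T i 0 - T (i - 1) 0) - starSource r N i := by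
  have hleaf := hT.star_leaf hr hi hiN.le
  have hleaf' := hT.star_leaf hr (Nat.le_add_left 1 i) hiN
  have hcenter := hT.star_center hr hiN
  simp only [Nat.add_sub_cancel] at hleaf'
  have hiN' : (i : ℝ) < N := by exact_mod_cast hiN
  have hNi : (N : ℝ) - i ≠ 0 := by linarith
  unfold starRatio starSource starFitness at *
  push_cast at hleaf' hcenter ⊢
  field_simp
  linear_combination (-(r + (N : ℝ)) * ((i : ℝ) + 1) * ((N : ℝ) - i)) * hleaf
      + (r * (i : ℝ) * ((N : ℝ) - i)) * hleaf'
      - (r * (N : ℝ) * (i : ℝ) * ((i : ℝ) + 1)) * hcenter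

theorem IsBipAbsorptionSol.star_recurrence (hT : IsBipAbsorptionSol r N 1 T) (hr : 0 < r) :
    ∀ m < N, T (m + 1) 0 = starRatio r N * T m 0 + T 1 0 - starSourceSum r N m := by
  intro m hm
  induction m with
  | zero => simp [starSourceSum, hT.1]
  | succ m ih =>
    have hdiff := hT.star_diff hr (Nat.le_add_left 1 m) hm
    rw [Nat.add_sub_cancel] at hdiff
    rw [starSourceSum, sum_range_succ, ← starSourceSum]
    linear_combination hdiff + ih (by omega)

theorem IsBipAbsorptionSol.star_boundary (hT : IsBipAbsorptionSol r N 1 T) (hr : 0 < r)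
    (hN : 0 < N) :
    T 1 0 = 1 + starSourceSum r N (N - 1) - N / (r * (1 + r * N)) * T (N - 1) 0 := by
  have hleaf := hT.star_leaf hr hN le_rfl
  have hrec := hT.star_recurrence hr (N - 1) (by omega)
  rw [Nat.sub_add_cancel hN] at hrec
  rw [hT.2.1] at hleaf
  have hN' : (N : ℝ) ≠ 0 := by positivity
  have hleaf' : (1 + r * N) * T N 0 = (1 + r * N) + T (N - 1) 0 := by
    apply mul_left_cancel₀ hN'
    unfold starFitness at hleaf
    linear_combination hleaf
  unfold starRatio at hrec
  field_simp at hrec ⊢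
  linear_combination r * hleaf' - hrec

theorem IsBipAbsorptionSol.star_center_zero (hT : IsBipAbsorptionSol r N 1 T) (hr : 0 < r)
    (hN : 0 < N) : (r + N) * N * T 0 1 = (1 + r * N) * T 1 0 := by
  have hleaf := hT.star_leaf hr le_rfl hN
  have hcenter := hT.star_center hr hN
  rw [hT.1] at hleaf hcenter
  push_cast at hleaf hcenter
  linear_combination hcenter - hleaf

end StarChain

section StarSource

variable {r : ℝ} {N : ℕ}

theorem le_starFitness (hr : 1 ≤ r) (k : ℕ) : (N : ℝ) ≤ starFitness r N k := by
  unfold starFitness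
  have : 0 ≤ (r - 1) * k := by have := sub_nonneg.2 hr; positivity
  linarith

theorem starFitness_le (hr : 1 ≤ r) {k : ℕ} (hk : k ≤ N) :
    starFitness r N k ≤ 1 + r * N := by
  have : (k : ℝ) ≤ N := by exact_mod_cast hk
  unfold starFitness
  nlinarith

theorem starFitness_succ_div_le {k : ℕ} (hk : 1 ≤ k) :
    starFitness r N (k + 1) / (k + 1) ≤ starFitness r N k / k := by
  have hk' : (0 : ℝ) < k := by exact_mod_cast hk
  rw [div_le_div_iff₀ (by positivity) hk']
  unfold starFitness
  push_cast
  nlinarith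

theorem starSource_ge (hr : 1 ≤ r) {k : ℕ} (hk : 1 ≤ k) (hkN : k < N) :
    (N : ℝ) ^ 2 / (2 * r ^ 2 * k) ≤ starSource r N k := by
  have hr0 : 0 < r := by linarith
  have hNk : (0 : ℝ) < N - k := sub_pos.2 (by exact_mod_cast hkN)
  have hrN : 1 ≤ r * N := by
    have : (1 : ℝ) ≤ N := by exact_mod_cast (hk.trans hkN.le)
    nlinarith
  have hF := le_starFitness (N := N) hr k
  have hF' := starFitness_pos hr0 (Nat.succ_le_of_lt hkN)
  have hdecr : r * N * starFitness r N (k + 1) / (k + 1) ≤ r * N * starFitness r N k / k := by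
    simp only [mul_div_assoc]
    exact mul_le_mul_of_nonneg_left (starFitness_succ_div_le hk) (by positivity)
  have hcenter : 0 ≤ r * N ^ 2 * starFitness r N (k + 1) / (N - k) := by positivity
  have hleaf : (N : ℝ) ^ 3 / k
      ≤ (r + N) * N * starFitness r N k / k - r * N * starFitness r N k / k := by
    rw [← sub_div]
    gcongr
    nlinarith
  calc (N : ℝ) ^ 2 / (2 * r ^ 2 * k) ≤ N ^ 3 / k / (r * (1 + r * N)) := by
        rw [div_div, div_le_div_iff₀ (by positivity) (by positivity)]
        have : (0 : ℝ) ≤ N ^ 2 * k * r := by positivity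
        nlinarith
    _ ≤ starSource r N k := by
        unfold starSource
        gcongr
        linarith

theorem starSource_le (hr : 1 ≤ r) {k : ℕ} (hk : 1 ≤ k) (hkN : k < N) :
    starSource r N k ≤ 2 * N ^ 2 / k + N ^ 2 / (N - k) := by
  have hr0 : 0 < r := by linarith
  have hNk : (0 : ℝ) < N - k := sub_pos.2 (by exact_mod_cast hkN)
  have hN : (1 : ℝ) ≤ N := by exact_mod_cast (hk.trans hkN.le)
  have hF'0 := starFitness_pos hr0 (Nat.succ_le_of_lt hkN)
  have hleaf : (r + N) * N * starFitness r N k / k ≤ (r + N) * N * (1 + r * N) / k := by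
    gcongr
    exact starFitness_le hr hkN.le
  have hcenter : r * N ^ 2 * starFitness r N (k + 1) / (N - k)
      ≤ r * N ^ 2 * (1 + r * N) / (N - k) := by
    gcongr
    exact starFitness_le hr (by omega)
  calc starSource r N k
      ≤ ((r + N) * N * (1 + r * N) / k + r * N ^ 2 * (1 + r * N) / (N - k))
          / (r * (1 + r * N)) := by
        unfold starSource
        gcongr
        have : 0 ≤ r * N * starFitness r N (k + 1) / (k + 1) := by positivity
        linarith
    _ = (r + N) * N / r / k + N ^ 2 / (N - k) := by
        field_simp
    _ ≤ 2 * N ^ 2 / k + N ^ 2 / (N - k) := by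
        gcongr
        rw [div_le_iff₀ hr0]
        have : r * N ≤ r * N * N := le_mul_of_one_le_right (by positivity) hN
        have : (N : ℝ) * N ≤ r * N * N := by nlinarith
        nlinarith

theorem starSourceSum_ge (hr : 1 ≤ r) (hN : 0 < N) :
    (N : ℝ) ^ 2 / (2 * r ^ 2) * Real.log N ≤ starSourceSum r N (N - 1) := by
  obtain ⟨n, rfl⟩ : ∃ n, N = n + 1 := ⟨N - 1, by omega⟩
  rw [Nat.add_sub_cancel, starSourceSum]
  calc ((n + 1 : ℕ) : ℝ) ^ 2 / (2 * r ^ 2) * Real.log (n + 1 : ℕ)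
      ≤ ((n + 1 : ℕ) : ℝ) ^ 2 / (2 * r ^ 2) * harmonic n := by
        gcongr
        exact log_add_one_le_harmonic n
    _ = ∑ k ∈ range n, ((n + 1 : ℕ) : ℝ) ^ 2 / (2 * r ^ 2 * (k + 1 : ℕ)) := by
        rw [harmonic_cast_eq_sum, mul_sum]
        refine sum_congr rfl fun k _ => ?_
        push_cast
        field_simp
    _ ≤ ∑ k ∈ range n, starSource r (n + 1) (k + 1) :=
        sum_le_sum fun k hk =>
          starSource_ge (N := n + 1) hr (Nat.le_add_left 1 k) (by simp at hk; omega)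

theorem starSourceSum_le (hr : 1 ≤ r) (hN : 0 < N) :
    starSourceSum r N (N - 1) ≤ 3 * N ^ 2 * (1 + Real.log N) := by
  obtain ⟨n, rfl⟩ : ∃ n, N = n + 1 := ⟨N - 1, by omega⟩
  rw [Nat.add_sub_cancel, starSourceSum]
  have hharmonic : (harmonic n : ℝ) ≤ 1 + Real.log (n + 1 : ℕ) := by
    have := harmonic_le_one_add_log (n + 1)
    rw [harmonic_succ] at this
    push_cast at this ⊢
    have : (0 : ℝ) ≤ ((n : ℝ) + 1)⁻¹ := by positivity
    linarith
  calc ∑ k ∈ range n, starSource r (n + 1) (k + 1)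
      ≤ ∑ k ∈ range n, (2 * ((n + 1 : ℕ) : ℝ) ^ 2 / ((k : ℝ) + 1)
          + ((n + 1 : ℕ) : ℝ) ^ 2 / ((n : ℝ) - k)) := by
        refine sum_le_sum fun k hk => ?_
        have := starSource_le (N := n + 1) hr (Nat.le_add_left 1 k) (by simp at hk; omega)
        push_cast at this ⊢
        rwa [show (n : ℝ) + 1 - (k + 1) = n - k by ring] at this
    _ = 2 * ((n + 1 : ℕ) : ℝ) ^ 2 * ∑ k ∈ range n, 1 / ((k : ℝ) + 1)
          + ((n + 1 : ℕ) : ℝ) ^ 2 * ∑ k ∈ range n, 1 / ((n : ℝ) - k) := by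
        rw [sum_add_distrib, mul_sum, mul_sum]
        congr 1 <;> exact sum_congr rfl fun k _ => by ring
    _ = 3 * ((n + 1 : ℕ) : ℝ) ^ 2 * harmonic n := by
        rw [sum_range_one_div_sub_eq_harmonic, harmonic_cast_eq_sum]
        ring
    _ ≤ 3 * ((n + 1 : ℕ) : ℝ) ^ 2 * (1 + Real.log (n + 1 : ℕ)) := by gcongr

theorem starSourceSum_mono (hr : 1 ≤ r) {m m' : ℕ} (h : m ≤ m') (hm' : m' < N) :
    starSourceSum r N m ≤ starSourceSum r N m' := by
  refine sum_le_sum_of_subset_of_nonneg (range_subset_range.2 h) fun k hk _ => ?_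
  have hkN : k + 1 < N := by simp at hk; omega
  exact le_trans (by positivity) (starSource_ge hr (Nat.le_add_left 1 k) hkN)

theorem starSourceSum_nonneg (hr : 1 ≤ r) {m : ℕ} (hm : m < N) : 0 ≤ starSourceSum r N m := by
  simpa [starSourceSum] using starSourceSum_mono hr (Nat.zero_le m) hm

theorem starRatio_nonneg (hr : 0 < r) : 0 ≤ starRatio r N := by
  unfold starRatio
  positivity

theorem one_sub_starRatio (hr : 0 < r) :
    1 - starRatio r N = N * (r ^ 2 - 1) / (r * (1 + r * N)) := by
  unfold starRatio
  field_simp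
  ring

theorem starRatio_lt_one (hr : 1 < r) (hN : 0 < N) : starRatio r N < 1 := by
  have h := one_sub_starRatio (N := N) (by linarith : 0 < r)
  have : 0 < N * (r ^ 2 - 1) / (r * (1 + r * N)) := by
    have : 0 < r ^ 2 - 1 := by nlinarith
    have : (0 : ℝ) < r := by linarith
    positivity
  linarith

end StarSource

section StarBounds

variable {r : ℝ} {N : ℕ} {T : ℕ → ℕ → ℝ}

theorem IsBipAbsorptionSol.star_nonneg_of_sourceSum_le (hT : IsBipAbsorptionSol r N 1 T)
    (hr : 1 ≤ r) (h : starSourceSum r N (N - 1) ≤ T 1 0) : ∀ m ≤ N - 1, 0 ≤ T m 0 := by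
  have hr0 : 0 < r := by linarith
  intro m hm
  refine neg_nonpos.1 <| forall_le_of_succ_le_mul_add (a := fun m => -T m 0) (c := 0)
    (starRatio_nonneg (N := N) hr0) (by simp [hT.1]) (by simp) (fun m hm => ?_) m hm
  have := starSourceSum_mono (N := N) hr hm.le (by omega)
  have := hT.star_recurrence hr0 m (by omega)
  linarith

theorem IsBipAbsorptionSol.star_le_max_div (hT : IsBipAbsorptionSol r N 1 T) (hr : 1 < r)
    (hN : 0 < N) : ∀ m ≤ N - 1, T m 0 ≤ max (T 1 0) 0 / (1 - starRatio r N) := by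
  have hr0 : 0 < r := by linarith
  have hq : 0 < 1 - starRatio r N := sub_pos.2 (starRatio_lt_one hr hN)
  have hM := le_max_right (T 1 0) 0
  refine forall_le_of_succ_le_mul_add (a := fun m => T m 0) (c := max (T 1 0) 0)
    (starRatio_nonneg (N := N) hr0) (by simp only [hT.1]; positivity) ?_ (fun m hm => ?_)
  · apply le_of_eq
    field_simp
    ring
  · have := starSourceSum_nonneg (N := N) hr.le (m := m) (by omega)
    have := hT.star_recurrence hr0 m (by omega)
    have := le_max_left (T 1 0) 0
    linarith

theorem IsBipAbsorptionSol.star_T10_le (hT : IsBipAbsorptionSol r N 1 T) (hr : 1 ≤ r)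
    (hN : 0 < N) : T 1 0 ≤ 1 + starSourceSum r N (N - 1) := by
  by_cases hsmall : T 1 0 ≤ starSourceSum r N (N - 1)
  · linarith
  have hnonneg := hT.star_nonneg_of_sourceSum_le hr (le_of_not_ge hsmall) (N - 1) le_rfl
  have hr0 : 0 < r := by linarith
  have := hT.star_boundary hr0 hN
  have : 0 ≤ N / (r * (1 + r * N)) * T (N - 1) 0 := by positivity
  linarith

theorem IsBipAbsorptionSol.star_T10_ge (hT : IsBipAbsorptionSol r N 1 T) (hr : 1 < r)
    (hN : 0 < N) : (1 - 1 / r ^ 2) * (1 + starSourceSum r N (N - 1)) ≤ T 1 0 := by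
  have hr0 : 0 < r := by linarith
  have hr2 : 0 < r ^ 2 - 1 := by nlinarith
  set M := max (T 1 0) 0
  have hdamp : N / (r * (1 + r * N)) * (M / (1 - starRatio r N)) = M / (r ^ 2 - 1) := by
    rw [one_sub_starRatio hr0]
    have : (N : ℝ) ≠ 0 := by positivity
    field_simp
  have hbound : 1 + starSourceSum r N (N - 1) - M / (r ^ 2 - 1) ≤ T 1 0 := by
    have := hT.star_boundary hr0 hN
    have : N / (r * (1 + r * N)) * T (N - 1) 0
        ≤ N / (r * (1 + r * N)) * (M / (1 - starRatio r N)) := by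
      gcongr
      exact hT.star_le_max_div hr hN (N - 1) le_rfl
    linarith
  have hsum := starSourceSum_nonneg (N := N) hr.le (m := N - 1) (by omega)
  have hpos : 0 ≤ T 1 0 := by
    by_contra! hneg
    simp only [M, max_eq_right hneg.le, zero_div, sub_zero] at hbound
    linarith
  simp only [M, max_eq_left hpos] at hbound
  have hcleared : (1 + starSourceSum r N (N - 1)) * (r ^ 2 - 1) ≤ T 1 0 * r ^ 2 := by
    have := mul_le_mul_of_nonneg_right hbound hr2.le
    rw [sub_mul, div_mul_cancel₀ _ hr2.ne'] at this
    linarith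
  rw [one_sub_div (by positivity), div_mul_eq_mul_div, div_le_iff₀ (by positivity)]
  linarith

theorem IsBipAbsorptionSol.star_average_mem (hT : IsBipAbsorptionSol r N 1 T) (hr : 0 < r)
    (hN : 0 < N) (hpos : 0 ≤ T 1 0) :
    T 1 0 / 2 ≤ (N * T 1 0 + T 0 1) / (N + 1) ∧ (N * T 1 0 + T 0 1) / (N + 1) ≤ T 1 0 := by
  have hcenter := hT.star_center_zero hr hN
  have hN1 : (1 : ℝ) ≤ N := by exact_mod_cast hN
  have hden : 0 < (r + N) * N := by positivity
  have h01 : 0 ≤ T 0 1 := by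
    have : 0 ≤ (r + N) * N * T 0 1 := by rw [hcenter]; positivity
    exact nonneg_of_mul_nonneg_right (by linarith) hden
  have h01' : T 0 1 ≤ T 1 0 := by
    refine le_of_mul_le_mul_left ?_ hden
    rw [hcenter]
    exact mul_le_mul_of_nonneg_right (by nlinarith) hpos
  constructor
  · rw [div_le_div_iff₀ two_pos (by positivity)]
    nlinarith
  · rw [div_le_iff₀ (by positivity)]
    linarith

end StarBounds

/-- The absorption time of a single uniformly placed advantageous mutant on the
star graph (`v = N` leaves, `c = 1` center) is of order `Θ(N² log N)`. -/
theorem star_absorption_time_order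
    (r : ℝ) (hr : 1 < r)
    (T : ℕ → ℕ → ℕ → ℝ)
    (hT : ∀ N : ℕ, 2 ≤ N → IsBipAbsorptionSol r N 1 (T N)) :
    ∃ c₁ > (0 : ℝ), ∃ c₂ > (0 : ℝ), ∃ N₀ : ℕ, ∀ N : ℕ, N₀ ≤ N →
      c₁ * (N : ℝ) ^ 2 * Real.log N
        ≤ ((N : ℝ) * T N 1 0 + T N 0 1) / ((N : ℝ) + 1) ∧
      ((N : ℝ) * T N 1 0 + T N 0 1) / ((N : ℝ) + 1)
        ≤ c₂ * (N : ℝ) ^ 2 * Real.log N := by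
  have hr0 : 0 < r := by linarith
  have hfactor : 0 < 1 - 1 / r ^ 2 := by
    rw [sub_pos, div_lt_one (by positivity)]
    nlinarith
  refine ⟨(1 - 1 / r ^ 2) / (4 * r ^ 2), by positivity, 7, by norm_num, 3, fun N hN => ?_⟩
  have hN0 : 0 < N := by omega
  have hsol := hT N (by omega)
  have hlog := one_le_log_natCast hN
  have hsum_ge := starSourceSum_ge hr.le hN0
  have hsum_le := starSourceSum_le hr.le hN0
  have hT10_ge := hsol.star_T10_ge hr hN0
  have hT10_le := hsol.star_T10_le hr.le hN0
  have hsum_nonneg := starSourceSum_nonneg (N := N) hr.le (m := N - 1) (by omega)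
  obtain ⟨havg_ge, havg_le⟩ :=
    hsol.star_average_mem hr0 hN0 (le_trans (by positivity) hT10_ge)
  have hN2log : 1 ≤ (N : ℝ) ^ 2 * Real.log N := by
    have : (1 : ℝ) ≤ N ^ 2 := one_le_pow₀ (by exact_mod_cast hN0)
    nlinarith
  constructor
  · calc (1 - 1 / r ^ 2) / (4 * r ^ 2) * N ^ 2 * Real.log N
        = (1 - 1 / r ^ 2) * (N ^ 2 / (2 * r ^ 2) * Real.log N) / 2 := by ring
      _ ≤ (1 - 1 / r ^ 2) * (1 + starSourceSum r N (N - 1)) / 2 := by gcongr; linarith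
      _ ≤ _ := by linarith
  · calc ((N : ℝ) * T N 1 0 + T N 0 1) / ((N : ℝ) + 1) ≤ T N 1 0 := havg_le
      _ ≤ 1 + 3 * N ^ 2 * (1 + Real.log N) := by linarith
      _ ≤ 7 * N ^ 2 * Real.log N := by nlinarith
end

section
/- Fix α ∈ (0,1) and r > 1. For each N ≥ 2 let ρ_N be the fixation-probability solution of the Moran birth–death chain on the α-Weighted bipartite graph W_{N,α}, and define the temperature-initialized fixation probability fp_T(W_{N,α}, r) = ((c + v·(1−q))·ρ_N(1,0) + v·q·ρ_N(0,1))/(v+c), where v = N, c = ⌈N^{1−α}⌉ and q = N^{−α/2}. Then fp_T(W_{N,α}, r) converges to 1 − 1/r² as N → ∞. -/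
open Filter Topology

/-- `ρ` is the fixation-probability solution of the Moran birth–death chain on the
weighted complete bipartite graph with `v` vertices in the larger ('outside') part,
`c` vertices in the smaller part (the 'center'), and self-loops on the outside
vertices such that an offspring of an outside vertex migrates to the center with
probability `q`; mutants have fitness `r`.
The state `(i, j)` has `i` mutants outside and `j` mutants in the center. -/
def IsWBipFixationSol (r q : ℝ) (v c : ℕ) (ρ : ℕ → ℕ → ℝ) : Prop :=
  ρ 0 0 = 0 ∧ ρ v c = 1 ∧
  ∀ i j : ℕ, i ≤ v → j ≤ c → ¬(i = 0 ∧ j = 0) → ¬(i = v ∧ j = c) →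
    let F : ℝ := (v : ℝ) + c + (r - 1) * (i + j)
    ρ i j =
        (r * j / F) * (((v : ℝ) - i) / v) * ρ (i + 1) j
      + (((c : ℝ) - j) / F) * ((i : ℝ) / v) * ρ (i - 1) j
      + (r * i / F) * q * (((c : ℝ) - j) / c) * ρ i (j + 1)
      + (((v : ℝ) - i) / F) * q * ((j : ℝ) / c) * ρ i (j - 1)
      + (1 - (r * j / F) * (((v : ℝ) - i) / v) - (((c : ℝ) - j) / F) * ((i : ℝ) / v)
           - (r * i / F) * q * (((c : ℝ) - j) / c)
           - (((v : ℝ) - i) / F) * q * ((j : ℝ) / c)) * ρ i j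

/-- `T` is the absorption-time solution of the Moran birth–death chain on the
weighted complete bipartite graph with parts of sizes `v` (outside, with self-loops
of migration probability `q`) and `c` (center). -/
def IsWBipAbsorptionSol (r q : ℝ) (v c : ℕ) (T : ℕ → ℕ → ℝ) : Prop :=
  T 0 0 = 0 ∧ T v c = 0 ∧
  ∀ i j : ℕ, i ≤ v → j ≤ c → ¬(i = 0 ∧ j = 0) → ¬(i = v ∧ j = c) →
    let F : ℝ := (v : ℝ) + c + (r - 1) * (i + j)
    T i j = 1 +
        (r * j / F) * (((v : ℝ) - i) / v) * T (i + 1) j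
      + (((c : ℝ) - j) / F) * ((i : ℝ) / v) * T (i - 1) j
      + (r * i / F) * q * (((c : ℝ) - j) / c) * T i (j + 1)
      + (((v : ℝ) - i) / F) * q * ((j : ℝ) / c) * T i (j - 1)
      + (1 - (r * j / F) * (((v : ℝ) - i) / v) - (((c : ℝ) - j) / F) * ((i : ℝ) / v)
           - (r * i / F) * q * (((c : ℝ) - j) / c)
           - (((v : ℝ) - i) / F) * q * ((j : ℝ) / c)) * T i j

/-!
The fixation probability is the harmonic function of the chain with boundary values `0` at
`(0,0)` and `1` at `(v,c)`. A maximum principle (every interior maximizer has a maximizing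
neighbour closer to `(0,0)`) makes it unique. Writing `u = c/(qv)`, a product `x^i y^j` is
harmonic as soon as `x, y` balance the outside and the center flows separately, which gives
`ρ(i,j) = (1 - x^i y^j)/(1 - x^v y^c)`. As `N → ∞` we have `u → 0`, hence `x → 1/r²`, `y → 1`
and `x^N → 0`; so `ρ(1,0) → 1 - 1/r²` and `ρ(0,1) → 0`, while the temperature weight
`vq/(v+c) ≤ q` of the center vanishes.
-/

lemma le_of_forall_max_descent {σ β : Type*} [LinearOrder β] (s : Finset σ) (h : σ → β)
    (rank : σ → ℕ) (b : β)
    (hdesc : ∀ x ∈ s, (∀ y ∈ s, h y ≤ h x) → b < h x →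
      ∃ y ∈ s, rank y < rank x ∧ h y = h x) :
    ∀ x ∈ s, h x ≤ b := by
  intro x hx
  by_contra! hbx
  obtain ⟨m, hm, hmax⟩ := s.exists_max_image h ⟨x, hx⟩
  obtain ⟨z, hz, hzmin⟩ :=
    (s.filter (h · = h m)).exists_min_image rank ⟨m, Finset.mem_filter.2 ⟨hm, rfl⟩⟩
  rw [Finset.mem_filter] at hz
  obtain ⟨y, hy, hlt, hyz⟩ := hdesc z hz.1 (fun y hy => hz.2 ▸ hmax y hy)
    (hbx.trans_le (hz.2 ▸ hmax x hx))
  exact (hzmin y (Finset.mem_filter.2 ⟨hy, hyz.trans hz.2⟩)).not_gt hlt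

section Generator

variable {r q : ℝ} {v c : ℕ}

/-- `F(i,j)` times the expected one-step increment of `f` from the state `(i,j)`. -/
noncomputable def wbipGenerator (r q : ℝ) (v c : ℕ) (f : ℕ → ℕ → ℝ) (i j : ℕ) : ℝ :=
  r * j * ((v : ℝ) - i) / v * (f (i + 1) j - f i j)
    + ((c : ℝ) - j) * i / v * (f (i - 1) j - f i j)
    + r * i * q * ((c : ℝ) - j) / c * (f i (j + 1) - f i j)
    + ((v : ℝ) - i) * q * j / c * (f i (j - 1) - f i j)

lemma wbipGenerator_sub (f g : ℕ → ℕ → ℝ) (i j : ℕ) :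
    wbipGenerator r q v c (fun i j => f i j - g i j) i j =
      wbipGenerator r q v c f i j - wbipGenerator r q v c g i j := by
  simp only [wbipGenerator]
  ring

lemma wbipGenerator_const_sub_div (a b : ℝ) (f : ℕ → ℕ → ℝ) (i j : ℕ) :
    wbipGenerator r q v c (fun i j => (a - f i j) / b) i j =
      -wbipGenerator r q v c f i j / b := by
  simp only [wbipGenerator]
  ring

theorem isWBipFixationSol_iff (hr : 0 < r) {ρ : ℕ → ℕ → ℝ} :
    IsWBipFixationSol r q v c ρ ↔ ρ 0 0 = 0 ∧ ρ v c = 1 ∧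
      ∀ i j : ℕ, i ≤ v → j ≤ c → ¬(i = 0 ∧ j = 0) → ¬(i = v ∧ j = c) →
        wbipGenerator r q v c ρ i j = 0 := by
  refine and_congr_right fun _ => and_congr_right fun _ =>
    forall₄_congr fun i j hi hj => imp_congr_right fun h00 => imp_congr_right fun _ => ?_
  dsimp only
  set F : ℝ := (v : ℝ) + c + (r - 1) * (i + j)
  have hF : 0 < F := by
    have hij : (1 : ℝ) ≤ i + j := by exact_mod_cast (show 1 ≤ i + j by omega)
    have hi' : (i : ℝ) ≤ v := by exact_mod_cast hi
    have hj' : (j : ℝ) ≤ c := by exact_mod_cast hj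
    nlinarith
  rw [← sub_eq_zero, ← mul_eq_zero_iff_right hF.ne']
  convert neg_eq_zero using 2
  simp only [wbipGenerator]
  field_simp
  ring

lemma wbipGenerator_max_descent (hr : 0 < r) (hq : 0 < q) {h : ℕ → ℕ → ℝ} {i j : ℕ}
    (hi : i ≤ v) (hj : j ≤ c) (hmax : ∀ i' ≤ v, ∀ j' ≤ c, h i' j' ≤ h i j)
    (hgen : wbipGenerator r q v c h i j = 0) :
    (0 < i → j < c → h (i - 1) j = h i j) ∧ (0 < j → i < v → h i (j - 1) = h i j) := by
  have hvi : (0 : ℝ) ≤ v - i := sub_nonneg.2 (by exact_mod_cast hi)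
  have hcj : (0 : ℝ) ≤ c - j := sub_nonneg.2 (by exact_mod_cast hj)
  -- all four terms of the generator are `≤ 0`, so each vanishes
  have t₁ : r * j * ((v : ℝ) - i) / v * (h (i + 1) j - h i j) ≤ 0 := by
    rcases hi.lt_or_eq with hlt | rfl
    · exact mul_nonpos_of_nonneg_of_nonpos (by positivity)
        (sub_nonpos.2 (hmax _ hlt _ hj))
    · simp
  have t₂ : ((c : ℝ) - j) * i / v * (h (i - 1) j - h i j) ≤ 0 :=
    mul_nonpos_of_nonneg_of_nonpos (by positivity) (sub_nonpos.2 (hmax _ (by omega) _ hj))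
  have t₃ : r * i * q * ((c : ℝ) - j) / c * (h i (j + 1) - h i j) ≤ 0 := by
    rcases hj.lt_or_eq with hlt | rfl
    · exact mul_nonpos_of_nonneg_of_nonpos (by positivity) (sub_nonpos.2 (hmax _ hi _ hlt))
    · simp
  have t₄ : ((v : ℝ) - i) * q * j / c * (h i (j - 1) - h i j) ≤ 0 :=
    mul_nonpos_of_nonneg_of_nonpos (by positivity) (sub_nonpos.2 (hmax _ hi _ (by omega)))
  unfold wbipGenerator at hgen
  constructor
  · intro hi0 hjc
    have hpos : 0 < ((c : ℝ) - j) * i / v := by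
      have : (0 : ℝ) < c - j := sub_pos.2 (by exact_mod_cast hjc)
      have : (0 : ℝ) < v := by exact_mod_cast hi0.trans_le hi
      positivity
    have := (mul_eq_zero.1 (show ((c : ℝ) - j) * i / v * (h (i - 1) j - h i j) = 0 by linarith))
    exact sub_eq_zero.1 (this.resolve_left hpos.ne')
  · intro hj0 hiv
    have hpos : 0 < ((v : ℝ) - i) * q * j / c := by
      have : (0 : ℝ) < v - i := sub_pos.2 (by exact_mod_cast hiv)
      have : (0 : ℝ) < c := by exact_mod_cast hj0.trans_le hj
      positivity
    have := (mul_eq_zero.1 (show ((v : ℝ) - i) * q * j / c * (h i (j - 1) - h i j) = 0 by linarith))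
    exact sub_eq_zero.1 (this.resolve_left hpos.ne')

theorem IsWBipFixationSol.le (hr : 0 < r) (hq : 0 < q) (hv : 1 ≤ v) (hc : 1 ≤ c)
    {ρ₁ ρ₂ : ℕ → ℕ → ℝ} (h₁ : IsWBipFixationSol r q v c ρ₁) (h₂ : IsWBipFixationSol r q v c ρ₂)
    {i j : ℕ} (hi : i ≤ v) (hj : j ≤ c) : ρ₁ i j ≤ ρ₂ i j := by
  obtain ⟨h₁0, h₁1, h₁gen⟩ := (isWBipFixationSol_iff hr).1 h₁
  obtain ⟨h₂0, h₂1, h₂gen⟩ := (isWBipFixationSol_iff hr).1 h₂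
  have hbox {a b : ℕ} : (a, b) ∈ Finset.Iic v ×ˢ Finset.Iic c ↔ a ≤ v ∧ b ≤ c := by simp
  suffices ∀ p ∈ Finset.Iic v ×ˢ Finset.Iic c, ρ₁ p.1 p.2 - ρ₂ p.1 p.2 ≤ 0 from
    sub_nonpos.1 (this (i, j) (hbox.2 ⟨hi, hj⟩))
  refine le_of_forall_max_descent _ _ (fun p => p.1 + p.2) 0 ?_
  rintro ⟨i, j⟩ hij hmax hpos
  rw [hbox] at hij
  have h00 : ¬(i = 0 ∧ j = 0) := by
    rintro ⟨rfl, rfl⟩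
    simp [h₁0, h₂0] at hpos
  have hvc : ¬(i = v ∧ j = c) := by
    rintro ⟨rfl, rfl⟩
    simp [h₁1, h₂1] at hpos
  obtain ⟨hleft, hdown⟩ := wbipGenerator_max_descent (h := fun i j => ρ₁ i j - ρ₂ i j) hr hq
    hij.1 hij.2 (fun i' hi' j' hj' => hmax (i', j') (hbox.2 ⟨hi', hj'⟩))
    (by rw [wbipGenerator_sub, h₁gen i j hij.1 hij.2 h00 hvc, h₂gen i j hij.1 hij.2 h00 hvc,
      sub_zero])
  by_cases hcase : 0 < i ∧ j < c
  · exact ⟨(i - 1, j), hbox.2 ⟨by omega, hij.2⟩, by dsimp only; omega, hleft hcase.1 hcase.2⟩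
  · exact ⟨(i, j - 1), hbox.2 ⟨hij.1, by omega⟩, by dsimp only; omega,
      hdown (by omega) (by omega)⟩

theorem IsWBipFixationSol.unique (hr : 0 < r) (hq : 0 < q) (hv : 1 ≤ v) (hc : 1 ≤ c)
    {ρ₁ ρ₂ : ℕ → ℕ → ℝ} (h₁ : IsWBipFixationSol r q v c ρ₁) (h₂ : IsWBipFixationSol r q v c ρ₂)
    {i j : ℕ} (hi : i ≤ v) (hj : j ≤ c) : ρ₁ i j = ρ₂ i j :=
  (h₁.le hr hq hv hc h₂ hi hj).antisymm (h₂.le hr hq hv hc h₁ hi hj)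

end Generator

section ExplicitSolution

variable {r u : ℝ}

/-- With `u = c/(qv)`, the pair `(wbipX r u, wbipY r u)` is the nontrivial solution of the two
balance equations `wbipX_balance` and `wbipY_balance`. -/
noncomputable def wbipX (r u : ℝ) : ℝ := (u * r + 1) / (r * (u + r))

noncomputable def wbipY (r u : ℝ) : ℝ := (u + r) / (r * (u * r + 1))

noncomputable def wbipRho (r u : ℝ) (v c i j : ℕ) : ℝ :=
  (1 - wbipX r u ^ i * wbipY r u ^ j) / (1 - wbipX r u ^ v * wbipY r u ^ c)

lemma wbipX_pos (hr : 0 < r) (hu : 0 ≤ u) : 0 < wbipX r u := by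
  unfold wbipX; positivity

lemma wbipY_pos (hr : 0 < r) (hu : 0 ≤ u) : 0 < wbipY r u := by
  unfold wbipY; positivity

lemma wbipX_lt_one (hr : 1 < r) (hu : 0 ≤ u) : wbipX r u < 1 := by
  rw [wbipX, div_lt_one (by positivity)]
  nlinarith

lemma wbipY_lt_one (hr : 1 < r) (hu : 0 < u) : wbipY r u < 1 := by
  rw [wbipY, div_lt_one (by positivity)]
  nlinarith [mul_pos hu (show 0 < r * r - 1 by nlinarith)]

lemma wbipX_balance (hr : 0 < r) (hu : 0 < u) :
    r * (wbipX r u - 1) + ((wbipY r u)⁻¹ - 1) / u = 0 := by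
  unfold wbipX wbipY
  field_simp
  ring

lemma wbipY_balance (hr : 0 < r) (hu : 0 < u) :
    ((wbipX r u)⁻¹ - 1) + r * (wbipY r u - 1) / u = 0 := by
  unfold wbipX wbipY
  field_simp
  ring

lemma natCast_mul_pow_sub_one {x : ℝ} (hx : x ≠ 0) (n : ℕ) :
    (n : ℝ) * x ^ (n - 1) = n * (x ^ n * x⁻¹) := by
  cases n with
  | zero => simp
  | succ n => rw [Nat.add_sub_cancel, pow_succ, mul_inv_cancel_right₀ hx]

lemma wbipGenerator_pow_mul_pow {q x y : ℝ} {v c : ℕ} (hv : 0 < v) (hc : 0 < c)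
    (hx : x ≠ 0) (hy : y ≠ 0) (hu : u = c / (q * v))
    (hbx : r * (x - 1) + (y⁻¹ - 1) / u = 0) (hby : (x⁻¹ - 1) + r * (y - 1) / u = 0) (i j : ℕ) :
    wbipGenerator r q v c (fun i j => x ^ i * y ^ j) i j = 0 := by
  have hv' : (v : ℝ) ≠ 0 := by positivity
  have hc' : (c : ℝ) ≠ 0 := by positivity
  have h₁ : r * (x - 1) / v + q * (y⁻¹ - 1) / c = 0 := by
    rw [← zero_div (v : ℝ), ← hbx, hu]; field_simp
  have h₂ : (x⁻¹ - 1) / v + r * q * (y - 1) / c = 0 := by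
    rw [← zero_div (v : ℝ), ← hby, hu]; field_simp
  unfold wbipGenerator
  linear_combination (x ^ i * y ^ j * j * ((v : ℝ) - i)) * h₁
    + (x ^ i * y ^ j * i * ((c : ℝ) - j)) * h₂
    + (((c : ℝ) - j) / v * y ^ j) * natCast_mul_pow_sub_one hx i
    + (((v : ℝ) - i) * q / c * x ^ i) * natCast_mul_pow_sub_one hy j

theorem wbipRho_isWBipFixationSol {q : ℝ} {v c : ℕ} (hr : 1 < r) (hq : 0 < q) (hv : 1 ≤ v)
    (hc : 1 ≤ c) : IsWBipFixationSol r q v c (wbipRho r (c / (q * v)) v c) := by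
  have hr₀ : 0 < r := one_pos.trans hr
  have hu : 0 < (c : ℝ) / (q * v) := by positivity
  set x := wbipX r (c / (q * v))
  set y := wbipY r (c / (q * v))
  have hx := wbipX_pos hr₀ hu.le
  have hy := wbipY_pos hr₀ hu.le
  have hD : x ^ v * y ^ c < 1 :=
    mul_lt_one_of_nonneg_of_lt_one_left (by positivity) (pow_lt_one₀ hx.le (wbipX_lt_one hr hu.le)
      (by omega)) (pow_le_one₀ hy.le (wbipY_lt_one hr hu).le)
  refine (isWBipFixationSol_iff hr₀).2 ⟨by simp [wbipRho], div_self (sub_pos.2 hD).ne', ?_⟩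
  intro i j _ _ _ _
  unfold wbipRho
  rw [wbipGenerator_const_sub_div, wbipGenerator_pow_mul_pow hv hc hx.ne' hy.ne' rfl
    (wbipX_balance hr₀ hu) (wbipY_balance hr₀ hu), neg_zero, zero_div]

end ExplicitSolution

section Asymptotics

variable {ι : Type*} {l : Filter ι} {r : ℝ}

lemma tendsto_wbipX (hr : 0 < r) {u : ι → ℝ} (hu : Tendsto u l (𝓝 0)) :
    Tendsto (fun n => wbipX r (u n)) l (𝓝 (1 / r ^ 2)) := by
  have := ((hu.mul_const r).add_const 1).div ((hu.add_const r).const_mul r) (by simp; positivity)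
  rwa [zero_mul, zero_add, zero_add, ← sq] at this

lemma tendsto_wbipY (hr : 0 < r) {u : ι → ℝ} (hu : Tendsto u l (𝓝 0)) :
    Tendsto (fun n => wbipY r (u n)) l (𝓝 1) := by
  have := (hu.add_const r).div (((hu.mul_const r).add_const 1).const_mul r) (by simp; positivity)
  rwa [zero_mul, zero_add, zero_add, mul_one, div_self hr.ne'] at this

lemma tendsto_pow_self_of_tendsto_lt_one {x : ℕ → ℝ} {a : ℝ} (hx : Tendsto x atTop (𝓝 a))
    (hx₀ : ∀ᶠ n in atTop, 0 ≤ x n) (ha : a < 1) :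
    Tendsto (fun n => x n ^ n) atTop (𝓝 0) := by
  obtain ⟨b, hab, hb1⟩ := exists_between (max_lt ha zero_lt_one)
  refine squeeze_zero' (hx₀.mono fun n hn => pow_nonneg hn n) ?_
    (tendsto_pow_atTop_nhds_zero_of_lt_one ((le_max_right a 0).trans hab.le) hb1)
  filter_upwards [hx₀, hx.eventually_le_const ((le_max_left a 0).trans_lt hab)] with n h₀ hb
  exact pow_le_pow_left₀ h₀ hb n

lemma tendsto_natCeil_rpow_div_rpow {β γ : ℝ} (hβγ : β < γ) (hγ : 0 < γ) :
    Tendsto (fun N : ℕ => (⌈(N : ℝ) ^ β⌉₊ : ℝ) / (N : ℝ) ^ γ) atTop (𝓝 0) := by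
  have h₁ := (tendsto_rpow_neg_atTop (sub_pos.2 hβγ)).comp tendsto_natCast_atTop_atTop
  have h₂ := (tendsto_rpow_neg_atTop hγ).comp tendsto_natCast_atTop_atTop
  refine squeeze_zero' (Eventually.of_forall fun N => by positivity) ?_
    (by simpa using h₁.add h₂)
  filter_upwards [eventually_ge_atTop 1] with N hN
  have hN' : (0 : ℝ) < N := by exact_mod_cast hN
  calc (⌈(N : ℝ) ^ β⌉₊ : ℝ) / (N : ℝ) ^ γ ≤ ((N : ℝ) ^ β + 1) / (N : ℝ) ^ γ := by
        gcongr
        exact (Nat.ceil_lt_add_one (by positivity)).le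
    _ = (N : ℝ) ^ (β - γ) + (N : ℝ) ^ (-γ) := by
        rw [add_div, Real.rpow_sub hN', Real.rpow_neg hN'.le, one_div]

theorem tendsto_wbip_fixation_of_tendsto_ratio (hr : 1 < r) {q : ℕ → ℝ} {c : ℕ → ℕ}
    {ρ : ℕ → ℕ → ℕ → ℝ} (hq : ∀ᶠ N in atTop, 0 < q N) (hc : ∀ᶠ N in atTop, 1 ≤ c N)
    (hρ : ∀ᶠ N in atTop, IsWBipFixationSol r (q N) N (c N) (ρ N))
    (hu : Tendsto (fun N => (c N : ℝ) / (q N * N)) atTop (𝓝 0)) :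
    Tendsto (fun N => ρ N 1 0) atTop (𝓝 (1 - 1 / r ^ 2)) ∧
      Tendsto (fun N => ρ N 0 1) atTop (𝓝 0) := by
  have hr₀ : 0 < r := one_pos.trans hr
  set u := fun N => (c N : ℝ) / (q N * N)
  have hu₀ : ∀ᶠ N in atTop, 0 < u N := by
    filter_upwards [hq, hc, eventually_ge_atTop 1] with N hqN hcN hN
    have : (0 : ℝ) < c N := by exact_mod_cast hcN
    have : (0 : ℝ) < N := by exact_mod_cast hN
    positivity
  have hρ_eq : ∀ᶠ N in atTop, ∀ i ≤ N, ∀ j ≤ c N, ρ N i j = wbipRho r (u N) N (c N) i j := by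
    filter_upwards [hq, hc, hρ, eventually_ge_atTop 1] with N hqN hcN hρN hN i hi j hj
    exact hρN.unique hr₀ hqN hN hcN (wbipRho_isWBipFixationSol hr hqN hN hcN) hi hj
  have hX := tendsto_wbipX hr₀ hu
  have hY := tendsto_wbipY hr₀ hu
  have hXN := tendsto_pow_self_of_tendsto_lt_one hX
    (hu₀.mono fun N hN => (wbipX_pos hr₀ hN.le).le) (by rw [div_lt_one (by positivity)]; nlinarith)
  have hXY : Tendsto (fun N => wbipX r (u N) ^ N * wbipY r (u N) ^ c N) atTop (𝓝 0) := by
    refine squeeze_zero' ?_ ?_ hXN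
    · filter_upwards [hu₀] with N hN
      have := wbipX_pos hr₀ hN.le
      have := wbipY_pos hr₀ hN.le
      positivity
    · filter_upwards [hu₀] with N hN
      exact mul_le_of_le_one_right (pow_nonneg (wbipX_pos hr₀ hN.le).le N)
        (pow_le_one₀ (wbipY_pos hr₀ hN.le).le (wbipY_lt_one hr hN).le)
  have hD := (tendsto_const_nhds (x := (1 : ℝ))).sub hXY
  rw [sub_zero] at hD
  constructor
  · have := ((tendsto_const_nhds (x := (1 : ℝ))).sub hX).div hD one_ne_zero
    rw [div_one] at this
    refine this.congr' ?_
    filter_upwards [hρ_eq, eventually_ge_atTop 1] with N h hN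
    simp [h 1 hN 0 (Nat.zero_le _), wbipRho]
  · have := ((tendsto_const_nhds (x := (1 : ℝ))).sub hY).div hD one_ne_zero
    rw [sub_self, zero_div] at this
    refine this.congr' ?_
    filter_upwards [hρ_eq, hc] with N h hcN
    simp [h 0 (Nat.zero_le _) 1 hcN, wbipRho]

end Asymptotics

/-- Under temperature initialization, the fixation probability of a single mutant on
the α-Weighted bipartite graph `W_{N,α}` (with `q = N^{-α/2}`) tends to `1 - 1/r²`. -/
theorem weighted_bipartite_fixation_probability
    (α r : ℝ) (hα0 : 0 < α) (hα1 : α < 1) (hr : 1 < r)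
    (ρ : ℕ → ℕ → ℕ → ℝ)
    (hρ : ∀ N : ℕ, 2 ≤ N →
      IsWBipFixationSol r ((N : ℝ) ^ (-(α / 2))) N ⌈(N : ℝ) ^ (1 - α)⌉₊ (ρ N)) :
    Tendsto (fun N : ℕ =>
        (((⌈(N : ℝ) ^ (1 - α)⌉₊ : ℝ) + (N : ℝ) * (1 - (N : ℝ) ^ (-(α / 2)))) * ρ N 1 0
          + (N : ℝ) * (N : ℝ) ^ (-(α / 2)) * ρ N 0 1)
          / ((N : ℝ) + (⌈(N : ℝ) ^ (1 - α)⌉₊ : ℝ)))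
      atTop (𝓝 (1 - 1 / r ^ 2)) := by
  have hpos : ∀ᶠ N : ℕ in atTop, (0 : ℝ) < N := by
    filter_upwards [eventually_ge_atTop 1] with N hN
    exact_mod_cast hN
  have hq : Tendsto (fun N : ℕ => (N : ℝ) ^ (-(α / 2))) atTop (𝓝 0) :=
    (tendsto_rpow_neg_atTop (by linarith)).comp tendsto_natCast_atTop_atTop
  have hq₀ : ∀ᶠ N : ℕ in atTop, 0 < (N : ℝ) ^ (-(α / 2)) := hpos.mono fun N hN => by positivity
  have hratio : Tendsto (fun N : ℕ => (⌈(N : ℝ) ^ (1 - α)⌉₊ : ℝ) / ((N : ℝ) ^ (-(α / 2)) * N))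
      atTop (𝓝 0) := by
    refine (tendsto_natCeil_rpow_div_rpow (by linarith : 1 - α < 1 - α / 2) (by linarith)).congr' ?_
    filter_upwards [hpos] with N hN
    rw [← Real.rpow_add_one hN.ne', neg_add_eq_sub]
  obtain ⟨h₁₀, h₀₁⟩ := tendsto_wbip_fixation_of_tendsto_ratio hr hq₀
    (hpos.mono fun N hN => Nat.one_le_iff_ne_zero.2 (Nat.ceil_pos.2 (by positivity)).ne')
    (eventually_atTop.2 ⟨2, hρ⟩) hratio
  have hweight : Tendsto (fun N : ℕ => (N : ℝ) * (N : ℝ) ^ (-(α / 2)) /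
      ((N : ℝ) + (⌈(N : ℝ) ^ (1 - α)⌉₊ : ℝ))) atTop (𝓝 0) := by
    refine squeeze_zero' (Eventually.of_forall fun N => by positivity) ?_ hq
    filter_upwards [hpos, hq₀] with N hN hqN
    rw [div_le_iff₀ (by positivity)]
    nlinarith [mul_nonneg hqN.le (Nat.cast_nonneg (α := ℝ) ⌈(N : ℝ) ^ (1 - α)⌉₊)]
  have := h₁₀.add (hweight.mul (h₀₁.sub h₁₀))
  rw [zero_mul, add_zero] at this
  refine this.congr' ?_
  filter_upwards [hpos] with N hN
  field_simp
  ring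
end

section
/- Fix r > 1. For each N ≥ 2 let A_N : {0,1,…,N} → ℝ be the absorption-time solution of the Moran birth–death chain on the complete graph K_N. Then, as N → ∞, the quantity A_N(1) − (N−1)·H_{N−1}·(r+1)/r − (N−1)·log(1−1/r) converges to −1/(r(r−1)). Equivalently, AT(K_N,r) = (N−1)·H_{N−1}·(r+1)/r + (N−1)·log(1−1/r) − 1/(r(r−1)) + o(1). -/
open Filter Topology

/-- `A` is the absorption-time solution of the Moran birth–death chain on the
complete graph `K_N` (states: the number `k` of mutants, mutant fitness `r`). -/
def IsCompleteAbsorptionSol (r : ℝ) (N : ℕ) (A : ℕ → ℝ) : Prop :=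
  A 0 = 0 ∧ A N = 0 ∧
  ∀ k : ℕ, 1 ≤ k → k ≤ N - 1 →
    let pp : ℝ := (r * k / ((N : ℝ) + (r - 1) * k)) * (((N : ℝ) - k) / ((N : ℝ) - 1))
    let pm : ℝ := (((N : ℝ) - k) / ((N : ℝ) + (r - 1) * k)) * ((k : ℝ) / ((N : ℝ) - 1))
    A k = 1 + pm * A (k - 1) + pp * A (k + 1) + (1 - pm - pp) * A k

/-- `T` is the conditional fixation-time solution of the Moran birth–death chain on
the complete graph `K_N`, with fixation probabilities `fp k = (1-r^{-k})/(1-r^{-N})`. -/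
def IsCompleteCondFixationTimeSol (r : ℝ) (N : ℕ) (T : ℕ → ℝ) : Prop :=
  T 0 = 0 ∧ T N = 0 ∧
  ∀ k : ℕ, 1 ≤ k → k ≤ N - 1 →
    let pp : ℝ := (r * k / ((N : ℝ) + (r - 1) * k)) * (((N : ℝ) - k) / ((N : ℝ) - 1))
    let pm : ℝ := (((N : ℝ) - k) / ((N : ℝ) + (r - 1) * k)) * ((k : ℝ) / ((N : ℝ) - 1))
    let fp : ℕ → ℝ := fun m => (1 - (1 / r) ^ m) / (1 - (1 / r) ^ N)
    fp k * T k = fp k + pm * fp (k - 1) * T (k - 1) + pp * fp (k + 1) * T (k + 1)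
      + (1 - pm - pp) * fp k * T k

/-!
Write `q = 1/r` and `d k = A (k+1) - A k`. Since `p⁻(k) = q p⁺(k)`, the chain equation says
`d k = q d (k-1) - 1/p⁺(k)`, and summing by parts against `A 0 = A N = 0` gives, with
`1/p⁺(k) = (N-1)/(r k) + (N-1)/(N-k)` and the reflection `k ↦ N - k`,
`A 1 (1 - q^N) = (N-1)(1+q) H_{N-1} - q (N-1) ∑_{j<N} q^j/(N-j) - (N-1) ∑_{j<N} q^j/j`.
So the quantity in the theorem equals
`A 1 q^N - q (N-1) ∑_{j<N} q^j/(N-j) + (N-1) ∑_{j≥N} q^j/j`: the first term vanishes because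
`A 1 = O(N²)`, the last because the tail is `O(q^N/N)`, and by dominated convergence
(`(N-1)/(N-j) → 1`) the middle one tends to `q · q/(1-q) = 1/(r(r-1))`.
-/

open Finset

theorem mul_one_sub_pow_eq_sum_of_recurrence {R : Type*} [CommRing R] {a c : ℕ → R} {q : R}
    {n : ℕ} (h0 : a 0 = 0) (hn : a (n + 1) = 0)
    (hrec : ∀ k < n, a (k + 2) - a (k + 1) = q * (a (k + 1) - a k) - c (k + 1)) :
    a 1 * (1 - q ^ (n + 1)) = ∑ k ∈ range n, c (k + 1) * (1 - q ^ (n - k)) := by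
  set d : ℕ → R := fun k => a (k + 1) - a k
  -- Summation by parts: once the second sum is shifted, the coefficients of `d k` differ by the
  -- constant `q - 1`, and `∑ d k` telescopes to `a (n + 1) - a 0 = 0`.
  have hc : ∀ k ∈ range n, c (k + 1) * (1 - q ^ (n - k)) =
      d k * (q - q ^ (n + 1 - k)) - d (k + 1) * (1 - q ^ (n - k)) := by
    intro k hk
    rw [Nat.sub_add_comm (mem_range.1 hk).le, pow_succ]
    linear_combination (1 - q ^ (n - k)) * hrec k (mem_range.1 hk)
  have hextend : ∑ k ∈ range n, d k * (q - q ^ (n + 1 - k)) =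
      ∑ k ∈ range (n + 1), d k * (q - q ^ (n + 1 - k)) := by
    simp [sum_range_succ]
  have hshift : ∑ k ∈ range n, d (k + 1) * (1 - q ^ (n - k)) =
      ∑ k ∈ range (n + 1), d k * (1 - q ^ (n + 1 - k)) - d 0 * (1 - q ^ (n + 1)) := by
    simp [sum_range_succ']
  have htel : ∑ k ∈ range (n + 1), d k = 0 := by
    rw [sum_range_sub (fun k => a k), hn, h0, sub_zero]
  rw [sum_congr rfl hc, sum_sub_distrib, hextend, hshift, ← sub_add, ← sum_sub_distrib]
  simp only [← mul_sub, sub_sub_sub_cancel_right, ← sum_mul, htel, d, h0]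
  ring

theorem sum_Icc_one_eq_sum_range {M : Type*} [AddCommMonoid M] (f : ℕ → M) (n : ℕ) :
    ∑ j ∈ Icc 1 n, f j = ∑ i ∈ range n, f (i + 1) := by
  rw [← Ico_add_one_right_eq_Icc, sum_Ico_eq_sum_range, add_tsub_cancel_right]
  simp only [add_comm 1]

theorem sum_Icc_one_sub_reflect {M : Type*} [AddCommMonoid M] (f : ℕ → M) (N : ℕ) :
    ∑ m ∈ Icc 1 (N - 1), f (N - m) = ∑ m ∈ Icc 1 (N - 1), f m := by
  apply sum_nbij' (fun m => N - m) (fun m => N - m) <;>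
    (intro a ha; simp only [mem_Icc] at *) <;> omega

theorem sum_Icc_one_div_le (n : ℕ) : ∑ k ∈ Icc 1 n, (1 : ℝ) / k ≤ n := by
  calc ∑ k ∈ Icc 1 n, (1 : ℝ) / k ≤ ∑ _k ∈ Icc 1 n, (1 : ℝ) := by
        refine sum_le_sum fun k hk => div_le_one_of_le₀ ?_ (Nat.cast_nonneg k)
        exact_mod_cast (mem_Icc.1 hk).1
    _ = n := by simp

theorem tendsto_mul_neg_log_one_sub_sub_sum {q : ℝ} (hq0 : 0 ≤ q) (hq1 : q < 1) :
    Tendsto (fun N : ℕ => ((N : ℝ) - 1) *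
        (-Real.log (1 - q) - ∑ j ∈ Icc 1 (N - 1), q ^ j / (j : ℝ))) atTop (𝓝 0) := by
  rw [← tendsto_add_atTop_iff_nat 1]
  simp only [Nat.cast_add, Nat.cast_one, add_sub_cancel_right, add_tsub_cancel_right]
  have htail (n : ℕ) : HasSum (fun i : ℕ => (n : ℝ) * (q ^ (i + n + 1) / (i + n + 1)))
      ((n : ℝ) * (-Real.log (1 - q) - ∑ j ∈ Icc 1 n, q ^ j / (j : ℝ))) := by
    rw [sum_Icc_one_eq_sum_range]
    convert ((hasSum_nat_add_iff' n).2
      (Real.hasSum_pow_div_log_of_abs_lt_one (abs_lt.2 ⟨by linarith, hq1⟩))).mul_left (n : ℝ)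
      using 3 <;> push_cast <;> rfl
  have hle (n i : ℕ) : (n : ℝ) * (q ^ (i + n + 1) / (i + n + 1)) ≤ q ^ (n + 1) * q ^ i := by
    rw [← pow_add, add_comm (n + 1), ← add_assoc, mul_div_assoc', div_le_iff₀ (by positivity)]
    have : (0 : ℝ) ≤ q ^ (i + n + 1) := by positivity
    nlinarith [(i.cast_nonneg : (0 : ℝ) ≤ i)]
  refine squeeze_zero (fun n => (htail n).nonneg fun i => by positivity)
    (fun n => hasSum_le (hle n) (htail n)
      ((hasSum_geometric_of_lt_one hq0 hq1).mul_left (q ^ (n + 1)))) ?_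
  simpa using ((tendsto_pow_atTop_nhds_zero_of_lt_one hq0 hq1).comp
    (tendsto_add_atTop_nat 1)).mul_const (1 - q)⁻¹

theorem tendsto_mul_sum_pow_div_sub {q : ℝ} (hq0 : 0 ≤ q) (hq1 : q < 1) :
    Tendsto (fun N : ℕ => ((N : ℝ) - 1) * ∑ j ∈ Icc 1 (N - 1), q ^ j / ((N : ℝ) - j))
      atTop (𝓝 (q / (1 - q))) := by
  rw [← tendsto_add_atTop_iff_nat 1]
  simp only [Nat.cast_add, Nat.cast_one, add_sub_cancel_right, add_tsub_cancel_right, mul_sum]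
  set f : ℕ → ℕ → ℝ := fun n j => (n : ℝ) * (q ^ j / (n + 1 - j))
  have hlim (j : ℕ) : Tendsto (fun n => (Icc 1 n : Set ℕ).indicator (f n) j) atTop
      (𝓝 ((Set.Ici 1).indicator (q ^ ·) j)) := by
    rcases Nat.eq_zero_or_pos j with rfl | hj
    · simp
    rw [Set.indicator_of_mem (Set.mem_Ici.2 hj)]
    have : Tendsto (fun n : ℕ => q ^ j * ((n : ℝ) / (n + (1 - j)))) atTop (𝓝 (q ^ j * 1)) :=
      (tendsto_natCast_div_add_atTop _).const_mul _
    rw [mul_one] at this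
    refine this.congr' (eventually_atTop.2 ⟨j, fun n hn => ?_⟩)
    dsimp only
    rw [Set.indicator_of_mem (by simp only [coe_Icc, Set.mem_Icc]; omega)]
    simp only [f]
    ring
  have hbound (n j : ℕ) :
      ‖(Icc 1 n : Set ℕ).indicator (f n) j‖ ≤ (j : ℝ) ^ 1 * q ^ j := by
    by_cases hj : j ∈ (Icc 1 n : Set ℕ)
    · rw [Set.indicator_of_mem hj]
      simp only [coe_Icc, Set.mem_Icc] at hj
      have hj1 : (1 : ℝ) ≤ j := by exact_mod_cast hj.1
      have hjn : (j : ℝ) ≤ n := by exact_mod_cast hj.2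
      have hpos : (0 : ℝ) < n + 1 - j := by linarith
      simp only [f]
      rw [Real.norm_eq_abs, abs_of_nonneg (mul_nonneg (Nat.cast_nonneg _) (by positivity)),
        pow_one, mul_div_assoc', div_le_iff₀ hpos]
      have : (0 : ℝ) ≤ q ^ j := by positivity
      nlinarith [mul_nonneg (sub_nonneg.2 hj1) (sub_nonneg.2 hjn)]
    · rw [Set.indicator_of_notMem hj, norm_zero]
      positivity
  have hsum : HasSum ((Set.Ici 1).indicator (q ^ ·)) (q / (1 - q)) := by
    refine (hasSum_nat_add_iff' 1).1 ?_
    simp only [range_one, sum_singleton, sub_zero,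
      Set.indicator_of_notMem (by simp : (0 : ℕ) ∉ Set.Ici 1)]
    have hshift (n : ℕ) : (Set.Ici 1).indicator (q ^ ·) (n + 1) = q * q ^ n := by
      rw [Set.indicator_of_mem (by simp), pow_succ']
    simpa only [hshift, div_eq_mul_inv] using (hasSum_geometric_of_lt_one hq0 hq1).mul_left q
  have := tendsto_tsum_of_dominated_convergence
    (summable_pow_mul_geometric_of_norm_lt_one 1 (by rwa [Real.norm_eq_abs, abs_of_nonneg hq0]))
    hlim (Eventually.of_forall hbound)
  rw [hsum.tsum_eq] at this
  refine this.congr fun n => ?_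
  rw [← sum_eq_tsum_indicator]

/-- The reciprocal `1 / p⁺(k)` of the upward transition probability, in partial fractions. -/
noncomputable def invUpProb (r : ℝ) (N k : ℕ) : ℝ :=
  ((N : ℝ) - 1) / (r * k) + ((N : ℝ) - 1) / ((N : ℝ) - k)

theorem invUpProb_nonneg {r : ℝ} (hr : 0 < r) {N k : ℕ} (hk : 1 ≤ k) (hkN : k ≤ N) :
    0 ≤ invUpProb r N k := by
  have : (1 : ℝ) ≤ k := by exact_mod_cast hk
  have : (k : ℝ) ≤ N := by exact_mod_cast hkN
  unfold invUpProb
  apply add_nonneg <;> apply div_nonneg <;> first | positivity | linarith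

namespace IsCompleteAbsorptionSol

variable {r : ℝ} {N : ℕ} {A : ℕ → ℝ}

theorem increment_recurrence (hr : 0 < r) (hA : IsCompleteAbsorptionSol r N A) {k : ℕ}
    (hk : 1 ≤ k) (hkN : k < N) :
    A (k + 1) - A k = 1 / r * (A k - A (k - 1)) - invUpProb r N k := by
  have h := hA.2.2 k hk (by omega)
  set pp : ℝ := (r * k / ((N : ℝ) + (r - 1) * k)) * (((N : ℝ) - k) / ((N : ℝ) - 1))
  set pm : ℝ := (((N : ℝ) - k) / ((N : ℝ) + (r - 1) * k)) * ((k : ℝ) / ((N : ℝ) - 1))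
  have hk' : (1 : ℝ) ≤ k := by exact_mod_cast hk
  have hkN' : (k : ℝ) + 1 ≤ N := by exact_mod_cast hkN
  have : (N : ℝ) + k * (r - 1) ≠ 0 := by nlinarith
  have : (N : ℝ) - k ≠ 0 := by linarith
  have : (N : ℝ) - 1 ≠ 0 := by linarith
  have hpm : pm = pp / r := by simp only [pp, pm]; field_simp
  have hpp : pp * invUpProb r N k = 1 := by
    have hu : invUpProb r N k = (N - 1) * (N + (r - 1) * k) / (r * k * (N - k)) := by
      unfold invUpProb; field_simp; ring
    rw [hu]; simp only [pp]; field_simp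
  clear_value pp pm
  dsimp only at h
  linear_combination -invUpProb r N k * h - (A (k + 1) - A k - (A k - A (k - 1)) / r) * hpp
    + invUpProb r N k * (A k - A (k - 1)) * hpm

theorem mul_one_sub_pow_eq_sum_invUpProb (hr : 0 < r) (hA : IsCompleteAbsorptionSol r N A) :
    A 1 * (1 - (1 / r) ^ N) =
      ∑ m ∈ Icc 1 (N - 1), invUpProb r N m * (1 - (1 / r) ^ (N - m)) := by
  rcases N with _ | n
  · simp
  rw [mul_one_sub_pow_eq_sum_of_recurrence hA.1 hA.2.1
      fun k hk => hA.increment_recurrence hr (by omega) (by omega),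
    add_tsub_cancel_right, sum_Icc_one_eq_sum_range]
  refine sum_congr rfl fun k hk => ?_
  rw [Nat.add_sub_add_right]

theorem mul_one_sub_pow_eq (hr : 0 < r) (hA : IsCompleteAbsorptionSol r N A) :
    A 1 * (1 - (1 / r) ^ N) =
      ((N : ℝ) - 1) * (∑ k ∈ Icc 1 (N - 1), (1 : ℝ) / k) * ((r + 1) / r)
        - ((N : ℝ) - 1) / r * ∑ j ∈ Icc 1 (N - 1), (1 / r) ^ j / ((N : ℝ) - j)
        - ((N : ℝ) - 1) * ∑ j ∈ Icc 1 (N - 1), (1 / r) ^ j / (j : ℝ) := by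
  have hsplit : ∀ m ∈ Icc 1 (N - 1), invUpProb r N m * (1 - (1 / r) ^ (N - m)) =
      ((N : ℝ) - 1) / r * (1 / (m : ℝ)) + ((N : ℝ) - 1) * (1 / ((N - m : ℕ) : ℝ))
        - ((N : ℝ) - 1) / r * ((1 / r) ^ (N - m) / ((N : ℝ) - (N - m : ℕ)))
        - ((N : ℝ) - 1) * ((1 / r) ^ (N - m) / ((N - m : ℕ) : ℝ)) := by
    intro m hm
    rw [mem_Icc] at hm
    have hm1 : (1 : ℝ) ≤ m := by exact_mod_cast hm.1
    have hmN : (m : ℝ) + 1 ≤ N := by exact_mod_cast (by omega : m + 1 ≤ N)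
    have : (N : ℝ) - m ≠ 0 := by linarith
    rw [Nat.cast_sub (by omega : m ≤ N), sub_sub_cancel]
    unfold invUpProb
    field_simp
    ring
  rw [hA.mul_one_sub_pow_eq_sum_invUpProb hr, sum_congr rfl hsplit, sum_sub_distrib,
    sum_sub_distrib, sum_add_distrib, ← mul_sum, ← mul_sum, ← mul_sum, ← mul_sum,
    sum_Icc_one_sub_reflect (fun j : ℕ => 1 / (j : ℝ)),
    sum_Icc_one_sub_reflect (fun j : ℕ => (1 / r) ^ j / ((N : ℝ) - j)),
    sum_Icc_one_sub_reflect (fun j : ℕ => (1 / r) ^ j / (j : ℝ))]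
  field_simp
  ring

theorem abs_le (hr : 1 < r) (hN : 1 ≤ N) (hA : IsCompleteAbsorptionSol r N A) :
    |A 1| ≤ 2 / (1 - 1 / r) * (N : ℝ) ^ 2 := by
  have hr0 : 0 < r := by linarith
  have hq1 : 1 / r < 1 := (div_lt_one hr0).2 hr
  have hqN : (1 / r) ^ N ≤ 1 / r := pow_le_of_le_one (by positivity) hq1.le (by omega)
  have hden : 0 < 1 - 1 / r := by linarith
  have hlow : 0 ≤ A 1 * (1 - (1 / r) ^ N) := by
    rw [hA.mul_one_sub_pow_eq_sum_invUpProb hr0]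
    refine sum_nonneg fun m hm => mul_nonneg ?_ ?_
    · rw [mem_Icc] at hm
      exact invUpProb_nonneg hr0 hm.1 (by omega)
    · exact sub_nonneg.2 (pow_le_one₀ (by positivity) hq1.le)
  have hup : A 1 * (1 - (1 / r) ^ N) ≤ 2 * (N : ℝ) ^ 2 := by
    have hN' : (1 : ℝ) ≤ N := by exact_mod_cast hN
    have hS :
        0 ≤ ((N : ℝ) - 1) / r * ∑ j ∈ Icc 1 (N - 1), (1 / r) ^ j / ((N : ℝ) - j) := by
      refine mul_nonneg (by positivity) (sum_nonneg fun j hj => div_nonneg (by positivity) ?_)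
      rw [sub_nonneg]
      exact_mod_cast (by grind : j ≤ N)
    have hP : 0 ≤ ((N : ℝ) - 1) * ∑ j ∈ Icc 1 (N - 1), (1 / r) ^ j / (j : ℝ) := by
      positivity
    have hH :
        ((N : ℝ) - 1) * (∑ k ∈ Icc 1 (N - 1), (1 : ℝ) / k) * ((r + 1) / r) ≤ N * N * 2 := by
      gcongr
      · linarith
      · exact (sum_Icc_one_div_le _).trans (by exact_mod_cast N.sub_le 1)
      · rw [div_le_iff₀ hr0]; linarith
    rw [hA.mul_one_sub_pow_eq hr0, sq]
    linarith
  have h1 : 0 ≤ A 1 := nonneg_of_mul_nonneg_left hlow (by linarith)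
  rw [abs_of_nonneg h1, div_mul_eq_mul_div, le_div_iff₀ hden]
  nlinarith

end IsCompleteAbsorptionSol

/-- Asymptotics of the absorption time of a single advantageous mutant on `K_N`:
`AT(K_N,r) = (N−1)·H_{N−1}·(r+1)/r + (N−1)·log(1−1/r) − 1/(r(r−1)) + o(1)`. -/
theorem complete_graph_absorption_time_asymptotics
    (r : ℝ) (hr : 1 < r)
    (A : ℕ → ℕ → ℝ)
    (hA : ∀ N : ℕ, 2 ≤ N → IsCompleteAbsorptionSol r N (A N)) :
    Tendsto (fun N : ℕ =>
        A N 1 - ((N : ℝ) - 1) * (∑ k ∈ Finset.Icc 1 (N - 1), (1 : ℝ) / k) * ((r + 1) / r)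
          - ((N : ℝ) - 1) * Real.log (1 - 1 / r))
      atTop (𝓝 (-(1 / (r * (r - 1))))) := by
  have hq0 : (0 : ℝ) ≤ 1 / r := by positivity
  have hq1 : 1 / r < 1 := (div_lt_one (by linarith)).2 hr
  have hA1 : Tendsto (fun N : ℕ => A N 1 * (1 / r) ^ N) atTop (𝓝 0) := by
    have hbig : (fun N => A N 1) =O[atTop] (fun N : ℕ => (N : ℝ) ^ 2) :=
      Asymptotics.IsBigO.of_bound _ (eventually_atTop.2 ⟨2, fun N hN => by
        simpa using (hA N hN).abs_le hr (by omega)⟩)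
    exact (hbig.mul (Asymptotics.isBigO_refl _ _)).trans_tendsto
      (tendsto_pow_const_mul_const_pow_of_abs_lt_one 2 (by rwa [abs_of_nonneg hq0]))
  have hlim := (hA1.sub ((tendsto_mul_sum_pow_div_sub hq0 hq1).const_mul (1 / r))).add
    (tendsto_mul_neg_log_one_sub_sub_sum hq0 hq1)
  convert hlim.congr' (eventually_atTop.2 ⟨2, fun N hN => ?_⟩) using 2
  · have : r - 1 ≠ 0 := by linarith
    field_simp
    ring
  · linear_combination -(hA N hN).mul_one_sub_pow_eq (by linarith)
end

section
/- Fix r > 1. For each N ≥ 2 let T_N : {0,1,…,N} → ℝ be the conditional fixation-time solution of the Moran birth–death chain on the complete graph K_N. Then, as N → ∞, the quantity (1/N)·( T_N(1) − (N−1)·((r+1)/(r−1))·(H_{N−1} + log(1−1/r)) ) converges to 0. Equivalently, the fixation time satisfies T(K_N,r) = (N−1)·H_{N−1}·(r+1)/(r−1) + (N−1)·((r+1)/(r−1))·log(1−1/r) + o(N). -/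
open Filter Topology

/-!
With `ρ = 1/r`, `e k = fp k * T k` and `p⁻(k) = ρ p⁺(k)`, the defining equations become the
second-order recurrence `e (k+1) - e k = ρ (e k - e (k-1)) - fp k / p⁺(k)`. Summing it by parts
against the weights `1 - ρ^(N-k)` and using `e 0 = e N = 0` gives
`(1 - ρ) T 1 = ∑ (1 - ρ^(N-k)) fp k / p⁺(k)`; partial fractions for `1 / p⁺(k)` and the symmetry
`k ↔ N - k` turn this into `T 1 = (N-1) (r+1)/(r-1) S_N / (1 - ρ^N)` with
`S_N = ∑_{k=1}^{N-1} (1-ρ^k)(1-ρ^(N-k))/k`. Finally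
`S_N / (1 - ρ^N) - H_{N-1} = (2 ρ^N H_{N-1} - ∑ ρ^k/k - ∑ ρ^(N-k)/k) / (1 - ρ^N)`, where the first and
last sums tend to `0` and the middle one to `-log (1 - ρ)`.
-/

open Finset

-- The weights `w k = 1 - ρ ^ (N - k)` satisfy `w k - ρ * w (k + 1) = 1 - ρ` and `w N = 0`, so
-- summing the recurrence by parts against them telescopes.
theorem sum_one_sub_pow_mul_eq_of_recurrence {R : Type*} [CommRing R] (ρ : R) {N : ℕ} {e c : ℕ → R}
    (he0 : e 0 = 0) (heN : e N = 0)
    (hstep : ∀ k ∈ Ico 1 N, e (k + 1) - e k = ρ * (e k - e (k - 1)) - c k) :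
    ∑ k ∈ Ico 1 N, (1 - ρ ^ (N - k)) * c k = (1 - ρ ^ N) * e 1 := by
  obtain rfl | hN := Nat.eq_zero_or_pos N
  · simp
  set P : ℕ → R := fun k => ρ * (1 - ρ ^ (N - k)) * (e k - e (k - 1))
  have hterm : ∀ k ∈ Ico 1 N, (1 - ρ ^ (N - k)) * c k
      = -(P (k + 1) - P k) - (1 - ρ) * (e (k + 1) - e k) := by
    intro k hk
    have hpow : ρ ^ (N - k) = ρ * ρ ^ (N - (k + 1)) := by
      rw [← pow_succ']; congr 1; simp only [mem_Ico] at hk; omega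
    simp only [P, Nat.add_sub_cancel]
    linear_combination (1 - ρ ^ (N - k)) * hstep k hk + (e (k + 1) - e k) * hpow
  rw [sum_congr rfl hterm, sum_sub_distrib, sum_neg_distrib, ← mul_sum, sum_Ico_sub P hN,
    sum_Ico_sub e hN]
  have hpow : ρ ^ N = ρ * ρ ^ (N - 1) := by rw [← pow_succ', Nat.sub_add_cancel hN]
  simp only [P, Nat.sub_self, pow_zero, sub_self, he0, heN]
  linear_combination e 1 * hpow

noncomputable def fixProb (r : ℝ) (N k : ℕ) : ℝ := (1 - (1 / r) ^ k) / (1 - (1 / r) ^ N)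

noncomputable def fixationSum (ρ : ℝ) (N : ℕ) : ℝ :=
  ∑ k ∈ Ico 1 N, (1 - ρ ^ k) * (1 - ρ ^ (N - k)) / k

theorem fixationSum_eq_sum_div_sub (ρ : ℝ) (N : ℕ) :
    fixationSum ρ N = ∑ k ∈ Ico 1 N, (1 - ρ ^ k) * (1 - ρ ^ (N - k)) / ((N : ℝ) - k) := by
  have h := sum_Ico_reflect (fun m => (1 - ρ ^ m) * (1 - ρ ^ (N - m)) / (m : ℝ)) 1 (Nat.le_succ N)
  rw [Nat.add_sub_cancel_left, Nat.add_sub_cancel] at h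
  rw [fixationSum, ← h]
  refine sum_congr rfl fun k hk => ?_
  have hkN : k ≤ N := (mem_Ico.1 hk).2.le
  rw [Nat.sub_sub_self hkN, Nat.cast_sub hkN]
  ring

section Moran
variable {r : ℝ} {N : ℕ} {T : ℕ → ℝ}

-- Partial fractions of `1 / p⁺(k)`.
lemma moran_birth_mul_eq_one (hr : 0 < r) {k : ℕ} (hk : k ∈ Ico 1 N) :
    (r * k / ((N : ℝ) + (r - 1) * k)) * (((N : ℝ) - k) / ((N : ℝ) - 1))
      * (((N : ℝ) - 1) * (1 / (r * k) + 1 / ((N : ℝ) - k))) = 1 := by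
  obtain ⟨hk1, hkN⟩ := mem_Ico.1 hk
  have hk0 : (0 : ℝ) < k := by exact_mod_cast hk1
  have hNk : (0 : ℝ) < (N : ℝ) - k := sub_pos.2 (by exact_mod_cast hkN)
  have hN1 : (0 : ℝ) < (N : ℝ) - 1 := by linarith [(Nat.one_le_cast.2 hk1 : (1 : ℝ) ≤ k)]
  have hD : (0 : ℝ) < N + k * (r - 1) := by nlinarith
  field_simp
  ring

theorem IsCompleteCondFixationTimeSol.recurrence (hr : 0 < r)
    (h : IsCompleteCondFixationTimeSol r N T) (k : ℕ) (hk : k ∈ Ico 1 N) :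
    fixProb r N (k + 1) * T (k + 1) - fixProb r N k * T k
      = 1 / r * (fixProb r N k * T k - fixProb r N (k - 1) * T (k - 1))
        - ((N : ℝ) - 1) * (1 / (r * k) + 1 / ((N : ℝ) - k)) * fixProb r N k := by
  obtain ⟨hk1, hkN⟩ := mem_Ico.1 hk
  have hrec := h.2.2 k hk1 (by omega)
  set pp : ℝ := (r * k / ((N : ℝ) + (r - 1) * k)) * (((N : ℝ) - k) / ((N : ℝ) - 1))
  have hpm : (((N : ℝ) - k) / ((N : ℝ) + (r - 1) * k)) * ((k : ℝ) / ((N : ℝ) - 1))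
      = 1 / r * pp := by
    simp only [pp]
    field_simp
  have hpp := moran_birth_mul_eq_one hr hk
  simp only [hpm, fixProb] at hrec ⊢
  apply mul_left_cancel₀ (left_ne_zero_of_mul_eq_one hpp)
  linear_combination -hrec + (1 - (1 / r) ^ k) / (1 - (1 / r) ^ N) * hpp

theorem IsCompleteCondFixationTimeSol.apply_one_eq (hr0 : 0 < r) (hr1 : r ≠ 1) (hN : 1 ≤ N)
    (h : IsCompleteCondFixationTimeSol r N T) :
    T 1 = ((N : ℝ) - 1) * ((r + 1) / (r - 1)) * (fixationSum (1 / r) N / (1 - (1 / r) ^ N)) := by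
  have hrN : 1 - (1 / r) ^ N ≠ 0 := by
    rw [sub_ne_zero, ne_comm, Ne, pow_eq_one_iff_of_nonneg (by positivity) (by omega)]
    simpa using hr1
  have key := sum_one_sub_pow_mul_eq_of_recurrence (1 / r) (e := fun k => fixProb r N k * T k)
    (by simp [fixProb, h.1]) (by simp [fixProb, h.2.1]) (h.recurrence hr0)
  have hterm : ∀ k ∈ Ico 1 N, (1 - (1 / r) ^ (N - k))
        * (((N : ℝ) - 1) * (1 / (r * k) + 1 / ((N : ℝ) - k)) * fixProb r N k)
      = ((N : ℝ) - 1) / (1 - (1 / r) ^ N)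
        * (1 / r * ((1 - (1 / r) ^ k) * (1 - (1 / r) ^ (N - k)) / k)
          + (1 - (1 / r) ^ k) * (1 - (1 / r) ^ (N - k)) / ((N : ℝ) - k)) := by
    intro k _
    simp only [fixProb]
    ring
  rw [sum_congr rfl hterm, ← mul_sum, sum_add_distrib, ← mul_sum, ← fixationSum,
    ← fixationSum_eq_sum_div_sub] at key
  simp only [fixProb, pow_one] at key
  generalize fixationSum (1 / r) N = S at key ⊢
  have hr1' : r - 1 ≠ 0 := sub_ne_zero.2 hr1
  field_simp at key ⊢
  linear_combination -key

end Moran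

section Asymptotics
variable {ρ : ℝ}

theorem tendsto_pow_mul_sum_Ico_one_div (h0 : 0 ≤ ρ) (h1 : ρ < 1) :
    Tendsto (fun N : ℕ => ρ ^ N * ∑ k ∈ Ico 1 N, (1 : ℝ) / k) atTop (𝓝 0) := by
  refine squeeze_zero (fun N => by positivity) (fun N => ?_)
    (tendsto_self_mul_const_pow_of_lt_one h0 h1)
  have hH : ∑ k ∈ Ico 1 N, (1 : ℝ) / k ≤ N :=
    calc ∑ k ∈ Ico 1 N, (1 : ℝ) / k ≤ ∑ k ∈ Ico 1 N, (1 : ℝ) :=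
          sum_le_sum fun k hk => div_le_one_of_le₀ (Nat.one_le_cast.2 (mem_Ico.1 hk).1) k.cast_nonneg
      _ ≤ N := by simp
  rw [mul_comm]
  exact mul_le_mul_of_nonneg_right hH (pow_nonneg h0 N)

theorem tendsto_sum_Ico_pow_div (h : |ρ| < 1) :
    Tendsto (fun N : ℕ => ∑ k ∈ Ico 1 N, ρ ^ k / k) atTop (𝓝 (-Real.log (1 - ρ))) := by
  refine ((Real.hasSum_pow_div_log_of_abs_lt_one h).tendsto_sum_nat.comp
    (tendsto_sub_atTop_nat 1)).congr fun N => ?_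
  simp [sum_Ico_eq_sum_range, add_comm]

theorem tendsto_sum_Ico_pow_sub_div (h0 : 0 ≤ ρ) (h1 : ρ < 1) :
    Tendsto (fun N : ℕ => ∑ k ∈ Ico 1 N, ρ ^ (N - k) / k) atTop (𝓝 0) := by
  have hs : Summable fun n : ℕ => (n : ℝ) * ρ ^ n := by
    simpa using summable_pow_mul_geometric_of_norm_lt_one 1 (by rwa [Real.norm_of_nonneg h0])
  set C := ∑' n : ℕ, (n : ℝ) * ρ ^ n
  refine squeeze_zero (fun N => sum_nonneg fun k _ => by positivity) (fun N => ?_)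
    (tendsto_const_div_atTop_nhds_zero_nat (2 * C))
  -- `2 k (N - k) ≥ N` for `1 ≤ k < N`.
  have hterm : ∀ k ∈ Ico 1 N, ρ ^ (N - k) / k ≤ 2 * (((N - k : ℕ) : ℝ) * ρ ^ (N - k)) / N := by
    intro k hk
    obtain ⟨hk1, hkN⟩ := mem_Ico.1 hk
    have hk : (1 : ℝ) ≤ k := Nat.one_le_cast.2 hk1
    have hk' : (k : ℝ) + 1 ≤ N := by exact_mod_cast hkN
    rw [Nat.cast_sub hkN.le, div_le_div_iff₀ (by linarith) (by linarith)]
    have hpow : 0 ≤ ρ ^ (N - k) := pow_nonneg h0 _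
    nlinarith [mul_nonneg hpow (mul_nonneg (sub_nonneg.2 hk) (sub_nonneg.2 hk'))]
  have hreflect : ∑ k ∈ Ico 1 N, ((N - k : ℕ) : ℝ) * ρ ^ (N - k) = ∑ k ∈ Ico 1 N, (k : ℝ) * ρ ^ k := by
    simpa using sum_Ico_reflect (fun m => (m : ℝ) * ρ ^ m) 1 (Nat.le_succ N)
  calc ∑ k ∈ Ico 1 N, ρ ^ (N - k) / k
      ≤ ∑ k ∈ Ico 1 N, 2 * (((N - k : ℕ) : ℝ) * ρ ^ (N - k)) / N := sum_le_sum hterm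
    _ = 2 * (∑ k ∈ Ico 1 N, (k : ℝ) * ρ ^ k) / N := by rw [← hreflect, ← sum_div, ← mul_sum]
    _ ≤ 2 * C / N := by
      gcongr
      exact hs.sum_le_tsum _ fun n _ => by positivity

theorem fixationSum_eq_one_add_pow_mul_sub (ρ : ℝ) (N : ℕ) :
    fixationSum ρ N = (1 + ρ ^ N) * ∑ k ∈ Ico 1 N, (1 : ℝ) / k
      - ∑ k ∈ Ico 1 N, ρ ^ k / k - ∑ k ∈ Ico 1 N, ρ ^ (N - k) / k := by
  rw [fixationSum, mul_sum, ← sum_sub_distrib, ← sum_sub_distrib]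
  refine sum_congr rfl fun k hk => ?_
  have hpow : ρ ^ k * ρ ^ (N - k) = ρ ^ N := by
    rw [← pow_add, Nat.add_sub_cancel' (mem_Ico.1 hk).2.le]
  linear_combination (k : ℝ)⁻¹ * hpow

theorem tendsto_fixationSum_div_sub_sum_Ico_one_div (h0 : 0 ≤ ρ) (h1 : ρ < 1) :
    Tendsto (fun N : ℕ => fixationSum ρ N / (1 - ρ ^ N) - ∑ k ∈ Ico 1 N, (1 : ℝ) / k) atTop
      (𝓝 (Real.log (1 - ρ))) := by
  have hnum : Tendsto (fun N : ℕ => 2 * (ρ ^ N * ∑ k ∈ Ico 1 N, (1 : ℝ) / k)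
      - ∑ k ∈ Ico 1 N, ρ ^ k / k - ∑ k ∈ Ico 1 N, ρ ^ (N - k) / k) atTop (𝓝 (Real.log (1 - ρ))) := by
    simpa using (((tendsto_pow_mul_sum_Ico_one_div h0 h1).const_mul 2).sub
      (tendsto_sum_Ico_pow_div (abs_lt.2 ⟨by linarith, h1⟩))).sub (tendsto_sum_Ico_pow_sub_div h0 h1)
  have hden : Tendsto (fun N : ℕ => 1 - ρ ^ N) atTop (𝓝 1) := by
    simpa using (tendsto_pow_atTop_nhds_zero_of_lt_one h0 h1).const_sub 1
  have hlim := hnum.div hden one_ne_zero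
  rw [div_one] at hlim
  refine hlim.congr' ?_
  filter_upwards [eventually_ge_atTop 1] with N hN
  have hρN : 1 - ρ ^ N ≠ 0 := (sub_pos.2 (pow_lt_one₀ h0 h1 (by omega))).ne'
  rw [Pi.div_apply, fixationSum_eq_one_add_pow_mul_sub]
  field_simp
  ring

end Asymptotics

/-- Asymptotics of the conditional fixation time of a single advantageous mutant on
`K_N`: `T(K_N,r) = (N−1)·((r+1)/(r−1))·(H_{N−1} + log(1−1/r)) + o(N)`. -/
theorem complete_graph_fixation_time_asymptotics
    (r : ℝ) (hr : 1 < r)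
    (T : ℕ → ℕ → ℝ)
    (hT : ∀ N : ℕ, 2 ≤ N → IsCompleteCondFixationTimeSol r N (T N)) :
    Tendsto (fun N : ℕ =>
        (1 / (N : ℝ)) * (T N 1
          - ((N : ℝ) - 1) * ((r + 1) / (r - 1))
              * ((∑ k ∈ Finset.Icc 1 (N - 1), (1 : ℝ) / k) + Real.log (1 - 1 / r))))
      atTop (𝓝 0) := by
  have hr0 : 0 < r := by linarith
  have hS := (tendsto_fixationSum_div_sub_sum_Ico_one_div (ρ := 1 / r) (by positivity)
    ((div_lt_one hr0).2 hr)).sub_const (Real.log (1 - 1 / r))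
  have hfrac : Tendsto (fun N : ℕ => ((N : ℝ) - 1) / N) atTop (𝓝 1) := by
    simpa [sub_eq_neg_add] using tendsto_add_mul_div_add_mul_atTop_nhds (-1 : ℝ) 0 1 one_ne_zero
  have hlim := (hfrac.mul_const ((r + 1) / (r - 1))).mul hS
  rw [sub_self, mul_zero] at hlim
  refine hlim.congr' ?_
  filter_upwards [eventually_ge_atTop 2] with N hN
  rw [Icc_sub_one_right_eq_Ico_of_not_isMin (by simp only [isMin_iff_eq_bot, Nat.bot_eq_zero]; omega), (hT N hN).apply_one_eq hr0 hr.ne' (by omega)]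
  have hN0 : (N : ℝ) ≠ 0 := by positivity
  field_simp
  ring
end

section
/- Fix r > 1. For each N ≥ 2 let A_N be the absorption-time solution and T_N the conditional fixation-time solution of the Moran birth–death chain on the complete graph K_N, and set fp₁ = (1 − 1/r)/(1 − r^{−N}) and E_N = (A_N(1) − fp₁·T_N(1))/(1 − fp₁), the conditional extinction time of a single mutant. Then E_N/N converges to log(r/(r−1)) as N → ∞; equivalently, ET(K_N,r) = (N−1)·log(r/(r−1)) + o(N). -/
open Filter Topology

/-!
Write `x = 1/r` and `w k = A k - fp k * T k`, which is `(1 - fp k)` times the conditional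
extinction time from `k`. Subtracting the two first-step equations and using `p⁻ = x p⁺` gives
the first-order recurrence `Δw k = x Δw (k-1) - (1 - fp k)/p⁺(k)` for the differences of `w`.
Solving it with `w 0 = w N = 0` yields `E_N = ∑_{l=1}^{N-1} c_N(l)` with an explicit `c_N(l)`.
For fixed `l`, `c_N(l)/N → x^l/l`, and `c_N(l)/N ≤ x^(l-1)/(1-x)^2` uniformly in `N`, so by
dominated convergence (Tannery's theorem) `E_N/N → ∑ x^l/l = -log(1-x) = log(r/(r-1))`.
-/

open Finset

section LinearRecurrence

variable {R : Type*} [CommRing R] {x : R} {g w : ℕ → R} {N : ℕ}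

theorem sub_eq_of_recurrence
    (h : ∀ k, 1 ≤ k → k < N → w (k + 1) - w k = x * (w k - w (k - 1)) - g k) {j : ℕ}
    (hj : j < N) :
    w (j + 1) - w j = x ^ j * (w 1 - w 0) - ∑ l ∈ Icc 1 j, x ^ (j - l) * g l := by
  induction j with
  | zero => simp
  | succ j ih =>
    have hshift :
        ∑ l ∈ Icc 1 j, x ^ (j + 1 - l) * g l = x * ∑ l ∈ Icc 1 j, x ^ (j - l) * g l := by
      rw [mul_sum]
      refine sum_congr rfl fun l hl => ?_
      rw [Nat.sub_add_comm (mem_Icc.mp hl).2, pow_succ]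
      ring
    rw [h (j + 1) (by omega) hj, Nat.add_sub_cancel, ih (by omega),
      sum_Icc_succ_top (by omega), hshift, Nat.sub_self]
    ring

theorem sub_eq_geom_sum_of_recurrence
    (h : ∀ k, 1 ≤ k → k < N → w (k + 1) - w k = x * (w k - w (k - 1)) - g k) :
    w N - w 0 = (w 1 - w 0) * ∑ i ∈ range N, x ^ i
      - ∑ l ∈ Ico 1 N, g l * ∑ i ∈ range (N - l), x ^ i := by
  have hswap : ∑ j ∈ range N, ∑ l ∈ Icc 1 j, x ^ (j - l) * g l
      = ∑ l ∈ Ico 1 N, g l * ∑ i ∈ range (N - l), x ^ i := by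
    rw [sum_comm' (t' := Ico 1 N) (s' := fun l => Ico l N)
      (fun j l => by simp only [mem_range, mem_Icc, mem_Ico]; omega)]
    refine sum_congr rfl fun l _ => ?_
    rw [sum_Ico_eq_sum_range, mul_sum]
    refine sum_congr rfl fun i _ => ?_
    rw [Nat.add_sub_cancel_left, mul_comm]
  rw [← sum_range_sub, sum_congr rfl fun j hj => sub_eq_of_recurrence h (mem_range.mp hj),
    sum_sub_distrib, hswap, mul_sum]
  simp_rw [mul_comm]

end LinearRecurrence

namespace CompleteGraphMoran

noncomputable def fixProb (r : ℝ) (N m : ℕ) : ℝ := (1 - (1 / r) ^ m) / (1 - (1 / r) ^ N)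

noncomputable def birthProb (r : ℝ) (N k : ℕ) : ℝ :=
  r * k / ((N : ℝ) + (r - 1) * k) * (((N : ℝ) - k) / ((N : ℝ) - 1))

noncomputable def deathProb (r : ℝ) (N k : ℕ) : ℝ :=
  ((N : ℝ) - k) / ((N : ℝ) + (r - 1) * k) * ((k : ℝ) / ((N : ℝ) - 1))

noncomputable def weightedExtinctionTime (r : ℝ) (N : ℕ) (A T : ℕ → ℝ) (k : ℕ) : ℝ :=
  A k - fixProb r N k * T k

noncomputable def extinctionTerm (r : ℝ) (N l : ℕ) : ℝ :=
  (1 / r) ^ l * (1 - (1 / r) ^ (N - l)) ^ 2 * (((N : ℝ) + (r - 1) * l) * ((N : ℝ) - 1))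
    / ((l : ℝ) * ((N : ℝ) - l) * ((1 - (1 / r) ^ N) * (1 - (1 / r) ^ (N - 1))))

variable {r : ℝ} {N : ℕ}

theorem one_div_lt_one_of_one_lt (hr : 1 < r) : 1 / r < 1 :=
  (div_lt_one (by positivity)).mpr hr

theorem one_div_pow_lt_one (hr : 1 < r) {n : ℕ} (hn : n ≠ 0) : (1 / r) ^ n < 1 :=
  pow_lt_one₀ (by positivity) (one_div_lt_one_of_one_lt hr) hn

theorem deathProb_eq_birthProb_div (hr : r ≠ 0) (k : ℕ) :
    deathProb r N k = birthProb r N k / r := by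
  unfold deathProb birthProb
  field_simp

theorem birthProb_pos (hr : 1 < r) {k : ℕ} (hk : 1 ≤ k) (hkN : k < N) :
    0 < birthProb r N k := by
  have hk' : (1 : ℝ) ≤ k := by exact_mod_cast hk
  have hkN' : (k : ℝ) + 1 ≤ N := by exact_mod_cast hkN
  unfold birthProb
  apply mul_pos <;> apply div_pos <;> nlinarith

theorem weightedExtinctionTime_recurrence (hr : 1 < r) {A T : ℕ → ℝ}
    (hA : IsCompleteAbsorptionSol r N A) (hT : IsCompleteCondFixationTimeSol r N T)
    {k : ℕ} (hk : 1 ≤ k) (hkN : k < N) :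
    weightedExtinctionTime r N A T (k + 1) - weightedExtinctionTime r N A T k
      = 1 / r * (weightedExtinctionTime r N A T k - weightedExtinctionTime r N A T (k - 1))
        - (1 - fixProb r N k) / birthProb r N k := by
  set w := weightedExtinctionTime r N A T
  set p := birthProb r N k
  set q := deathProb r N k
  have hA' : A k = 1 + q * A (k - 1) + p * A (k + 1) + (1 - q - p) * A k :=
    hA.2.2 k hk (by omega)
  have hT' : fixProb r N k * T k = fixProb r N k + q * fixProb r N (k - 1) * T (k - 1)
      + p * fixProb r N (k + 1) * T (k + 1) + (1 - q - p) * fixProb r N k * T k :=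
    hT.2.2 k hk (by omega)
  have hp : p ≠ 0 := (birthProb_pos hr hk hkN).ne'
  have hq : q = p / r := deathProb_eq_birthProb_div (by positivity) k
  have hstep : p * (w (k + 1) - w k) = q * (w k - w (k - 1)) - (1 - fixProb r N k) := by
    simp only [w, weightedExtinctionTime]
    linear_combination hT' - hA'
  rw [← mul_right_inj' hp, hstep, hq]
  field_simp

theorem one_sub_fixProb (hN : (1 / r) ^ N ≠ 1) {m : ℕ} (hm : m ≤ N) :
    1 - fixProb r N m = (1 / r) ^ m * (1 - (1 / r) ^ (N - m)) / (1 - (1 / r) ^ N) := by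
  obtain ⟨k, rfl⟩ := Nat.exists_eq_add_of_le hm
  rw [fixProb, Nat.add_sub_cancel_left, pow_add] at *
  have := sub_ne_zero.mpr hN.symm
  field_simp
  ring

theorem extinctionTerm_mul_eq (hr : 1 < r) {l : ℕ} (hl : 1 ≤ l) (hlN : l < N) :
    (1 - fixProb r N l) / birthProb r N l * ∑ i ∈ range (N - l), (1 / r) ^ i
      = extinctionTerm r N l * ((1 - fixProb r N 1) * ∑ i ∈ range N, (1 / r) ^ i) := by
  have hx := one_div_lt_one_of_one_lt hr
  have hxN := one_div_pow_lt_one hr (n := N) (by omega)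
  have hxN1 := one_div_pow_lt_one hr (n := N - 1) (by omega)
  have hl' : (1 : ℝ) ≤ l := by exact_mod_cast hl
  have hlN' : (l : ℝ) + 1 ≤ N := by exact_mod_cast hlN
  have : (N : ℝ) + (r - 1) * l ≠ 0 := by nlinarith
  have : (N : ℝ) - l ≠ 0 := by linarith
  have : (N : ℝ) - 1 ≠ 0 := by linarith
  have : (l : ℝ) ≠ 0 := by linarith
  have : 1 - (1 / r) ^ N ≠ 0 := by linarith
  have : 1 - (1 / r) ^ (N - 1) ≠ 0 := by linarith
  have : 1 / r - 1 ≠ 0 := by linarith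
  have : r ≠ 0 := by positivity
  rw [geom_sum_eq hx.ne, geom_sum_eq hx.ne, one_sub_fixProb hxN.ne hlN.le,
    one_sub_fixProb hxN.ne (by omega)]
  unfold birthProb extinctionTerm
  field_simp
  ring

theorem extinctionTime_eq_sum (hr : 1 < r) (hN : 2 ≤ N) {A T : ℕ → ℝ}
    (hA : IsCompleteAbsorptionSol r N A) (hT : IsCompleteCondFixationTimeSol r N T) :
    (A 1 - ((1 - 1 / r) / (1 - (1 / r) ^ N)) * T 1) / (1 - (1 - 1 / r) / (1 - (1 / r) ^ N))
      = ∑ l ∈ Ico 1 N, extinctionTerm r N l := by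
  have hw0 : weightedExtinctionTime r N A T 0 = 0 := by
    simp [weightedExtinctionTime, hA.1, hT.1]
  have hwN : weightedExtinctionTime r N A T N = 0 := by
    simp [weightedExtinctionTime, hA.2.1, hT.2.1]
  have hG : ∑ i ∈ range N, (1 / r) ^ i ≠ 0 := (geom_sum_pos (by positivity) (by omega)).ne'
  have hfp : 1 - fixProb r N 1 ≠ 0 := by
    have := one_div_pow_lt_one hr (n := N) (by omega)
    have := one_div_pow_lt_one hr (n := N - 1) (by omega)
    rw [one_sub_fixProb (by linarith) (by omega)]
    exact div_ne_zero (mul_ne_zero (by positivity) (by linarith)) (by linarith)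
  have hsum := sub_eq_geom_sum_of_recurrence fun k hk hkN =>
    weightedExtinctionTime_recurrence hr hA hT hk hkN
  rw [hw0, hwN, sum_congr rfl fun l hl => extinctionTerm_mul_eq hr (mem_Ico.mp hl).1
    (mem_Ico.mp hl).2, ← sum_mul] at hsum
  rw [show (1 - 1 / r) / (1 - (1 / r) ^ N) = fixProb r N 1 by rw [fixProb, pow_one],
    div_eq_iff hfp]
  refine mul_right_cancel₀ hG ?_
  unfold weightedExtinctionTime at hsum
  linear_combination -hsum

theorem extinctionTerm_eq_zero_of_le {l : ℕ} (h : N ≤ l) : extinctionTerm r N l = 0 := by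
  simp [extinctionTerm, Nat.sub_eq_zero_of_le h]

theorem abs_extinctionTerm_div_le (hr : 1 < r) (hN : 2 ≤ N) (l : ℕ) :
    |extinctionTerm r N (l + 1) / N| ≤ (1 / r) ^ l / (1 - 1 / r) ^ 2 := by
  rcases le_or_gt N (l + 1) with hlN | hlN
  · rw [extinctionTerm_eq_zero_of_le hlN, zero_div, abs_zero]
    positivity
  have hx1 := one_div_lt_one_of_one_lt hr
  rw [extinctionTerm]
  set m := l + 1
  set x := 1 / r with hx
  have hx0 : 0 < x := by positivity
  have hxm : x ^ m * r = x ^ l := by rw [pow_succ, hx]; field_simp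
  have hv : 0 < x ^ (N - m) := by positivity
  have hv1 : x ^ (N - m) ≤ 1 := pow_le_one₀ hx0.le hx1.le
  have hxN : 1 - x ≤ 1 - x ^ N := by gcongr; exact pow_le_of_le_one hx0.le hx1.le (by omega)
  have hxN1 : 1 - x ≤ 1 - x ^ (N - 1) := by
    gcongr; exact pow_le_of_le_one hx0.le hx1.le (by omega)
  have hm1 : (1 : ℝ) ≤ m := by exact_mod_cast Nat.succ_pos l
  have hmN : (m : ℝ) + 1 ≤ N := by exact_mod_cast hlN
  have hD : (N : ℝ) + (r - 1) * m ≤ r * N := by nlinarith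
  have hD0 : 0 ≤ (N : ℝ) + (r - 1) * m := by nlinarith
  have hden : (N : ℝ) - 1 ≤ m * (N - m) := by nlinarith
  have hden0 : 0 < (m : ℝ) * (N - m) * ((1 - x ^ N) * (1 - x ^ (N - 1))) :=
    mul_pos (mul_pos (by linarith) (by linarith)) (mul_pos (by linarith) (by linarith))
  have hnum0 : 0 ≤ x ^ m * (1 - x ^ (N - m)) ^ 2 * ((N + (r - 1) * m) * (N - 1)) := by
    have : (0 : ℝ) ≤ N - 1 := by linarith
    exact mul_nonneg (by positivity) (mul_nonneg hD0 this)
  rw [abs_of_nonneg (div_nonneg (div_nonneg hnum0 hden0.le) (Nat.cast_nonneg N)), div_div,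
    div_le_div_iff₀ (by positivity) (by positivity)]
  calc x ^ m * (1 - x ^ (N - m)) ^ 2 * ((N + (r - 1) * m) * (N - 1)) * (1 - x) ^ 2
      ≤ x ^ m * 1 * ((r * N) * (N - 1)) * (1 - x) ^ 2 := by
        gcongr
        · nlinarith
        · nlinarith
        · linarith
    _ = x ^ l * (N * ((N - 1) * ((1 - x) * (1 - x)))) := by rw [← hxm]; ring
    _ ≤ x ^ l * (N * (m * (N - m) * ((1 - x ^ N) * (1 - x ^ (N - 1))))) := by
        gcongr
        · nlinarith
        · linarith
    _ = x ^ l * (m * (N - m) * ((1 - x ^ N) * (1 - x ^ (N - 1))) * N) := by ring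

theorem tendsto_extinctionTerm_div (hr : 1 < r) {m : ℕ} (hm : m ≠ 0) :
    Tendsto (fun N : ℕ => extinctionTerm r N m / N) atTop (𝓝 ((1 / r) ^ m / m)) := by
  have hx1 := one_div_lt_one_of_one_lt hr
  set x := 1 / r with hx
  have hpow (k : ℕ) : Tendsto (fun N : ℕ => 1 - x ^ (N - k)) atTop (𝓝 1) := by
    simpa using tendsto_const_nhds.sub
      ((tendsto_pow_atTop_nhds_zero_of_lt_one (by positivity) hx1).comp
        (tendsto_sub_atTop_nat k))
  have hdiv (c : ℝ) : Tendsto (fun N : ℕ => 1 - c / N) atTop (𝓝 1) := by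
    simpa using tendsto_const_nhds.sub (tendsto_const_div_atTop_nhds_zero_nat c)
  have hlim := ((((hpow m).pow 2).mul ((hdiv ((1 - r) * m)).mul (hdiv 1))).div
    ((hdiv m).mul ((hpow 0).mul (hpow 1))) (by norm_num)).const_mul (x ^ m / m)
  simp only [one_pow, mul_one, div_one, Pi.div_apply] at hlim
  refine hlim.congr' ?_
  filter_upwards [eventually_gt_atTop m] with N hmN
  have hm' : (m : ℝ) ≠ 0 := by exact_mod_cast hm
  have hmN' : (m : ℝ) < N := by exact_mod_cast hmN
  have hxN : 1 - x ^ N ≠ 0 := (sub_pos.mpr (one_div_pow_lt_one hr (by omega))).ne'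
  have hxN1 : 1 - x ^ (N - 1) ≠ 0 := (sub_pos.mpr (one_div_pow_lt_one hr (by omega))).ne'
  have : (N : ℝ) - m ≠ 0 := by linarith
  have : (N : ℝ) ≠ 0 := by linarith
  rw [extinctionTerm, Nat.sub_zero, ← hx]
  field_simp
  ring

theorem hasSum_one_div_pow_div (hr : 1 < r) :
    HasSum (fun l : ℕ => (1 / r) ^ (l + 1) / (l + 1)) (Real.log (r / (r - 1))) := by
  have hx : |1 / r| < 1 := by
    rw [abs_of_pos (by positivity)]
    exact one_div_lt_one_of_one_lt hr
  convert Real.hasSum_pow_div_log_of_abs_lt_one hx using 1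
  have : r ≠ 0 := by positivity
  rw [← Real.log_inv, one_sub_div this, inv_div]

theorem tendsto_sum_extinctionTerm_div (hr : 1 < r) :
    Tendsto (fun N : ℕ => (∑ l ∈ Ico 1 N, extinctionTerm r N l) / N) atTop
      (𝓝 (Real.log (r / (r - 1)))) := by
  have hlim := tendsto_tsum_of_dominated_convergence
    ((summable_geometric_of_lt_one (by positivity) (one_div_lt_one_of_one_lt hr)).div_const
      ((1 - 1 / r) ^ 2))
    (fun l => tendsto_extinctionTerm_div hr l.succ_ne_zero)
    (eventually_atTop.mpr ⟨2, fun N hN l => abs_extinctionTerm_div_le hr hN l⟩)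
  push_cast at hlim
  rw [(hasSum_one_div_pow_div hr).tsum_eq] at hlim
  refine hlim.congr fun N => ?_
  rw [sum_Ico_eq_sum_range, sum_div, tsum_eq_sum (s := range (N - 1))]
  · exact sum_congr rfl fun l _ => by rw [add_comm]
  · intro l hl
    rw [extinctionTerm_eq_zero_of_le (by simp at hl; omega), zero_div]

end CompleteGraphMoran

/-- Asymptotics of the conditional extinction time of a single advantageous mutant on
`K_N`: with `E_N = (A_N(1) − fp₁·T_N(1))/(1 − fp₁)`, we have `E_N/N → log(r/(r−1))`. -/
theorem complete_graph_extinction_time_asymptotics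
    (r : ℝ) (hr : 1 < r)
    (A T : ℕ → ℕ → ℝ)
    (hA : ∀ N : ℕ, 2 ≤ N → IsCompleteAbsorptionSol r N (A N))
    (hT : ∀ N : ℕ, 2 ≤ N → IsCompleteCondFixationTimeSol r N (T N)) :
    Tendsto (fun N : ℕ =>
        ((A N 1 - ((1 - 1 / r) / (1 - (1 / r) ^ N)) * T N 1)
            / (1 - (1 - 1 / r) / (1 - (1 / r) ^ N))) / (N : ℝ))
      atTop (𝓝 (Real.log (r / (r - 1)))) := by
  refine (CompleteGraphMoran.tendsto_sum_extinctionTerm_div hr).congr' ?_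
  filter_upwards [eventually_ge_atTop 2] with N hN
  rw [CompleteGraphMoran.extinctionTime_eq_sum hr hN (hA N hN) (hT N hN)]
end

section
/- Let r > 1, let N ≥ 2 be an integer, and let x, Δ : ℕ → ℝ be sequences such that Δ(k+1) = Δ(k)/r − x(k) for every 1 ≤ k ≤ N−1 and Σ_{k=1}^{N} Δ(k) = 0. Then (1 − r^{−N})·Δ(1) = Σ_{k=1}^{N−1} x(k)·(1 − r^{−(N−k)}). -/
/-!
Write `q = 1/r`, so that `x k = q Δ k - Δ (k+1)`. Against the weights `1 - q^(N-k)` this residual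
splits as `(q - 1) Δ k` plus a telescoping difference of `(q^(N+1-k) - 1) Δ k`, so the weighted sum
collapses to `(1 - q^N) Δ 1 - (1 - q) Σ Δ k`, and the last sum vanishes by hypothesis.
-/

open Finset

theorem sum_Icc_mul_sub_succ_mul_one_sub_pow {R : Type*} [CommRing R] (q : R) (Δ : ℕ → R)
    (N : ℕ) :
    ∑ k ∈ Icc 1 N, (q * Δ k - Δ (k + 1)) * (1 - q ^ (N - k)) =
      (1 - q ^ N) * Δ 1 - (1 - q) * ∑ k ∈ Icc 1 N, Δ k := by
  set f : ℕ → R := fun k => (q ^ (N + 1 - k) - 1) * Δ k with hf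
  have hterm : ∀ k ∈ Icc 1 N,
      (q * Δ k - Δ (k + 1)) * (1 - q ^ (N - k)) = (q - 1) * Δ k + (f (k + 1) - f k) := by
    intro k hk
    obtain ⟨j, rfl⟩ := Nat.exists_eq_add_of_le (mem_Icc.1 hk).2
    simp only [hf, show k + j + 1 - (k + 1) = j by omega, show k + j + 1 - k = j + 1 by omega,
      show k + j - k = j by omega]
    ring
  rcases Nat.eq_zero_or_pos N with rfl | hN
  · simp
  rw [sum_congr rfl hterm, sum_add_distrib, ← mul_sum, sum_Icc_sub hN]
  simp only [hf, Nat.sub_self, pow_zero, sub_self, zero_mul, Nat.add_sub_cancel]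
  ring

theorem difference_method_solve_delta_one_general
    (r : ℝ) (N : ℕ) (x Δ : ℕ → ℝ)
    (hrec : ∀ k : ℕ, 1 ≤ k → k ≤ N - 1 → Δ (k + 1) = Δ k / r - x k)
    (hsum : ∑ k ∈ Finset.Icc 1 N, Δ k = 0) :
    (1 - (1 / r) ^ N) * Δ 1 = ∑ k ∈ Finset.Icc 1 (N - 1), x k * (1 - (1 / r) ^ (N - k)) := by
  have hx : ∀ k ∈ Icc 1 (N - 1), x k = 1 / r * Δ k - Δ (k + 1) := by
    intro k hk
    rw [mem_Icc] at hk
    rw [hrec k hk.1 hk.2]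
    ring
  have htop : ∀ k ∈ Icc 1 N, k ∉ Icc 1 (N - 1) →
      (1 / r * Δ k - Δ (k + 1)) * (1 - (1 / r) ^ (N - k)) = 0 := by
    intro k hk hk'
    simp only [mem_Icc] at hk hk'
    rw [show N - k = 0 by omega, pow_zero, sub_self, mul_zero]
  calc (1 - (1 / r) ^ N) * Δ 1
      = (1 - (1 / r) ^ N) * Δ 1 - (1 - 1 / r) * ∑ k ∈ Icc 1 N, Δ k := by
        rw [hsum, mul_zero, sub_zero]
    _ = ∑ k ∈ Icc 1 N, (1 / r * Δ k - Δ (k + 1)) * (1 - (1 / r) ^ (N - k)) :=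
        (sum_Icc_mul_sub_succ_mul_one_sub_pow _ _ _).symm
    _ = ∑ k ∈ Icc 1 (N - 1), (1 / r * Δ k - Δ (k + 1)) * (1 - (1 / r) ^ (N - k)) :=
        (sum_subset (Icc_subset_Icc_right (Nat.sub_le N 1)) htop).symm
    _ = ∑ k ∈ Icc 1 (N - 1), x k * (1 - (1 / r) ^ (N - k)) :=
        sum_congr rfl fun k hk => by rw [hx k hk]

/-- The key algebraic lemma of the difference-equation method: if
`Δ(k+1) = Δ(k)/r − x(k)` for `1 ≤ k ≤ N−1` and `Σ_{k=1}^{N} Δ(k) = 0`, then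
`(1 − r^{−N})·Δ(1) = Σ_{k=1}^{N−1} x(k)·(1 − r^{−(N−k)})`. -/
theorem difference_method_solve_delta_one
    (r : ℝ) (hr : 1 < r) (N : ℕ) (hN : 2 ≤ N) (x Δ : ℕ → ℝ)
    (hrec : ∀ k : ℕ, 1 ≤ k → k ≤ N - 1 → Δ (k + 1) = Δ k / r - x k)
    (hsum : ∑ k ∈ Finset.Icc 1 N, Δ k = 0) :
    (1 - (1 / r) ^ N) * Δ 1 = ∑ k ∈ Finset.Icc 1 (N - 1), x k * (1 - (1 / r) ^ (N - k)) :=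
  difference_method_solve_delta_one_general r N x Δ hrec hsum
end

section
/- Fix r > 1. Then the sequence E(N) = Σ_{k=1}^{N−1} (k−1)/((N−k)·r^k) converges to 0 as N → ∞. -/
open Filter Topology

/-!
For `1 ≤ k ≤ N - 1` we have `N - 1 ≤ k (N - k)`, since the difference is `(k - 1)(N - k - 1)`.
Hence every summand is at most `k² r⁻ᵏ / (N - 1)`, so `0 ≤ E(N) ≤ (∑ₖ k² r⁻ᵏ) / (N - 1)`, and
the series converges because `r⁻¹ < 1`.
-/

namespace MoranErrorTerm

noncomputable def errorTerm (r : ℝ) (N : ℕ) : ℝ :=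
  ∑ k ∈ Finset.Icc 1 (N - 1), ((k : ℝ) - 1) / (((N : ℝ) - k) * r ^ k)

lemma cast_bounds_of_mem_Icc {k N : ℕ} (hk : k ∈ Finset.Icc 1 (N - 1)) :
    1 ≤ (k : ℝ) ∧ (k : ℝ) + 1 ≤ N := by
  rw [Finset.mem_Icc] at hk
  exact ⟨by exact_mod_cast hk.1, by exact_mod_cast (by omega : k + 1 ≤ N)⟩

lemma sub_one_le_mul_sub {k N : ℝ} (hk : 1 ≤ k) (hkN : k + 1 ≤ N) : N - 1 ≤ k * (N - k) := by
  nlinarith [mul_nonneg (sub_nonneg.2 hk) (by linarith : 0 ≤ N - k - 1)]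

lemma summand_nonneg {r k N : ℝ} (hr : 0 < r) (hk : 1 ≤ k) (hkN : k + 1 ≤ N) (n : ℕ) :
    0 ≤ (k - 1) / ((N - k) * r ^ n) :=
  div_nonneg (by linarith) (mul_nonneg (by linarith) (pow_pos hr n).le)

lemma summand_le {r k N : ℝ} (hr : 0 < r) (hk : 1 ≤ k) (hkN : k + 1 ≤ N) (n : ℕ) :
    (k - 1) / ((N - k) * r ^ n) ≤ k ^ 2 * r⁻¹ ^ n / (N - 1) := by
  have hrn := pow_pos hr n
  rw [inv_pow, div_le_div_iff₀ (mul_pos (by linarith) hrn) (by linarith)]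
  calc (k - 1) * (N - 1) ≤ k * (k * (N - k)) := by
        nlinarith [sub_one_le_mul_sub hk hkN,
          mul_nonneg (by linarith : (0 : ℝ) ≤ k) (by linarith : 0 ≤ N - k)]
    _ = k ^ 2 * (r ^ n)⁻¹ * ((N - k) * r ^ n) := by field_simp

lemma errorTerm_nonneg {r : ℝ} (hr : 0 < r) (N : ℕ) : 0 ≤ errorTerm r N :=
  Finset.sum_nonneg fun k hk =>
    summand_nonneg hr (cast_bounds_of_mem_Icc hk).1 (cast_bounds_of_mem_Icc hk).2 k

lemma errorTerm_le {r : ℝ} (hr : 1 < r) {N : ℕ} (hN : 2 ≤ N) :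
    errorTerm r N ≤ (∑' k : ℕ, (k : ℝ) ^ 2 * r⁻¹ ^ k) / ((N : ℝ) - 1) := by
  have hsum : Summable fun k : ℕ => (k : ℝ) ^ 2 * r⁻¹ ^ k :=
    summable_pow_mul_geometric_of_norm_lt_one 2 (by
      rw [norm_inv, Real.norm_of_nonneg (by linarith)]; exact inv_lt_one_of_one_lt₀ hr)
  have hN1 : (1 : ℝ) < N := by exact_mod_cast hN
  calc errorTerm r N ≤ ∑ k ∈ Finset.Icc 1 (N - 1), (k : ℝ) ^ 2 * r⁻¹ ^ k / ((N : ℝ) - 1) :=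
        Finset.sum_le_sum fun k hk =>
          summand_le (by linarith) (cast_bounds_of_mem_Icc hk).1 (cast_bounds_of_mem_Icc hk).2 k
    _ = (∑ k ∈ Finset.Icc 1 (N - 1), (k : ℝ) ^ 2 * r⁻¹ ^ k) / ((N : ℝ) - 1) :=
        (Finset.sum_div ..).symm
    _ ≤ _ := div_le_div_of_nonneg_right (hsum.sum_le_tsum _ fun k _ => by positivity) (by linarith)

end MoranErrorTerm

open MoranErrorTerm

/-- The error term `E(N) = Σ_{k=1}^{N−1} (k−1)/((N−k)·r^k)` tends to `0` for `r > 1`. -/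
theorem error_term_tendsto_zero (r : ℝ) (hr : 1 < r) :
    Tendsto (fun N : ℕ => ∑ k ∈ Finset.Icc 1 (N - 1), ((k : ℝ) - 1) / (((N : ℝ) - k) * r ^ k))
      atTop (𝓝 0) := by
  change Tendsto (errorTerm r) atTop (𝓝 0)
  have hbound : Tendsto (fun N : ℕ => (∑' k : ℕ, (k : ℝ) ^ 2 * r⁻¹ ^ k) / ((N : ℝ) - 1))
      atTop (𝓝 0) :=
    tendsto_const_nhds.div_atTop
      (tendsto_atTop_add_const_right _ _ tendsto_natCast_atTop_atTop)
  exact tendsto_of_tendsto_of_tendsto_of_le_of_le' tendsto_const_nhds hbound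
    (Eventually.of_forall (errorTerm_nonneg (by linarith)))
    ((eventually_ge_atTop 2).mono fun N hN => errorTerm_le hr hN)
end
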